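/- arXiv:math/0505291 — 9 statements merged into one kernel-verified Lean document; each statement's English description precedes it below -/
import Mathlib

section
/- Let X be a real Banach space, let f : X → ℝ be a quasi-linear map, and suppose there exists a midconvex function a : B_X → ℝ defined on the closed unit ball B_X of X such that sup_{x ∈ B_X} |f(x) − a(x)| < ∞. Then there exists a linear (not necessarily continuous) functional ℓ : X → ℝ and a constant M ≥ 0 such that |f(x) − ℓ(x)| ≤ M‖x‖ for all x ∈ X. -/
open Pointwise

namespace QLHelp

variable {X : Type*} [NormedAddCommGroup X] [NormedSpace ℝ X]

lemma sum_map_add (f g : X → ℝ) (l : List X) :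
    (l.map (fun x => f x + g x)).sum = (l.map f).sum + (l.map g).sum := by
  induction l with
  | nil => simp
  | cons x l ih => simp [ih]; ring

lemma dyadic (a : X → ℝ)
    (hmid : ∀ x y : X, ‖x‖ ≤ 1 → ‖y‖ ≤ 1 →
      a ((2 : ℝ)⁻¹ • (x + y)) ≤ (a x + a y) / 2) :
    ∀ n : ℕ, ∀ l : List X, l.length = 2 ^ n → (∀ x ∈ l, ‖x‖ ≤ 1) →
      ‖((2:ℝ)^n)⁻¹ • l.sum‖ ≤ 1 ∧
      a (((2:ℝ)^n)⁻¹ • l.sum) ≤ ((2:ℝ)^n)⁻¹ * (l.map a).sum := by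
  intro n
  induction n with
  | zero =>
    intro l hl hb
    obtain ⟨x, rfl⟩ := List.length_eq_one_iff.mp (by simpa using hl)
    simp only [pow_zero, inv_one, one_smul, List.sum_cons, List.sum_nil, add_zero,
      List.map_cons, List.map_nil, one_mul]
    exact ⟨hb x (by simp), le_refl _⟩
  | succ n ih =>
    intro l hl hb
    set u := l.take (2^n) with hu
    set v := l.drop (2^n) with hv
    have hul : u.length = 2^n := by
      rw [hu, List.length_take, hl, pow_succ]
      omega
    have hvl : v.length = 2^n := by
      rw [hv, List.length_drop, hl, pow_succ]
      omega
    have hub : ∀ x ∈ u, ‖x‖ ≤ 1 := fun x hx => hb x ((List.take_sublist _ _).subset hx)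
    have hvb : ∀ x ∈ v, ‖x‖ ≤ 1 := fun x hx => hb x ((List.drop_sublist _ _).subset hx)
    obtain ⟨hnu, hau⟩ := ih u hul hub
    obtain ⟨hnv, hav⟩ := ih v hvl hvb
    have hsum : l.sum = u.sum + v.sum := by
      conv_lhs => rw [← List.take_append_drop (2^n) l]
      rw [List.sum_append]
    have hmap : (l.map a).sum = (u.map a).sum + (v.map a).sum := by
      conv_lhs => rw [← List.take_append_drop (2^n) l]
      rw [List.map_append, List.sum_append]
    have h2n : ((2:ℝ)^n) ≠ 0 := by positivity
    have key : ((2:ℝ)^(n+1))⁻¹ • l.sum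
        = (2:ℝ)⁻¹ • (((2:ℝ)^n)⁻¹ • u.sum + ((2:ℝ)^n)⁻¹ • v.sum) := by
      rw [hsum, smul_add, smul_add, smul_smul, smul_smul]
      have he : ((2:ℝ)^(n+1))⁻¹ = 2⁻¹ * ((2:ℝ)^n)⁻¹ := by
        rw [pow_succ, mul_inv]; ring
      rw [he]
    constructor
    · rw [key, norm_smul]
      have hna := norm_add_le (((2:ℝ)^n)⁻¹ • u.sum) (((2:ℝ)^n)⁻¹ • v.sum)
      have h2 : ‖(2:ℝ)⁻¹‖ = 2⁻¹ := by
        rw [Real.norm_eq_abs, abs_of_pos]; norm_num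
      rw [h2]
      linarith
    · rw [key, hmap]
      have h1 := hmid _ _ hnu hnv
      have he : ((2:ℝ)^(n+1))⁻¹ * ((u.map a).sum + (v.map a).sum)
          = (((2:ℝ)^n)⁻¹ * (u.map a).sum + ((2:ℝ)^n)⁻¹ * (v.map a).sum) / 2 := by
        rw [pow_succ]
        field_simp
        try ring
      rw [he]
      linarith

lemma pow_bound (f a : X → ℝ) (C : ℝ)
    (hhom : ∀ (t : ℝ) (x : X), f (t • x) = t * f x)
    (hmid : ∀ x y : X, ‖x‖ ≤ 1 → ‖y‖ ≤ 1 →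
      a ((2 : ℝ)⁻¹ • (x + y)) ≤ (a x + a y) / 2)
    (hC : ∀ x : X, ‖x‖ ≤ 1 → |f x - a x| ≤ C)
    (n : ℕ) (l : List X) (hl : l.length = 2 ^ n) (hb : ∀ x ∈ l, ‖x‖ ≤ 1) :
    f l.sum ≤ (l.map f).sum + 2 * C * 2 ^ n := by
  obtain ⟨hn1, ha1⟩ := dyadic a hmid n l hl hb
  have h2n : ((2:ℝ)^n) ≠ 0 := by positivity
  have hPpos : (0:ℝ) < 2^n := by positivity
  have e1 : f l.sum = (2:ℝ)^n * f (((2:ℝ)^n)⁻¹ • l.sum) := by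
    rw [← hhom ((2:ℝ)^n) _, smul_inv_smul₀ h2n]
  have e2 : f (((2:ℝ)^n)⁻¹ • l.sum) ≤ a (((2:ℝ)^n)⁻¹ • l.sum) + C := by
    have h := abs_le.mp (hC _ hn1)
    linarith [h.2]
  have e3 : (l.map a).sum ≤ (l.map f).sum + (2:ℝ)^n * C := by
    have h4 : (l.map a).sum ≤ (l.map (fun x => f x + C)).sum := by
      apply List.sum_le_sum
      intro x hx
      have h := abs_le.mp (hC x (hb x hx))
      linarith [h.1]
    have h5 : (l.map (fun x => f x + C)).sum = (l.map f).sum + (l.length : ℝ) * C := by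
      rw [sum_map_add f (fun _ => C) l]
      congr 1
      rw [List.map_const', List.sum_replicate, nsmul_eq_mul]
    rw [h5, hl] at h4
    have : ((2^n : ℕ) : ℝ) = (2:ℝ)^n := by push_cast; ring
    rw [this] at h4
    exact h4
  have ha1' : (2:ℝ)^n * a (((2:ℝ)^n)⁻¹ • l.sum) ≤ (l.map a).sum := by
    have h := mul_le_mul_of_nonneg_left ha1 hPpos.le
    rwa [← mul_assoc, mul_inv_cancel₀ h2n, one_mul] at h
  rw [e1]
  nlinarith [mul_le_mul_of_nonneg_left e2 hPpos.le]

lemma exists_pow (m : ℕ) (hm : 1 ≤ m) : ∃ n : ℕ, m ≤ 2^n ∧ 2^n < 2*m := by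
  induction m with
  | zero => omega
  | succ m ih =>
    by_cases hm1 : 1 ≤ m
    · obtain ⟨n, h1, h2⟩ := ih hm1
      by_cases hc : m + 1 ≤ 2^n
      · exact ⟨n, hc, by omega⟩
      · have hne : (2:ℕ)^n = m := by omega
        refine ⟨n+1, ?_, ?_⟩ <;> rw [pow_succ, hne] <;> omega
    · have : m = 0 := by omega
      subst this
      exact ⟨0, by norm_num, by norm_num⟩

lemma pad (f a : X → ℝ) (C : ℝ)
    (hhom : ∀ (t : ℝ) (x : X), f (t • x) = t * f x)
    (hmid : ∀ x y : X, ‖x‖ ≤ 1 → ‖y‖ ≤ 1 →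
      a ((2 : ℝ)⁻¹ • (x + y)) ≤ (a x + a y) / 2)
    (hC : ∀ x : X, ‖x‖ ≤ 1 → |f x - a x| ≤ C)
    (l : List X) (hb : ∀ x ∈ l, ‖x‖ ≤ 1) :
    f l.sum ≤ (l.map f).sum + 4 * C * l.length := by
  have hC0 : 0 ≤ C := le_trans (abs_nonneg _) (hC 0 (by simp))
  have hf0 : f 0 = 0 := by simpa using hhom 0 0
  rcases Nat.eq_zero_or_pos l.length with h|h
  · rw [List.length_eq_zero_iff.mp h]
    simp [hf0]
  · obtain ⟨n, h1, h2⟩ := exists_pow l.length h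
    set l' := l ++ List.replicate (2^n - l.length) 0 with hl'
    have hlen : l'.length = 2^n := by
      rw [hl', List.length_append, List.length_replicate]
      omega
    have hb' : ∀ x ∈ l', ‖x‖ ≤ 1 := by
      intro x hx
      rcases List.mem_append.mp hx with h|h
      · exact hb x h
      · rw [List.eq_of_mem_replicate h]; simp
    have hsum : l'.sum = l.sum := by
      rw [hl', List.sum_append, List.sum_replicate, smul_zero, add_zero]
    have hmapf : (l'.map f).sum = (l.map f).sum := by
      rw [hl', List.map_append, List.sum_append, List.map_replicate, hf0,
        List.sum_replicate, smul_zero, add_zero]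
    have hkey := pow_bound f a C hhom hmid hC n l' hlen hb'
    rw [hsum, hmapf] at hkey
    have hcast : ((2:ℝ)^n) < 2 * (l.length : ℝ) := by exact_mod_cast h2
    nlinarith [hkey, mul_le_mul_of_nonneg_left hcast.le (by linarith : (0:ℝ) ≤ 2*C)]

lemma replicate_block (f : X → ℝ)
    (hhom : ∀ (t : ℝ) (x : X), f (t • x) = t * f x)
    (x : X) (hx : 1 ≤ ‖x‖) :
    ∃ l : List X, l.sum = x ∧ (l.map f).sum = f x ∧ (∀ y ∈ l, ‖y‖ ≤ 1) ∧
      (l.length : ℝ) ≤ 2 * ‖x‖ := by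
  set n := ⌈‖x‖⌉₊ with hn
  have hxpos : (0:ℝ) < ‖x‖ := by linarith
  have hnx : ‖x‖ ≤ (n:ℝ) := Nat.le_ceil _
  have hnpos : (0:ℝ) < (n:ℝ) := by linarith
  have hnne : (n:ℝ) ≠ 0 := hnpos.ne'
  have hn2 : (n:ℝ) ≤ 2 * ‖x‖ := by
    have := Nat.ceil_lt_add_one hxpos.le
    rw [← hn] at this
    linarith
  refine ⟨List.replicate n ((n:ℝ)⁻¹ • x), ?_, ?_, ?_, ?_⟩
  · rw [List.sum_replicate, ← Nat.cast_smul_eq_nsmul ℝ, smul_inv_smul₀ hnne]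
  · rw [List.map_replicate, List.sum_replicate, nsmul_eq_mul, hhom]
    field_simp
  · intro y hy
    rw [List.eq_of_mem_replicate hy, norm_smul, norm_inv, Real.norm_natCast]
    rw [inv_mul_le_iff₀ hnpos, mul_one]
    exact hnx
  · rw [List.length_replicate]
    exact hn2

lemma flatten (f : X → ℝ)
    (hhom : ∀ (t : ℝ) (x : X), f (t • x) = t * f x) :
    ∀ l : List X, (∀ x ∈ l, 1 ≤ ‖x‖) → ∃ l' : List X, l'.sum = l.sum ∧
      (l'.map f).sum = (l.map f).sum ∧ (∀ y ∈ l', ‖y‖ ≤ 1) ∧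
      (l'.length : ℝ) ≤ 2 * (l.map (‖·‖)).sum := by
  intro l
  induction l with
  | nil => exact fun _ => ⟨[], by simp, by simp, by simp, by simp⟩
  | cons x l ih =>
    intro h
    obtain ⟨l₁, e1, e2, e3, e4⟩ := ih (fun y hy => h y (List.mem_cons_of_mem _ hy))
    obtain ⟨b, b1, b2, b3, b4⟩ := replicate_block f hhom x (h x List.mem_cons_self)
    refine ⟨b ++ l₁, ?_, ?_, ?_, ?_⟩
    · rw [List.sum_append, e1, b1, List.sum_cons]
    · rw [List.map_append, List.sum_append, e2, b2, List.map_cons, List.sum_cons]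
    · intro y hy
      rcases List.mem_append.mp hy with h'|h'
      exacts [b3 y h', e3 y h']
    · rw [List.length_append, List.map_cons, List.sum_cons]
      push_cast
      linarith

lemma big (f a : X → ℝ) (C : ℝ)
    (hhom : ∀ (t : ℝ) (x : X), f (t • x) = t * f x)
    (hmid : ∀ x y : X, ‖x‖ ≤ 1 → ‖y‖ ≤ 1 →
      a ((2 : ℝ)⁻¹ • (x + y)) ≤ (a x + a y) / 2)
    (hC : ∀ x : X, ‖x‖ ≤ 1 → |f x - a x| ≤ C)
    (l : List X) (hl : ∀ x ∈ l, 1 ≤ ‖x‖) :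
    f l.sum ≤ (l.map f).sum + 8 * C * (l.map (‖·‖)).sum := by
  have hC0 : 0 ≤ C := le_trans (abs_nonneg _) (hC 0 (by simp))
  obtain ⟨l', e1, e2, e3, e4⟩ := flatten f hhom l hl
  have h := pad f a C hhom hmid hC l' e3
  rw [e1, e2] at h
  nlinarith [h, mul_le_mul_of_nonneg_left e4 (by linarith : (0:ℝ) ≤ 4*C)]

lemma dropzero (f : X → ℝ) (hf0 : f 0 = 0) :
    ∀ l : List X, ∃ l' : List X, (∀ x ∈ l', x ≠ 0) ∧ l'.sum = l.sum ∧
      (l'.map f).sum = (l.map f).sum ∧ (l'.map (‖·‖)).sum = (l.map (‖·‖)).sum := by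
  intro l
  induction l with
  | nil => exact ⟨[], by simp, rfl, rfl, rfl⟩
  | cons x l ih =>
    obtain ⟨l₁, e0, e1, e2, e3⟩ := ih
    by_cases hx : x = 0
    · subst hx
      exact ⟨l₁, e0, by simp [e1], by simp [e2, hf0], by simp [e3]⟩
    · refine ⟨x :: l₁, ?_, by simp [e1], by simp [e2], by simp [e3]⟩
      intro y hy
      rcases List.mem_cons.mp hy with rfl|hy
      · exact hx
      · exact e0 y hy

lemma find_t : ∀ l : List X, (∀ x ∈ l, x ≠ 0) → ∃ t : ℝ, 0 < t ∧ ∀ x ∈ l, 1 ≤ t * ‖x‖ := by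
  intro l
  induction l with
  | nil => exact fun _ => ⟨1, one_pos, by simp⟩
  | cons x l ih =>
    intro h
    obtain ⟨t, ht, h2⟩ := ih (fun y hy => h y (List.mem_cons_of_mem _ hy))
    have hx : 0 < ‖x‖ := norm_pos_iff.mpr (h x List.mem_cons_self)
    refine ⟨t + ‖x‖⁻¹, by positivity, ?_⟩
    intro y hy
    rcases List.mem_cons.mp hy with rfl|hy
    · have hinv : ‖y‖⁻¹ * ‖y‖ = 1 := inv_mul_cancel₀ hx.ne'
      nlinarith [norm_nonneg y, mul_nonneg ht.le (norm_nonneg y)]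
    · have h3 := h2 y hy
      have hny : 0 ≤ ‖y‖ := norm_nonneg y
      nlinarith [mul_nonneg (inv_nonneg.mpr hx.le) hny]

lemma claim (f a : X → ℝ) (C : ℝ)
    (hhom : ∀ (t : ℝ) (x : X), f (t • x) = t * f x)
    (hmid : ∀ x y : X, ‖x‖ ≤ 1 → ‖y‖ ≤ 1 →
      a ((2 : ℝ)⁻¹ • (x + y)) ≤ (a x + a y) / 2)
    (hC : ∀ x : X, ‖x‖ ≤ 1 → |f x - a x| ≤ C)
    (l : List X) :
    f l.sum ≤ (l.map f).sum + 8 * C * (l.map (‖·‖)).sum := by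
  have hf0 : f 0 = 0 := by simpa using hhom 0 0
  obtain ⟨l₁, h0, e1, e2, e3⟩ := dropzero f hf0 l
  rw [← e1, ← e2, ← e3]
  obtain ⟨t, ht, h2⟩ := find_t l₁ h0
  set l₂ := l₁.map (t • ·) with hl2
  have hb : ∀ x ∈ l₂, 1 ≤ ‖x‖ := by
    intro y hy
    obtain ⟨x, hx, rfl⟩ := List.mem_map.mp hy
    rw [norm_smul, Real.norm_eq_abs, abs_of_pos ht]
    exact h2 x hx
  have h := big f a C hhom hmid hC l₂ hb
  have s1 : l₂.sum = t • l₁.sum := List.smul_sum.symm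
  have s2 : (l₂.map f).sum = t * (l₁.map f).sum := by
    rw [hl2, List.map_map]
    have he : (f ∘ (t • ·)) = fun x : X => t * f x := funext fun x => hhom t x
    rw [he, List.sum_map_mul_left]
  have s3 : (l₂.map (‖·‖)).sum = t * (l₁.map (‖·‖)).sum := by
    rw [hl2, List.map_map]
    have he : ((‖·‖) ∘ (t • ·) : X → ℝ) = fun x : X => t * ‖x‖ := by
      funext x
      simp [norm_smul, abs_of_pos ht]
    rw [he, List.sum_map_mul_left]
  rw [s1, s2, s3, hhom t] at h
  have hmul : t * (f l₁.sum) ≤ t * ((l₁.map f).sum + 8 * C * (l₁.map (‖·‖)).sum) := by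
    nlinarith [h]
  exact le_of_mul_le_mul_left hmul ht

end QLHelp

/-- If a quasi-linear map `f : X → ℝ` on a real Banach space is uniformly close to a
midconvex function on the closed unit ball, then `f` is at finite distance from a
(not necessarily continuous) linear functional. -/
theorem stmt_0 {X : Type*} [NormedAddCommGroup X] [NormedSpace ℝ X] [CompleteSpace X]
    (f : X → ℝ)
    (hhom : ∀ (t : ℝ) (x : X), f (t • x) = t * f x)
    (Q : ℝ) (hQ : 0 ≤ Q)
    (hquasi : ∀ x y : X, |f (x + y) - f x - f y| ≤ Q * (‖x‖ + ‖y‖))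
    (a : X → ℝ)
    (hmid : ∀ x y : X, ‖x‖ ≤ 1 → ‖y‖ ≤ 1 →
      a ((2 : ℝ)⁻¹ • (x + y)) ≤ (a x + a y) / 2)
    (C : ℝ) (hC : ∀ x : X, ‖x‖ ≤ 1 → |f x - a x| ≤ C) :
    ∃ (ℓ : X →ₗ[ℝ] ℝ) (M : ℝ), 0 ≤ M ∧ ∀ x : X, |f x - ℓ x| ≤ M * ‖x‖ := by
  classical
  have hC0 : 0 ≤ C := le_trans (abs_nonneg _) (hC 0 (by simp))
  have hf0 : f 0 = 0 := by simpa using hhom 0 0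
  set S : X → Set ℝ := fun x =>
    { r | ∃ l : List X, l.sum = x ∧ r = (l.map f).sum + 8 * C * (l.map (‖·‖)).sum } with hS
  have hmem : ∀ x, (f x + 8 * C * ‖x‖) ∈ S x := fun x => ⟨[x], by simp, by simp⟩
  have hne : ∀ x, (S x).Nonempty := fun x => ⟨_, hmem x⟩
  have hlb : ∀ x, ∀ r ∈ S x, f x ≤ r := by
    rintro x r ⟨l, rfl, rfl⟩
    exact QLHelp.claim f a C hhom hmid hC l
  have hbdd : ∀ x, BddBelow (S x) := fun x => ⟨f x, fun r hr => hlb x r hr⟩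
  set p : X → ℝ := fun x => sInf (S x) with hp
  have hple : ∀ x, p x ≤ f x + 8 * C * ‖x‖ := fun x => csInf_le (hbdd x) (hmem x)
  have hpge : ∀ x, f x ≤ p x := fun x => le_csInf (hne x) (hlb x)
  have hadd : ∀ x y, p (x + y) ≤ p x + p y := by
    intro x y
    have key : ∀ r ∈ S x, ∀ s ∈ S y, p (x + y) ≤ r + s := by
      rintro r ⟨l₁, rfl, rfl⟩ s ⟨l₂, rfl, rfl⟩
      have hmm : ((l₁ ++ l₂).map f).sum + 8 * C * ((l₁ ++ l₂).map (‖·‖)).sum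
          ∈ S (l₁.sum + l₂.sum) := ⟨l₁ ++ l₂, by simp, rfl⟩
      have h := csInf_le (hbdd _) hmm
      rw [List.map_append, List.sum_append, List.map_append, List.sum_append] at h
      calc p (l₁.sum + l₂.sum) ≤ _ := h
      _ = _ := by ring
    have h1 : ∀ r ∈ S x, p (x + y) - r ≤ p y := by
      intro r hr
      apply le_csInf (hne y)
      intro s hs
      linarith [key r hr s hs]
    have h2 : p (x + y) - p y ≤ p x := by
      apply le_csInf (hne x)
      intro r hr
      linarith [h1 r hr]
    linarith
  have hsmul : ∀ c : ℝ, 0 < c → ∀ x : X, p (c • x) = c * p x := by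
    intro c hc x
    have hset : S (c • x) = c • (S x) := by
      ext r
      constructor
      · rintro ⟨l, hsum, rfl⟩
        refine Set.mem_smul_set.mpr ⟨((l.map (c⁻¹ • ·)).map f).sum
          + 8 * C * ((l.map (c⁻¹ • ·)).map (‖·‖)).sum, ⟨l.map (c⁻¹ • ·), ?_, rfl⟩, ?_⟩
        · rw [← List.smul_sum, hsum, inv_smul_smul₀ hc.ne']
        · rw [List.map_map, List.map_map]
          have e1 : (f ∘ (c⁻¹ • ·)) = fun y : X => c⁻¹ * f y := funext fun y => hhom c⁻¹ y
          have e2 : ((‖·‖) ∘ (c⁻¹ • ·) : X → ℝ) = fun y : X => c⁻¹ * ‖y‖ := by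
            funext y
            simp only [Function.comp_apply, norm_smul, Real.norm_eq_abs,
              abs_of_pos (inv_pos.mpr hc)]
          rw [e1, e2, List.sum_map_mul_left, List.sum_map_mul_left]
          field_simp
          have hc' : c * c⁻¹ = 1 := mul_inv_cancel₀ hc.ne'
          linear_combination ((List.map f l).sum + C * (List.map (fun x : X => ‖x‖) l).sum * 8) * hc'
      · rintro hr
        obtain ⟨s, ⟨l, hsum, rfl⟩, rfl⟩ := Set.mem_smul_set.mp hr
        refine ⟨l.map (c • ·), ?_, ?_⟩
        · rw [← List.smul_sum, hsum]
        · rw [List.map_map, List.map_map]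
          have e1 : (f ∘ (c • ·)) = fun y : X => c * f y := funext fun y => hhom c y
          have e2 : ((‖·‖) ∘ (c • ·) : X → ℝ) = fun y : X => c * ‖y‖ := by
            funext y
            simp only [Function.comp_apply, norm_smul, Real.norm_eq_abs, abs_of_pos hc]
          rw [e1, e2, List.sum_map_mul_left, List.sum_map_mul_left]
          simp only [smul_eq_mul]
          ring
    rw [hp]
    simp only
    rw [hset, Real.sInf_smul_of_nonneg hc.le, smul_eq_mul]
  obtain ⟨g, -, hg⟩ := exists_extension_of_le_sublinear (⟨⊥, 0⟩ : X →ₗ.[ℝ] ℝ) p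
    hsmul hadd
    (fun x => by
      have hx0 : (x : X) = 0 := (Submodule.mem_bot ℝ).mp x.2
      have h0 : (0:ℝ) ≤ p 0 := hf0 ▸ hpge 0
      simpa [hx0] using h0)
  refine ⟨g, 8 * C, by linarith, ?_⟩
  intro x
  have h1 : g x ≤ f x + 8 * C * ‖x‖ := le_trans (hg x) (hple x)
  have h2 : g (-x) ≤ f (-x) + 8 * C * ‖x‖ := by
    have := le_trans (hg (-x)) (hple (-x))
    rwa [norm_neg] at this
  have hodd : f (-x) = - f x := by
    have := hhom (-1) x
    rw [neg_one_smul] at this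
    linarith [this]
  rw [map_neg, hodd] at h2
  rw [abs_le]
  constructor <;> linarith
end

section
/- Let Δ∞ be the infinite-dimensional simplex in real ℓ¹ and define f : Δ∞ → ℝ by f(x) = −Σ_{i=1}^∞ x_i·log₂(x_i) when x has finite support (with the convention 0·log₂ 0 = 0), and f(x) = 0 when x does not have finite support. Then f is 1-convex on Δ∞, and for every convex function g : Δ∞ → ℝ one has sup_{x ∈ Δ∞} |f(x) − g(x)| = ∞. -/
open scoped BigOperators

/-- The infinite-dimensional simplex in real `ℓ¹`. -/
def simplexL1 : Set (lp (fun _ : ℕ => ℝ) 1) :=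
  {x | (∀ i, 0 ≤ x i) ∧ ∑' i, x i = 1}


open Real

noncomputable abbrev L1 : Type := lp (fun _ : ℕ => ℝ) 1

lemma coord_combo (x y : L1) (t s : ℝ) (i : ℕ) :
    (t • x + s • y) i = t * x i + s * y i := by
  simp [lp.coeFn_add, lp.coeFn_smul]
  rfl

lemma mul_logb_add {a b : ℝ} (ha : 0 ≤ a) (hb : 0 ≤ b) :
    a * logb 2 a + b * logb 2 b ≤ (a + b) * logb 2 (a + b) := by
  have key : ∀ c d : ℝ, 0 ≤ c → 0 ≤ d → c * logb 2 c ≤ c * logb 2 (c + d) := by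
    intro c d hc hd
    rcases hc.eq_or_lt with h | h
    · simp [← h]
    · exact mul_le_mul_of_nonneg_left
        (logb_le_logb_of_le one_lt_two h (by linarith)) hc
  have h1 := key a b ha hb
  have h2 := key b a hb ha
  rw [add_comm b a] at h2
  calc a * logb 2 a + b * logb 2 b ≤ a * logb 2 (a+b) + b * logb 2 (a+b) := by linarith
    _ = (a + b) * logb 2 (a + b) := by ring

lemma smul_mul_logb (t x : ℝ) (ht : 0 < t) :
    (t * x) * logb 2 (t * x) = (t * logb 2 t) * x + t * (x * logb 2 x) := by
  rcases eq_or_ne x 0 with rfl | hx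
  · simp
  · rw [logb_mul ht.ne' hx]; ring

lemma binent_le_one {t : ℝ} : -(t * logb 2 t) - (1 - t) * logb 2 (1 - t) ≤ 1 := by
  have h := Real.binEntropy_le_log_two (p := t)
  rw [Real.binEntropy_eq_negMulLog_add_negMulLog_one_sub] at h
  have hl2 : (0:ℝ) < Real.log 2 := Real.log_pos one_lt_two
  have heq : -(t * logb 2 t) - (1 - t) * logb 2 (1 - t)
      = (negMulLog t + negMulLog (1 - t)) / Real.log 2 := by
    simp [Real.negMulLog, Real.logb]
    ring
  rw [heq, div_le_one hl2]
  exact h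

lemma ent_nonneg (x : L1) (h1 : ∀ i, 0 ≤ x i) (h2 : ∑' i, x i = 1)
    (hs : (Function.support fun i => x i).Finite) :
    0 ≤ -∑' i, x i * logb 2 (x i) := by
  set s := hs.toFinset with hsdef
  have hout : ∀ i ∉ s, x i = 0 := fun i hi => by
    by_contra h
    exact hi (hs.mem_toFinset.mpr h)
  have hsum : ∑ i ∈ s, x i = 1 := by rw [← h2]; exact (tsum_eq_sum hout).symm
  have hle1 : ∀ i, x i ≤ 1 := by
    intro i
    by_cases hi : i ∈ s
    · calc x i ≤ ∑ j ∈ s, x j := Finset.single_le_sum (fun j _ => h1 j) hi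
        _ = 1 := hsum
    · rw [hout i hi]; norm_num
  rw [tsum_eq_sum (s := s) (f := fun i => x i * logb 2 (x i))
    (fun i hi => by simp [hout i hi])]
  have hterm : ∀ i ∈ s, x i * logb 2 (x i) ≤ 0 := fun i _ => by
    have := Real.logb_nonpos one_lt_two (h1 i) (hle1 i)
    nlinarith [h1 i]
  have := Finset.sum_nonpos hterm
  linarith

lemma ent_combo (x y : L1) (hx1 : ∀ i, 0 ≤ x i) (hx2 : ∑' i, x i = 1)
    (hy1 : ∀ i, 0 ≤ y i) (hy2 : ∑' i, y i = 1)
    (hxs : (Function.support fun i => x i).Finite)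
    (hys : (Function.support fun i => y i).Finite)
    {t : ℝ} (ht0 : 0 < t) (ht1 : t < 1) :
    -∑' i, (t • x + (1 - t) • y) i * logb 2 ((t • x + (1 - t) • y) i)
      ≤ t * (-∑' i, x i * logb 2 (x i)) + (1 - t) * (-∑' i, y i * logb 2 (y i)) + 1 := by
  set z := t • x + (1 - t) • y with hz
  set s := hxs.toFinset ∪ hys.toFinset with hsdef
  have hxout : ∀ i ∉ s, x i = 0 := fun i hi => by
    by_contra h
    exact hi (Finset.mem_union_left _ (hxs.mem_toFinset.mpr h))
  have hyout : ∀ i ∉ s, y i = 0 := fun i hi => by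
    by_contra h
    exact hi (Finset.mem_union_right _ (hys.mem_toFinset.mpr h))
  have hzc : ∀ i, z i = t * x i + (1 - t) * y i := fun i => coord_combo x y t (1-t) i
  have hzout : ∀ i ∉ s, z i = 0 := fun i hi => by
    rw [hzc i, hxout i hi, hyout i hi]; ring
  have hsx : ∑ i ∈ s, x i = 1 := by rw [← hx2]; exact (tsum_eq_sum hxout).symm
  have hsy : ∑ i ∈ s, y i = 1 := by rw [← hy2]; exact (tsum_eq_sum hyout).symm
  rw [tsum_eq_sum (s := s) (f := fun i => z i * logb 2 (z i))
      (fun i hi => by simp [hzout i hi]),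
    tsum_eq_sum (s := s) (f := fun i => x i * logb 2 (x i))
      (fun i hi => by simp [hxout i hi]),
    tsum_eq_sum (s := s) (f := fun i => y i * logb 2 (y i))
      (fun i hi => by simp [hyout i hi])]
  have pointwise : ∀ i ∈ s,
      (t * logb 2 t) * x i + (t * (x i * logb 2 (x i)) +
        (((1 - t) * logb 2 (1 - t)) * y i + (1 - t) * (y i * logb 2 (y i))))
        ≤ z i * logb 2 (z i) := by
    intro i _
    have h1 := mul_logb_add (a := t * x i) (b := (1 - t) * y i)
      (mul_nonneg ht0.le (hx1 i))
      (mul_nonneg (by linarith : (0:ℝ) ≤ 1 - t) (hy1 i))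
    rw [smul_mul_logb t (x i) ht0, smul_mul_logb (1-t) (y i) (by linarith)] at h1
    rw [hzc i]
    linarith
  have hsum := Finset.sum_le_sum pointwise
  simp only [Finset.sum_add_distrib, ← Finset.mul_sum] at hsum
  rw [hsx, hsy] at hsum
  have hb := binent_le_one (t := t)
  linarith


noncomputable def eVec (i : ℕ) : L1 := lp.single 1 i (1:ℝ)
noncomputable def uVec (N : ℕ) : L1 := ∑ i ∈ Finset.range N, lp.single 1 i ((N:ℝ)⁻¹)

lemma eVec_apply (i j : ℕ) : eVec i j = if j = i then 1 else 0 := by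
  simp [eVec, lp.single_apply, Pi.single_apply]

lemma uVec_apply (N j : ℕ) : uVec N j = if j < N then (N:ℝ)⁻¹ else 0 := by
  simp [uVec, lp.coeFn_sum, lp.single_apply, Finset.sum_apply, Finset.sum_ite_eq, Finset.sum_dite_eq]
  change (∑ i ∈ Finset.range N, (lp.single 1 i (N:ℝ)⁻¹ : ℕ → ℝ)) j = _
  simp [Finset.sum_apply, lp.single_apply, Pi.single_apply]

lemma eVec_mem (i : ℕ) : eVec i ∈ simplexL1 := by
  constructor
  · intro j; rw [eVec_apply]; split <;> norm_num
  · rw [tsum_congr (fun j => eVec_apply i j)]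
    exact tsum_ite_eq i 1

lemma eVec_supp (i : ℕ) : (Function.support fun j => eVec i j).Finite := by
  apply Set.Finite.subset (Set.finite_singleton i)
  intro j hj
  simp only [Function.mem_support, eVec_apply] at hj
  by_contra h
  exact hj (if_neg h)

lemma uVec_supp (N : ℕ) : (Function.support fun j => uVec N j).Finite := by
  apply Set.Finite.subset (Set.finite_Iio N)
  intro j hj
  simp only [Function.mem_support, uVec_apply] at hj
  by_contra h
  exact hj (if_neg h)

lemma uVec_mem (N : ℕ) (hN : N ≠ 0) : uVec N ∈ simplexL1 := by
  constructor
  · intro j; rw [uVec_apply]; split <;> positivity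
  · rw [tsum_eq_sum (s := Finset.range N) (fun j hj => by
      rw [uVec_apply, if_neg (by simpa using hj)])]
    simp only [uVec_apply]
    rw [Finset.sum_ite_of_true (fun j hj => Finset.mem_range.mp hj), Finset.sum_const,
      Finset.card_range, nsmul_eq_mul]
    exact mul_inv_cancel₀ (Nat.cast_ne_zero.mpr hN)

lemma ent_eVec (i : ℕ) : -∑' j, eVec i j * logb 2 (eVec i j) = 0 := by
  have : ∀ j, eVec i j * logb 2 (eVec i j) = 0 := by
    intro j; rw [eVec_apply]; split <;> simp
  rw [tsum_congr this]; simp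

lemma ent_uVec (N : ℕ) (hN : N ≠ 0) :
    -∑' j, uVec N j * logb 2 (uVec N j) = logb 2 N := by
  rw [tsum_eq_sum (s := Finset.range N) (fun j hj => by
      rw [uVec_apply, if_neg (by simpa using hj)]; simp)]
  have : ∀ j ∈ Finset.range N, uVec N j * logb 2 (uVec N j)
      = (N:ℝ)⁻¹ * logb 2 (N:ℝ)⁻¹ := by
    intro j hj
    rw [uVec_apply, if_pos (Finset.mem_range.mp hj)]
  rw [Finset.sum_congr rfl this, Finset.sum_const, Finset.card_range, nsmul_eq_mul,
    ← mul_assoc, mul_inv_cancel₀ (Nat.cast_ne_zero.mpr hN), one_mul, logb_inv]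
  ring

lemma uVec_succ (N : ℕ) (hN : N ≠ 0) :
    ((N:ℝ)/((N:ℝ)+1)) • uVec N + (1/((N:ℝ)+1)) • eVec N = uVec (N+1) := by
  apply lp.ext; funext j
  have h := coord_combo (uVec N) (eVec N) ((N:ℝ)/((N:ℝ)+1)) (1/((N:ℝ)+1)) j
  rw [h, uVec_apply, uVec_apply, eVec_apply]
  have hN1 : ((N:ℝ)+1) ≠ 0 := by positivity
  rcases lt_trichotomy j N with hj | hj | hj
  · rw [if_pos hj, if_neg (show j ≠ N by omega), if_pos (show j < N + 1 by omega)]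
    push_cast; field_simp; ring
  · subst hj
    rw [if_neg (show ¬ j < j by omega), if_pos rfl, if_pos (show j < j + 1 by omega)]
    push_cast; field_simp; ring
  · rw [if_neg (by omega), if_neg (by omega), if_neg (by omega)]
    simp


/-- The entropy-type function `f` (equal to `-∑ xᵢ log₂ xᵢ` on finitely supported points
of the infinite-dimensional simplex and `0` elsewhere) is `1`-convex on the simplex, but
at infinite uniform distance from every convex function on the simplex. -/
theorem stmt_1 (f : lp (fun _ : ℕ => ℝ) 1 → ℝ)
    (hfin : ∀ x : lp (fun _ : ℕ => ℝ) 1, (Function.support fun i => x i).Finite →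
      f x = -∑' i, x i * Real.logb 2 (x i))
    (hinf : ∀ x : lp (fun _ : ℕ => ℝ) 1, ¬ (Function.support fun i => x i).Finite →
      f x = 0) :
    (∀ x ∈ simplexL1, ∀ y ∈ simplexL1, ∀ t : ℝ, 0 ≤ t → t ≤ 1 →
      f (t • x + (1 - t) • y) ≤ t * f x + (1 - t) * f y + 1) ∧
    (∀ g : lp (fun _ : ℕ => ℝ) 1 → ℝ,
      (∀ x ∈ simplexL1, ∀ y ∈ simplexL1, ∀ t : ℝ, 0 ≤ t → t ≤ 1 →
        g (t • x + (1 - t) • y) ≤ t * g x + (1 - t) * g y) →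
      ∀ C : ℝ, ∃ x ∈ simplexL1, C < |f x - g x|) := by
  have hnn : ∀ x ∈ simplexL1, 0 ≤ f x := by
    intro x hx
    by_cases hs : (Function.support fun i => x i).Finite
    · rw [hfin x hs]
      exact ent_nonneg x hx.1 hx.2 hs
    · rw [hinf x hs]
  constructor
  · intro x hx y hy t ht0 ht1
    rcases ht0.eq_or_lt with h0 | h0
    · have hz : (t : ℝ) • x + (1 - t) • y = y := by
        rw [← h0]; norm_num
      rw [hz, ← h0]
      have := hnn y hy
      linarith
    rcases ht1.eq_or_lt with h1 | h1
    · have hz : (t : ℝ) • x + (1 - t) • y = x := by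
        rw [h1]; norm_num
      rw [hz, h1]
      have := hnn x hx
      linarith
    set z := t • x + (1 - t) • y with hzdef
    have hzc : ∀ i, z i = t * x i + (1 - t) * y i :=
      fun i => coord_combo x y t (1 - t) i
    by_cases hb : (Function.support fun i => x i).Finite ∧
        (Function.support fun i => y i).Finite
    · obtain ⟨hxs, hys⟩ := hb
      have hzs : (Function.support fun i => z i).Finite := by
        apply Set.Finite.subset (hxs.union hys)
        intro i hi
        simp only [Function.mem_support, Set.mem_union] at hi ⊢
        by_contra h
        push_neg at h
        obtain ⟨h1', h2'⟩ := h
        exact hi (by rw [hzc i, h1', h2']; ring)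
      rw [hfin z hzs, hfin x hxs, hfin y hys]
      exact ent_combo x y hx.1 hx.2 hy.1 hy.2 hxs hys h0 h1
    · have hzs : ¬ (Function.support fun i => z i).Finite := by
        intro hzf
        apply hb
        constructor
        · apply hzf.subset
          intro i hi
          simp only [Function.mem_support] at hi ⊢
          intro hcz
          apply hi
          have h1' := mul_nonneg h0.le (hx.1 i)
          have h2' := mul_nonneg (by linarith : (0:ℝ) ≤ 1 - t) (hy.1 i)
          rw [hzc i] at hcz
          have hx0 : t * x i = 0 := by linarith
          rcases mul_eq_zero.mp hx0 with h | h
          · exact absurd h h0.ne'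
          · exact h
        · apply hzf.subset
          intro i hi
          simp only [Function.mem_support] at hi ⊢
          intro hcz
          apply hi
          have h1' := mul_nonneg h0.le (hx.1 i)
          have h2' := mul_nonneg (by linarith : (0:ℝ) ≤ 1 - t) (hy.1 i)
          rw [hzc i] at hcz
          have hy0 : (1 - t) * y i = 0 := by linarith
          rcases mul_eq_zero.mp hy0 with h | h
          · exact absurd h (by linarith : (1:ℝ) - t ≠ 0).elim
          · exact h
      rw [hinf z hzs]
      have h1' := mul_nonneg h0.le (hnn x hx)
      have h2' := mul_nonneg (by linarith : (0:ℝ) ≤ 1 - t) (hnn y hy)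
      linarith
  · intro g hg C
    by_contra hcon
    push_neg at hcon
    have hfe : ∀ i, f (eVec i) = 0 := fun i => by
      rw [hfin _ (eVec_supp i)]; exact ent_eVec i
    have hge : ∀ i, g (eVec i) ≤ C := by
      intro i
      have h := abs_le.mp (hcon (eVec i) (eVec_mem i))
      have := hfe i
      linarith [h.1]
    have hgu : ∀ N, 1 ≤ N → g (uVec N) ≤ C := by
      intro N hN
      induction N with
      | zero => omega
      | succ n ih =>
        by_cases hn : n = 0
        · subst hn
          have h1 : uVec 1 = eVec 0 := by
            apply lp.ext; funext j
            rw [uVec_apply, eVec_apply]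
            rcases Nat.eq_zero_or_pos j with rfl | hj
            · norm_num
            · rw [if_neg (by omega), if_neg (by omega)]
          rw [h1]
          exact hge 0
        · have hn1 : 1 ≤ n := Nat.one_le_iff_ne_zero.mpr hn
          have ihn := ih hn1
          have hdec := uVec_succ n hn
          have hpos : (0:ℝ) < (n:ℝ) + 1 := by positivity
          have ht0 : (0:ℝ) ≤ (n:ℝ)/((n:ℝ)+1) := by positivity
          have ht1 : (n:ℝ)/((n:ℝ)+1) ≤ 1 := by
            rw [div_le_one hpos]; linarith
          have h1t : 1 - (n:ℝ)/((n:ℝ)+1) = 1/((n:ℝ)+1) := by field_simp; ring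
          have hcv := hg (uVec n) (uVec_mem n hn) (eVec n) (eVec_mem n)
            ((n:ℝ)/((n:ℝ)+1)) ht0 ht1
          rw [h1t, hdec] at hcv
          have hgen := hge n
          have hmul1 : (n:ℝ)/((n:ℝ)+1) * g (uVec n) ≤ (n:ℝ)/((n:ℝ)+1) * C :=
            mul_le_mul_of_nonneg_left ihn ht0
          have hmul2 : 1/((n:ℝ)+1) * g (eVec n) ≤ 1/((n:ℝ)+1) * C :=
            mul_le_mul_of_nonneg_left hgen (by positivity)
          have hsum1 : (n:ℝ)/((n:ℝ)+1) + 1/((n:ℝ)+1) = 1 := by field_simp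
          have hCC : (n:ℝ)/((n:ℝ)+1) * C + 1/((n:ℝ)+1) * C = C := by
            rw [← add_mul, hsum1, one_mul]
          linarith
    obtain ⟨k, hk⟩ := exists_nat_gt (2 * C)
    set N := 2 ^ k with hNdef
    have hNne : N ≠ 0 := pow_ne_zero k (by norm_num : (2:ℕ) ≠ 0)
    have hN1 : 1 ≤ N := Nat.one_le_iff_ne_zero.mpr hNne
    have hfu : f (uVec N) = Real.logb 2 N := by
      rw [hfin _ (uVec_supp N)]; exact ent_uVec N hNne
    have hlog : Real.logb 2 (N : ℝ) = k := by
      rw [hNdef]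
      push_cast
      rw [Real.logb_pow, Real.logb_self_eq_one one_lt_two]
      ring
    have h := abs_le.mp (hcon (uVec N) (uVec_mem N hNne))
    have hgub := hgu N hN1
    rw [hfu, hlog] at h
    linarith [h.1, h.2]
end

section
/- Every infinite-dimensional real Banach space X contains a compact convex set D ⊆ X for which there exists a function h : D → ℝ that is 1-convex and satisfies sup_{x ∈ D} |h(x) − g(x)| = ∞ for every convex function g : D → ℝ. -/
open Real Set

set_option linter.unusedSectionVars false

lemma stmt2_nml_le_one_sub {l : ℝ} (h0 : 0 ≤ l) : Real.negMulLog l ≤ 1 - l := by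
  rcases eq_or_lt_of_le h0 with h | h
  · simp [← h]
  · have h1 : Real.log l⁻¹ ≤ l⁻¹ - 1 := Real.log_le_sub_one_of_pos (by positivity)
    have h2 : Real.negMulLog l = l * Real.log l⁻¹ := by
      rw [Real.log_inv, Real.negMulLog]; ring
    rw [h2]
    calc l * Real.log l⁻¹ ≤ l * (l⁻¹ - 1) := by
          exact mul_le_mul_of_nonneg_left h1 h0
      _ = 1 - l := by field_simp
lemma stmt2_nml_add_le {a b : ℝ} (ha : 0 ≤ a) (hb : 0 ≤ b) :
    Real.negMulLog (a + b) ≤ Real.negMulLog a + Real.negMulLog b := by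
  rcases eq_or_lt_of_le ha with h | h
  · simp [← h]
  rcases eq_or_lt_of_le hb with h' | h'
  · simp [← h']
  have key : ∀ x y : ℝ, 0 < x → 0 < y → x * (-Real.log (x + y)) ≤ x * (-Real.log x) := by
    intro x y hx hy
    have : Real.log x ≤ Real.log (x + y) := Real.log_le_log hx (by linarith)
    have := neg_le_neg this
    exact mul_le_mul_of_nonneg_left this hx.le
  have e1 : Real.negMulLog (a + b) = a * (-Real.log (a+b)) + b * (-Real.log (a+b)) := by
    rw [Real.negMulLog]; ring
  have e2 : Real.negMulLog a = a * (-Real.log a) := by rw [Real.negMulLog]; ring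
  have e3 : Real.negMulLog b = b * (-Real.log b) := by rw [Real.negMulLog]; ring
  rw [e1, e2, e3]
  have k1 := key a b h h'
  have k2 := key b a h' h
  have : b * (-Real.log (a+b)) ≤ b * (-Real.log b) := by
    have := key b a h' h
    simpa [add_comm] using this
  linarith

lemma stmt2_nml_sum_le {ι : Type*} (s : Finset ι) (f : ι → ℝ) (hf : ∀ i ∈ s, 0 ≤ f i) :
    Real.negMulLog (∑ i ∈ s, f i) ≤ ∑ i ∈ s, Real.negMulLog (f i) := by
  classical
  induction s using Finset.cons_induction with
  | empty => simp
  | cons a s ha ih =>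
    rw [Finset.sum_cons, Finset.sum_cons]
    have h1 : 0 ≤ f a := hf a (Finset.mem_cons_self a s)
    have h2 : ∀ i ∈ s, 0 ≤ f i := fun i hi => hf i (Finset.mem_cons_of_mem hi)
    have h3 : 0 ≤ ∑ i ∈ s, f i := Finset.sum_nonneg h2
    calc Real.negMulLog (f a + ∑ i ∈ s, f i)
        ≤ Real.negMulLog (f a) + Real.negMulLog (∑ i ∈ s, f i) := stmt2_nml_add_le h1 h3
      _ ≤ _ := by gcongr; exact ih h2

noncomputable section

/-- The coefficient simplex: nonnegative sequences with partial sums at most 1. -/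
def stmt2Lam : Set (ℕ → ℝ) :=
  {t | (∀ n, 0 ≤ t n) ∧ ∀ N, ∑ k ∈ Finset.range N, t k ≤ 1}

/-- Entropy of a coefficient sequence. -/
def stmt2Hent (t : ℕ → ℝ) : ℝ := ∑' n, Real.negMulLog (t n)

/-- Vertex coefficient sequences. -/
def stmt2e (k : ℕ) : ℕ → ℝ := fun n => if n = k then 1 else 0

/-- Uniform coefficient sequences. -/
def stmt2u (m : ℕ) : ℕ → ℝ := fun k => if k < m then (m:ℝ)⁻¹ else 0

variable {X : Type*} [NormedAddCommGroup X] [NormedSpace ℝ X] [CompleteSpace X]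

/-- Parametrization of the compact convex set by coefficient sequences. -/
def stmt2P (v : ℕ → X) (t : ℕ → ℝ) : X := ∑' n, t n • v n

/-- Values of finite-mixture representations of a point. -/
def stmt2S (v : ℕ → X) (x : X) : Set ℝ :=
  {r | ∃ (m : ℕ) (μ : Fin m → ℝ) (T : Fin m → ℕ → ℝ),
    (∀ i, 0 ≤ μ i) ∧ (∑ i, μ i = 1) ∧ (∀ i, T i ∈ stmt2Lam) ∧
    stmt2P v (fun n => ∑ i, μ i * T i n) = x ∧
    r = ∑ i, (μ i * stmt2Hent (T i) + Real.negMulLog (μ i))}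

/-- The 1-convex function. -/
def stmt2h (v : ℕ → X) (x : X) : ℝ := sInf (stmt2S v x)

lemma stmt2_exists_next (hinf : ¬ FiniteDimensional ℝ X) (n : ℕ)
    (v : Fin n → X) (g : Fin n → X →L[ℝ] ℝ) :
    ∃ (w : X) (φ : X →L[ℝ] ℝ), ‖w‖ ≤ (2:ℝ)⁻¹ ^ n ∧ (∀ j, g j w = 0) ∧ φ w = 1 ∧
      ∀ i, φ (v i) = 0 := by
  classical
  set W : Submodule ℝ X := Submodule.span ℝ (Set.range v) with hW
  haveI : FiniteDimensional ℝ W := FiniteDimensional.span_of_finite ℝ (Set.finite_range v)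
  set Φ : X →ₗ[ℝ] (Fin n → ℝ) := LinearMap.pi (fun j => (g j : X →ₗ[ℝ] ℝ)) with hΦ
  have hker : ¬ (LinearMap.ker Φ ≤ W) := by
    intro hle
    apply hinf
    haveI : FiniteDimensional ℝ (LinearMap.ker Φ) := Submodule.finiteDimensional_of_le hle
    have h1 : Module.rank ℝ (X ⧸ LinearMap.ker Φ) < Cardinal.aleph0 := by
      rw [← Cardinal.lift_lt_aleph0, Φ.quotKerEquivRange.lift_rank_eq,
        Cardinal.lift_lt_aleph0]
      exact Module.rank_lt_aleph0 ℝ _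
    have h2 : Module.rank ℝ (LinearMap.ker Φ) < Cardinal.aleph0 :=
      Module.rank_lt_aleph0 ℝ _
    have h3 := Submodule.rank_quotient_add_rank (LinearMap.ker Φ)
    have : Module.rank ℝ X < Cardinal.aleph0 := by
      rw [← h3]; exact Cardinal.add_lt_aleph0 h1 h2
    exact Module.rank_lt_aleph0_iff.mp this
  obtain ⟨w₀, hw₀ker, hw₀W⟩ := SetLike.not_le_iff_exists.mp hker
  clear hker
  have hw₀ne : w₀ ≠ 0 := fun h => hw₀W (h ▸ W.zero_mem)
  have hw₀norm : (0:ℝ) < ‖w₀‖ := norm_pos_iff.mpr hw₀ne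
  set c : ℝ := (2:ℝ)⁻¹ ^ n / ‖w₀‖ with hc
  have hcpos : 0 < c := by positivity
  set w : X := c • w₀ with hwdef
  have hwW : w ∉ W := by
    intro hmem
    exact hw₀W (by simpa [hwdef, smul_smul, inv_mul_cancel₀ hcpos.ne'] using W.smul_mem c⁻¹ hmem)
  have hgw : ∀ j, g j w = 0 := by
    intro j
    have : Φ w₀ = 0 := hw₀ker
    have hj : g j w₀ = 0 := congrFun this j
    simp [hwdef, hj]
  have hwnorm : ‖w‖ ≤ (2:ℝ)⁻¹ ^ n := by
    rw [hwdef, norm_smul, Real.norm_eq_abs, abs_of_pos hcpos, hc]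
    rw [div_mul_cancel₀ _ hw₀norm.ne']
  -- separating functional
  have hWclosed : IsClosed (W : Set X) := W.closed_of_finiteDimensional
  obtain ⟨f, u, hfW, hfu⟩ := geometric_hahn_banach_closed_point W.convex hWclosed hwW
  have hfW0 : ∀ a ∈ W, f a = 0 := by
    intro a ha
    by_contra hne
    have h1 : f (((|u| + 1) / f a) • a) < u := hfW _ (W.smul_mem _ ha)
    rw [map_smul, smul_eq_mul, div_mul_cancel₀ _ hne] at h1
    have := le_abs_self u
    linarith
  have hu0 : 0 < u := by
    have := hfW 0 W.zero_mem
    simpa using this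
  have hfwne : f w ≠ 0 := by
    have : u < f w := hfu
    linarith
  refine ⟨w, (f w)⁻¹ • f, hwnorm, hgw, ?_, ?_⟩
  · simp [inv_mul_cancel₀ hfwne]
  · intro i
    have : f (v i) = 0 := hfW0 _ (Submodule.subset_span ⟨i, rfl⟩)
    simp [this]


lemma stmt2_exists_biorth (hinf : ¬ FiniteDimensional ℝ X) :
    ∃ (v : ℕ → X) (g : ℕ → X →L[ℝ] ℝ),
      (∀ n, ‖v n‖ ≤ (2:ℝ)⁻¹ ^ n) ∧ ∀ k n, g k (v n) = if n = k then 1 else 0 := by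
  classical
  let A : ℕ → Type _ := fun n =>
    { p : (Fin n → X) × (Fin n → X →L[ℝ] ℝ) //
        (∀ i, ‖p.1 i‖ ≤ (2:ℝ)⁻¹ ^ (i:ℕ)) ∧
        ∀ i j, p.2 j (p.1 i) = if i = j then 1 else 0 }
  have hstep : ∀ n (p : A n), ∃ q : A (n+1),
      ∀ i : Fin n, q.1.1 (Fin.castSucc i) = p.1.1 i ∧ q.1.2 (Fin.castSucc i) = p.1.2 i := by
    intro n p
    obtain ⟨w, φ, hw, hgw, hφw, hφv⟩ := stmt2_exists_next hinf n p.1.1 p.1.2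
    refine ⟨⟨(Fin.snoc p.1.1 w, Fin.snoc p.1.2 φ), ?_, ?_⟩, ?_⟩
    · intro i
      refine Fin.lastCases ?_ ?_ i
      · simpa using hw
      · intro i'
        simpa using p.2.1 i'
    · intro i j
      refine Fin.lastCases ?_ ?_ i
      · refine Fin.lastCases ?_ ?_ j
        · simpa using hφw
        · intro j'
          have h1 : (Fin.last n : Fin (n+1)) ≠ Fin.castSucc j' :=
            (Fin.castSucc_lt_last j').ne'
          simpa [h1] using hgw j'
      · intro i'
        refine Fin.lastCases ?_ ?_ j
        · have h1 : (Fin.castSucc i' : Fin (n+1)) ≠ Fin.last n :=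
            (Fin.castSucc_lt_last i').ne
          simpa [h1] using hφv i'
        · intro j'
          have h1 : (Fin.castSucc i' = Fin.castSucc j') ↔ i' = j' :=
            Fin.castSucc_inj
          simpa [h1] using p.2.2 i' j'
    · intro i
      constructor
      · simp
      · simp
  let step : ∀ n, A n → A (n+1) := fun n p => (hstep n p).choose
  have hext : ∀ n (p : A n) (i : Fin n),
      (step n p).1.1 (Fin.castSucc i) = p.1.1 i ∧
      (step n p).1.2 (Fin.castSucc i) = p.1.2 i := fun n p => (hstep n p).choose_spec
  let seq : ∀ n, A n := fun n =>
    Nat.rec ⟨(Fin.elim0, Fin.elim0), fun i => i.elim0, fun i => i.elim0⟩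
      (fun m p => step m p) n
  have hseq_succ : ∀ n, seq (n+1) = step n (seq n) := fun _ => rfl
  have coh : ∀ (n m : ℕ) (h : m ≤ n) (i : Fin m),
      (seq n).1.1 (Fin.castLE h i) = (seq m).1.1 i ∧
      (seq n).1.2 (Fin.castLE h i) = (seq m).1.2 i := by
    intro n
    induction n with
    | zero =>
      intro m h i
      interval_cases m
      · exact i.elim0
    | succ n ih =>
      intro m h i
      rcases Nat.lt_or_ge m (n+1) with hlt | hge
      · have h' : m ≤ n := Nat.lt_succ_iff.mp hlt
        have hcast : (Fin.castLE h i : Fin (n+1)) = Fin.castSucc (Fin.castLE h' i) := by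
          ext; simp
        rw [hcast, hseq_succ]
        obtain ⟨e1, e2⟩ := hext n (seq n) (Fin.castLE h' i)
        obtain ⟨f1, f2⟩ := ih m h' i
        exact ⟨e1.trans f1, e2.trans f2⟩
      · have hm : m = n+1 := le_antisymm h hge
        subst hm
        have : Fin.castLE h i = i := by ext; simp
        rw [this]
        exact ⟨rfl, rfl⟩
  refine ⟨fun n => (seq (n+1)).1.1 (Fin.last n), fun k => (seq (k+1)).1.2 (Fin.last k), ?_, ?_⟩
  · intro n
    simpa using (seq (n+1)).2.1 (Fin.last n)
  · intro k n
    dsimp only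
    set N : ℕ := max n k + 1 with hN
    have hn : n + 1 ≤ N := by omega
    have hk : k + 1 ≤ N := by omega
    have hvn : (seq N).1.1 (Fin.castLE hn (Fin.last n)) = (seq (n+1)).1.1 (Fin.last n) :=
      (coh N (n+1) hn (Fin.last n)).1
    have hgk : (seq N).1.2 (Fin.castLE hk (Fin.last k)) = (seq (k+1)).1.2 (Fin.last k) :=
      (coh N (k+1) hk (Fin.last k)).2
    rw [← hvn, ← hgk]
    have := (seq N).2.2 (Fin.castLE hn (Fin.last n)) (Fin.castLE hk (Fin.last k))
    rw [this]
    have : (Fin.castLE hn (Fin.last n) = Fin.castLE hk (Fin.last k)) ↔ n = k := by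
      constructor
      · intro hEq
        have := congrArg Fin.val hEq
        simpa using this
      · intro hEq; subst hEq; rfl
    simp [this]


lemma stmt2Lam_nonneg {t : ℕ → ℝ} (ht : t ∈ stmt2Lam) : ∀ n, 0 ≤ t n := ht.1

lemma stmt2Lam_le_one {t : ℕ → ℝ} (ht : t ∈ stmt2Lam) (n : ℕ) : t n ≤ 1 := by
  have h1 : t n ≤ ∑ k ∈ Finset.range (n+1), t k :=
    Finset.single_le_sum (fun k _ => ht.1 k) (Finset.self_mem_range_succ n)
  exact h1.trans (ht.2 (n+1))

lemma stmt2Lam_summable {t : ℕ → ℝ} (ht : t ∈ stmt2Lam) : Summable t :=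
  summable_of_sum_range_le ht.1 ht.2

lemma stmt2Lam_tsum_le_one {t : ℕ → ℝ} (ht : t ∈ stmt2Lam) : ∑' n, t n ≤ 1 :=
  Summable.tsum_le_of_sum_range_le (stmt2Lam_summable ht) ht.2

lemma stmt2_geom : Summable (fun n : ℕ => (2:ℝ)⁻¹ ^ n) :=
  summable_geometric_of_lt_one (by norm_num) (by norm_num)

lemma stmt2_summable (v : ℕ → X) (hv : ∀ n, ‖v n‖ ≤ (2:ℝ)⁻¹ ^ n)
    {t : ℕ → ℝ} (htb : ∀ n, |t n| ≤ 1) : Summable (fun n => t n • v n) := by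
  apply Summable.of_norm_bounded stmt2_geom
  intro n
  rw [norm_smul, Real.norm_eq_abs]
  calc |t n| * ‖v n‖ ≤ 1 * ((2:ℝ)⁻¹ ^ n) := by
        apply mul_le_mul (htb n) (hv n) (norm_nonneg _) zero_le_one
    _ = (2:ℝ)⁻¹ ^ n := one_mul _

lemma stmt2Lam_abs_le_one {t : ℕ → ℝ} (ht : t ∈ stmt2Lam) (n : ℕ) : |t n| ≤ 1 := by
  rw [abs_of_nonneg (ht.1 n)]; exact stmt2Lam_le_one ht n

lemma stmt2P_comb (v : ℕ → X) (a b : ℝ) (s t : ℕ → ℝ)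
    (hs : Summable (fun n => s n • v n)) (ht : Summable (fun n => t n • v n)) :
    stmt2P v (fun n => a * s n + b * t n) = a • stmt2P v s + b • stmt2P v t := by
  unfold stmt2P
  have h1 : (fun n => (a * s n + b * t n) • v n)
      = fun n => a • (s n • v n) + b • (t n • v n) := by
    funext n; rw [add_smul, mul_smul, mul_smul]
  rw [h1, Summable.tsum_add (hs.const_smul a) (ht.const_smul b),
    Summable.tsum_const_smul a hs, Summable.tsum_const_smul b ht]

lemma stmt2S_nonneg (v : ℕ → X) (x : X) {r : ℝ} (hr : r ∈ stmt2S v x) : 0 ≤ r := by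
  obtain ⟨m, μ, T, hμ0, hμs, hT, _, hrv⟩ := hr
  rw [hrv]
  apply Finset.sum_nonneg
  intro i _
  have hμ1 : μ i ≤ 1 := by
    have := Finset.single_le_sum (f := μ) (fun j _ => hμ0 j) (Finset.mem_univ i)
    rw [hμs] at this; exact this
  have h1 : 0 ≤ stmt2Hent (T i) :=
    tsum_nonneg fun n => Real.negMulLog_nonneg ((hT i).1 n) (stmt2Lam_le_one (hT i) n)
  have h2 : 0 ≤ Real.negMulLog (μ i) := Real.negMulLog_nonneg (hμ0 i) hμ1
  have := mul_nonneg (hμ0 i) h1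
  linarith

lemma stmt2S_bddBelow (v : ℕ → X) (x : X) : BddBelow (stmt2S v x) :=
  ⟨0, fun _ hr => stmt2S_nonneg v x hr⟩

lemma stmt2S_nonempty (v : ℕ → X) {t : ℕ → ℝ} (ht : t ∈ stmt2Lam) :
    (stmt2S v (stmt2P v t)).Nonempty := by
  refine ⟨stmt2Hent t, 1, fun _ => 1, fun _ => t, fun _ => zero_le_one, ?_, fun _ => ht, ?_, ?_⟩
  · simp
  · congr 1; funext n; rw [Fin.sum_univ_one, one_mul]
  · rw [Fin.sum_univ_one, one_mul, Real.negMulLog_one, add_zero]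

lemma stmt2h_le (v : ℕ → X) (x : X) {r : ℝ} (hr : r ∈ stmt2S v x) : stmt2h v x ≤ r :=
  csInf_le (stmt2S_bddBelow v x) hr

lemma stmt2_mixcoef_abs {m : ℕ} (μ : Fin m → ℝ) (T : Fin m → ℕ → ℝ)
    (hμ0 : ∀ i, 0 ≤ μ i) (hμs : ∑ i, μ i = 1) (hT : ∀ i, T i ∈ stmt2Lam) :
    ∀ n, |∑ i, μ i * T i n| ≤ 1 := by
  intro n
  have h0 : 0 ≤ ∑ i, μ i * T i n :=
    Finset.sum_nonneg fun i _ => mul_nonneg (hμ0 i) ((hT i).1 n)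
  rw [abs_of_nonneg h0]
  calc ∑ i, μ i * T i n ≤ ∑ i, μ i * 1 := by
        apply Finset.sum_le_sum
        intro i _
        exact mul_le_mul_of_nonneg_left (stmt2Lam_le_one (hT i) n) (hμ0 i)
    _ = 1 := by simp only [mul_one]; exact hμs

lemma stmt2_one_convex (v : ℕ → X) (hv : ∀ n, ‖v n‖ ≤ (2:ℝ)⁻¹ ^ n)
    {x y : X} (hx : x ∈ stmt2P v '' stmt2Lam) (hy : y ∈ stmt2P v '' stmt2Lam)
    {l : ℝ} (hl0 : 0 ≤ l) (hl1 : l ≤ 1) :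
    stmt2h v (l • x + (1-l) • y) ≤ l * stmt2h v x + (1-l) * stmt2h v y + 1 := by
  classical
  apply le_of_forall_pos_le_add
  intro ε hε
  obtain ⟨tx, htx, hptx⟩ := hx
  obtain ⟨ty, hty, hpty⟩ := hy
  have hnex : (stmt2S v x).Nonempty := hptx ▸ stmt2S_nonempty v htx
  have hney : (stmt2S v y).Nonempty := hpty ▸ stmt2S_nonempty v hty
  obtain ⟨r, hrS, hrlt⟩ := Real.lt_sInf_add_pos hnex (half_pos hε)
  obtain ⟨r', hrS', hrlt'⟩ := Real.lt_sInf_add_pos hney (half_pos hε)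
  obtain ⟨m₁, μ₁, T₁, hμ₁0, hμ₁s, hT₁, hpt₁, hrv₁⟩ := hrS
  obtain ⟨m₂, μ₂, T₂, hμ₂0, hμ₂s, hT₂, hpt₂, hrv₂⟩ := hrS'
  set μc : Fin (m₁ + m₂) → ℝ :=
    Fin.append (fun i => l * μ₁ i) (fun j => (1-l) * μ₂ j) with hμc
  set Tc : Fin (m₁ + m₂) → ℕ → ℝ := Fin.append T₁ T₂ with hTc
  have hsum1 : Summable (fun n => (∑ i, μ₁ i * T₁ i n) • v n) :=
    stmt2_summable v hv (stmt2_mixcoef_abs μ₁ T₁ hμ₁0 hμ₁s hT₁)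
  have hsum2 : Summable (fun n => (∑ i, μ₂ i * T₂ i n) • v n) :=
    stmt2_summable v hv (stmt2_mixcoef_abs μ₂ T₂ hμ₂0 hμ₂s hT₂)
  have hc : (fun n => ∑ i, μc i * Tc i n)
      = fun n => l * (∑ i, μ₁ i * T₁ i n) + (1-l) * (∑ i, μ₂ i * T₂ i n) := by
    funext n
    rw [Fin.sum_univ_add]
    simp only [hμc, hTc, Fin.append_left, Fin.append_right]
    rw [Finset.mul_sum, Finset.mul_sum]
    congr 1 <;> (apply Finset.sum_congr rfl; intro i _; ring)
  have hrc : (l * r + Real.negMulLog l + ((1-l) * r' + Real.negMulLog (1-l)))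
      ∈ stmt2S v (l • x + (1-l) • y) := by
    refine ⟨m₁ + m₂, μc, Tc, ?_, ?_, ?_, ?_, ?_⟩
    · intro i
      refine Fin.addCases (fun i' => ?_) (fun j' => ?_) i
      · simp only [hμc, Fin.append_left]
        exact mul_nonneg hl0 (hμ₁0 i')
      · simp only [hμc, Fin.append_right]
        exact mul_nonneg (by linarith) (hμ₂0 j')
    · rw [Fin.sum_univ_add]
      simp only [hμc, Fin.append_left, Fin.append_right]
      rw [← Finset.mul_sum, ← Finset.mul_sum, hμ₁s, hμ₂s]
      ring
    · intro i
      refine Fin.addCases (fun i' => ?_) (fun j' => ?_) i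
      · simp only [hTc, Fin.append_left]; exact hT₁ i'
      · simp only [hTc, Fin.append_right]; exact hT₂ j'
    · rw [show (fun n => ∑ i, μc i * Tc i n)
          = fun n => l * (∑ i, μ₁ i * T₁ i n) + (1-l) * (∑ i, μ₂ i * T₂ i n) from hc,
        stmt2P_comb v l (1-l) _ _ hsum1 hsum2, hpt₁, hpt₂]
    · rw [Fin.sum_univ_add]
      simp only [hμc, hTc, Fin.append_left, Fin.append_right]
      have block1 : ∑ i, ((l * μ₁ i) * stmt2Hent (T₁ i) + Real.negMulLog (l * μ₁ i))
          = l * r + Real.negMulLog l := by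
        calc ∑ i, ((l * μ₁ i) * stmt2Hent (T₁ i) + Real.negMulLog (l * μ₁ i))
            = ∑ i, (l * (μ₁ i * stmt2Hent (T₁ i) + Real.negMulLog (μ₁ i))
                + μ₁ i * Real.negMulLog l) := by
              apply Finset.sum_congr rfl
              intro i _
              rw [Real.negMulLog_mul]
              ring
          _ = l * (∑ i, (μ₁ i * stmt2Hent (T₁ i) + Real.negMulLog (μ₁ i)))
                + (∑ i, μ₁ i) * Real.negMulLog l := by
              rw [Finset.sum_add_distrib, Finset.mul_sum, Finset.sum_mul]
          _ = l * r + Real.negMulLog l := by rw [hμ₁s, ← hrv₁, one_mul]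
      have block2 : ∑ j, (((1-l) * μ₂ j) * stmt2Hent (T₂ j) + Real.negMulLog ((1-l) * μ₂ j))
          = (1-l) * r' + Real.negMulLog (1-l) := by
        calc ∑ j, (((1-l) * μ₂ j) * stmt2Hent (T₂ j) + Real.negMulLog ((1-l) * μ₂ j))
            = ∑ j, ((1-l) * (μ₂ j * stmt2Hent (T₂ j) + Real.negMulLog (μ₂ j))
                + μ₂ j * Real.negMulLog (1-l)) := by
              apply Finset.sum_congr rfl
              intro j _
              rw [Real.negMulLog_mul]
              ring
          _ = (1-l) * (∑ j, (μ₂ j * stmt2Hent (T₂ j) + Real.negMulLog (μ₂ j)))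
                + (∑ j, μ₂ j) * Real.negMulLog (1-l) := by
              rw [Finset.sum_add_distrib, Finset.mul_sum, Finset.sum_mul]
          _ = (1-l) * r' + Real.negMulLog (1-l) := by rw [hμ₂s, ← hrv₂, one_mul]
      rw [block1, block2]
  have hle := stmt2h_le v _ hrc
  have hrltx : r < stmt2h v x + ε/2 := hrlt
  have hrlty : r' < stmt2h v y + ε/2 := hrlt'
  have b1 : l * r ≤ l * (stmt2h v x + ε/2) :=
    mul_le_mul_of_nonneg_left (le_of_lt hrltx) hl0
  have b2 : (1-l) * r' ≤ (1-l) * (stmt2h v y + ε/2) :=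
    mul_le_mul_of_nonneg_left (le_of_lt hrlty) (by linarith)
  have b3 : Real.negMulLog l + Real.negMulLog (1-l) ≤ 1 := by
    have c1 := stmt2_nml_le_one_sub hl0
    have c2 := stmt2_nml_le_one_sub (show (0:ℝ) ≤ 1 - l by linarith)
    linarith
  have expand : l * (stmt2h v x + ε/2) + (1-l) * (stmt2h v y + ε/2)
      = l * stmt2h v x + (1-l) * stmt2h v y + ε/2 := by ring
  linarith

lemma stmt2e_mem (k : ℕ) : stmt2e k ∈ stmt2Lam := by
  constructor
  · intro n; unfold stmt2e; split <;> norm_num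
  · intro N
    unfold stmt2e
    rw [Finset.sum_ite_eq' (Finset.range N) k (fun _ => (1:ℝ))]
    split <;> norm_num

lemma stmt2u_mem (m : ℕ) : stmt2u m ∈ stmt2Lam := by
  constructor
  · intro n; unfold stmt2u; split
    · positivity
    · exact le_refl 0
  · intro N
    unfold stmt2u
    rw [Finset.sum_ite, Finset.sum_const, Finset.sum_const, smul_zero, add_zero]
    have hsub : (Finset.range N).filter (fun k => k < m) ⊆ Finset.range m := by
      intro k hk
      rw [Finset.mem_range]
      exact (Finset.mem_filter.mp hk).2
    have hcard : ((Finset.range N).filter (fun k => k < m)).card ≤ m := by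
      have := Finset.card_le_card hsub
      rwa [Finset.card_range] at this
    rcases Nat.eq_zero_or_pos m with hm | hm
    · subst hm; simp
    · have hm0 : (0:ℝ) < (m:ℝ) := by exact_mod_cast hm
      rw [nsmul_eq_mul]
      calc (((Finset.range N).filter (fun k => k < m)).card : ℝ) * (m:ℝ)⁻¹
          ≤ (m:ℝ) * (m:ℝ)⁻¹ := by
            apply mul_le_mul_of_nonneg_right _ (by positivity)
            exact_mod_cast hcard
        _ = 1 := mul_inv_cancel₀ hm0.ne'

lemma stmt2Hent_e (k : ℕ) : stmt2Hent (stmt2e k) = 0 := by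
  unfold stmt2Hent stmt2e
  have : (fun n => Real.negMulLog (if n = k then (1:ℝ) else 0)) = fun _ => 0 := by
    funext n; split <;> simp
  rw [this, tsum_zero]

lemma stmt2_trivial_mem (v : ℕ → X) {t : ℕ → ℝ} (ht : t ∈ stmt2Lam) :
    stmt2Hent t ∈ stmt2S v (stmt2P v t) := by
  refine ⟨1, fun _ => 1, fun _ => t, fun _ => zero_le_one, by simp, fun _ => ht, ?_, ?_⟩
  · congr 1; funext n; rw [Fin.sum_univ_one, one_mul]
  · rw [Fin.sum_univ_one, one_mul, Real.negMulLog_one, add_zero]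

lemma stmt2_coef (v : ℕ → X) (g : ℕ → X →L[ℝ] ℝ)
    (hbio : ∀ k n, g k (v n) = if n = k then 1 else 0)
    {t : ℕ → ℝ} (ht : Summable (fun n => t n • v n)) (k : ℕ) :
    g k (stmt2P v t) = t k := by
  unfold stmt2P
  rw [ContinuousLinearMap.map_tsum _ ht]
  have h1 : (fun n => g k (t n • v n)) = fun n => if n = k then t n else 0 := by
    funext n
    rw [ContinuousLinearMap.map_smul, hbio k n]
    simp only [smul_eq_mul]
    split <;> ring
  rw [h1, tsum_eq_single k (fun b hb => by simp [hb])]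
  simp

lemma stmt2_lower (v : ℕ → X) (g : ℕ → X →L[ℝ] ℝ) (hv : ∀ n, ‖v n‖ ≤ (2:ℝ)⁻¹ ^ n)
    (hbio : ∀ k n, g k (v n) = if n = k then 1 else 0) (m : ℕ) (hm : 1 ≤ m) :
    Real.log m ≤ stmt2h v (stmt2P v (stmt2u m)) := by
  classical
  have hm0 : (0:ℝ) < (m:ℝ) := by exact_mod_cast hm
  apply le_csInf (stmt2S_nonempty v (stmt2u_mem m))
  intro r hr
  obtain ⟨mm, μ, T, hμ0, hμs, hT, hpt, hrv⟩ := hr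
  set c : ℕ → ℝ := fun n => ∑ i, μ i * T i n with hcdef
  have hcsum : Summable (fun n => c n • v n) :=
    stmt2_summable v hv (stmt2_mixcoef_abs μ T hμ0 hμs hT)
  have husum : Summable (fun n => stmt2u m n • v n) :=
    stmt2_summable v hv (stmt2Lam_abs_le_one (stmt2u_mem m))
  have hceq : ∀ k, c k = stmt2u m k := by
    intro k
    have h1 : g k (stmt2P v c) = c k := stmt2_coef v g hbio hcsum k
    have h2 : g k (stmt2P v (stmt2u m)) = stmt2u m k := stmt2_coef v g hbio husum k
    rw [← h1, hpt, h2]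
  have hub : ∀ i, μ i ≤ 1 := by
    intro i
    have := Finset.single_le_sum (f := μ) (fun j _ => hμ0 j) (Finset.mem_univ i)
    rwa [hμs] at this
  have hzero : ∀ i (k : ℕ), m ≤ k → μ i * T i k = 0 := by
    intro i k hk
    have h0 : c k = 0 := by
      rw [hceq k]; unfold stmt2u; rw [if_neg (not_lt.mpr hk)]
    have := (Finset.sum_eq_zero_iff_of_nonneg
      (fun j _ => mul_nonneg (hμ0 j) ((hT j).1 k))).mp h0
    exact this i (Finset.mem_univ i)
  rw [hrv]
  have key1 : Real.log m = ∑ k ∈ Finset.range m, Real.negMulLog (c k) := by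
    have hterm : ∀ k ∈ Finset.range m, Real.negMulLog (c k) = (m:ℝ)⁻¹ * Real.log m := by
      intro k hk
      rw [hceq k]
      unfold stmt2u
      rw [if_pos (Finset.mem_range.mp hk)]
      rw [Real.negMulLog, Real.log_inv]
      ring
    rw [Finset.sum_congr rfl hterm, Finset.sum_const, Finset.card_range, nsmul_eq_mul]
    field_simp
  have key2 : ∀ k ∈ Finset.range m, Real.negMulLog (c k)
      ≤ ∑ i, (μ i * Real.negMulLog (T i k) + T i k * Real.negMulLog (μ i)) := by
    intro k _
    have sub : Real.negMulLog (∑ i, μ i * T i k) ≤ ∑ i, Real.negMulLog (μ i * T i k) :=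
      stmt2_nml_sum_le Finset.univ _ (fun i _ => mul_nonneg (hμ0 i) ((hT i).1 k))
    refine sub.trans_eq (Finset.sum_congr rfl fun i _ => ?_)
    rw [Real.negMulLog_mul]
    ring
  have key3 : ∑ k ∈ Finset.range m, ∑ i, (μ i * Real.negMulLog (T i k)
        + T i k * Real.negMulLog (μ i))
      ≤ ∑ i, (μ i * stmt2Hent (T i) + Real.negMulLog (μ i)) := by
    rw [Finset.sum_comm]
    apply Finset.sum_le_sum
    intro i _
    rw [Finset.sum_add_distrib, ← Finset.mul_sum, ← Finset.sum_mul]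
    rcases eq_or_lt_of_le (hμ0 i) with h0 | h0
    · rw [← h0]
      simp
    · have hTi_fin : stmt2Hent (T i) = ∑ k ∈ Finset.range m, Real.negMulLog (T i k) := by
        apply tsum_eq_sum
        intro b hb
        have hmb : m ≤ b := by
          by_contra hc
          exact hb (Finset.mem_range.mpr (not_le.mp hc))
        have hz := hzero i b hmb
        have hTz : T i b = 0 := by
          rcases mul_eq_zero.mp hz with h | h
          · exact absurd h h0.ne'
          · exact h
        rw [hTz, Real.negMulLog_zero]
      rw [hTi_fin]
      have hnml : 0 ≤ Real.negMulLog (μ i) := Real.negMulLog_nonneg h0.le (hub i)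
      have h2 : (∑ k ∈ Finset.range m, T i k) * Real.negMulLog (μ i)
          ≤ Real.negMulLog (μ i) := by
        have hle1 : ∑ k ∈ Finset.range m, T i k ≤ 1 := (hT i).2 m
        calc (∑ k ∈ Finset.range m, T i k) * Real.negMulLog (μ i)
            ≤ 1 * Real.negMulLog (μ i) := mul_le_mul_of_nonneg_right hle1 hnml
          _ = _ := one_mul _
      linarith
  calc Real.log m = ∑ k ∈ Finset.range m, Real.negMulLog (c k) := key1
    _ ≤ ∑ k ∈ Finset.range m, ∑ i, (μ i * Real.negMulLog (T i k)
          + T i k * Real.negMulLog (μ i)) := Finset.sum_le_sum key2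
    _ ≤ _ := key3

lemma stmt2_D_convex (v : ℕ → X) (hv : ∀ n, ‖v n‖ ≤ (2:ℝ)⁻¹ ^ n) :
    Convex ℝ (stmt2P v '' stmt2Lam) := by
  intro x hx y hy a b ha hb hab
  obtain ⟨s, hs, rfl⟩ := hx
  obtain ⟨t, ht, rfl⟩ := hy
  refine ⟨fun n => a * s n + b * t n, ⟨?_, ?_⟩, ?_⟩
  · intro n
    exact add_nonneg (mul_nonneg ha (hs.1 n)) (mul_nonneg hb (ht.1 n))
  · intro N
    rw [Finset.sum_add_distrib, ← Finset.mul_sum, ← Finset.mul_sum]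
    calc a * ∑ k ∈ Finset.range N, s k + b * ∑ k ∈ Finset.range N, t k
        ≤ a * 1 + b * 1 := by
          apply add_le_add
          · exact mul_le_mul_of_nonneg_left (hs.2 N) ha
          · exact mul_le_mul_of_nonneg_left (ht.2 N) hb
      _ = 1 := by rw [mul_one, mul_one, hab]
  · exact (stmt2P_comb v a b s t
      (stmt2_summable v hv (stmt2Lam_abs_le_one hs))
      (stmt2_summable v hv (stmt2Lam_abs_le_one ht)))

lemma stmt2_D_compact (v : ℕ → X) (hv : ∀ n, ‖v n‖ ≤ (2:ℝ)⁻¹ ^ n) :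
    IsCompact (stmt2P v '' stmt2Lam) := by
  have hclosed : IsClosed stmt2Lam := by
    have : stmt2Lam = (⋂ n, (fun t : ℕ → ℝ => t n) ⁻¹' Ici 0)
        ∩ ⋂ N, (fun t : ℕ → ℝ => ∑ k ∈ Finset.range N, t k) ⁻¹' Iic 1 := by
      ext t
      simp [stmt2Lam, Set.mem_iInter, Set.mem_preimage]
    rw [this]
    apply IsClosed.inter
    · exact isClosed_iInter fun n => isClosed_Ici.preimage (continuous_apply n)
    · exact isClosed_iInter fun N =>
        isClosed_Iic.preimage (continuous_finset_sum _ fun k _ => continuous_apply k)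
  have hsub : stmt2Lam ⊆ Set.pi univ fun _ => Icc (0:ℝ) 1 := by
    intro t ht n _
    exact ⟨ht.1 n, stmt2Lam_le_one ht n⟩
  have hcompΛ : IsCompact stmt2Lam :=
    (isCompact_univ_pi fun _ => isCompact_Icc).of_isClosed_subset hclosed hsub
  have hcont : ContinuousOn (stmt2P v) stmt2Lam := by
    rw [continuousOn_iff_continuous_restrict]
    have heq : stmt2Lam.restrict (stmt2P v)
        = fun t : stmt2Lam => ∑' n, (t : ℕ → ℝ) n • v n := rfl
    show Continuous (fun t : stmt2Lam => ∑' n, (t : ℕ → ℝ) n • v n)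
    apply continuous_tsum (u := fun n => (2:ℝ)⁻¹ ^ n)
    · intro n
      exact ((continuous_apply n).comp continuous_subtype_val).smul continuous_const
    · exact stmt2_geom
    · intro n t
      rw [norm_smul, Real.norm_eq_abs]
      calc |(t : ℕ → ℝ) n| * ‖v n‖ ≤ 1 * ((2:ℝ)⁻¹ ^ n) :=
            mul_le_mul (stmt2Lam_abs_le_one t.2 n) (hv n) (norm_nonneg _) zero_le_one
        _ = (2:ℝ)⁻¹ ^ n := one_mul _
  exact hcompΛ.image_of_continuousOn hcont
end

/-- Every infinite-dimensional real Banach space contains a compact convex set `D`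
carrying a `1`-convex function `h` that is at infinite uniform distance from every
convex function on `D`. -/
theorem stmt_2 {X : Type*} [NormedAddCommGroup X] [NormedSpace ℝ X] [CompleteSpace X]
    (hinf : ¬ FiniteDimensional ℝ X) :
    ∃ D : Set X, IsCompact D ∧ Convex ℝ D ∧
      ∃ h : X → ℝ,
        (∀ x ∈ D, ∀ y ∈ D, ∀ t : ℝ, 0 ≤ t → t ≤ 1 →
          h (t • x + (1 - t) • y) ≤ t * h x + (1 - t) * h y + 1) ∧
        (∀ g : X → ℝ,
          (∀ x ∈ D, ∀ y ∈ D, ∀ t : ℝ, 0 ≤ t → t ≤ 1 →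
            g (t • x + (1 - t) • y) ≤ t * g x + (1 - t) * g y) →
          ∀ C : ℝ, ∃ x ∈ D, C < |h x - g x|) := by
  classical
  obtain ⟨v, gf, hv, hbio⟩ := stmt2_exists_biorth hinf
  refine ⟨stmt2P v '' stmt2Lam, stmt2_D_compact v hv, stmt2_D_convex v hv, stmt2h v, ?_, ?_⟩
  · intro x hx y hy t ht0 ht1
    exact stmt2_one_convex v hv hx hy ht0 ht1
  · intro gg hgconv C
    set n : ℕ := ⌈Real.exp (2*C+1)⌉₊ + 1 with hn
    have hn1 : 1 ≤ n := Nat.le_add_left 1 _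
    have hlogn : 2*C + 1 ≤ Real.log n := by
      have h1 : Real.exp (2*C+1) ≤ (n:ℝ) := by
        calc Real.exp (2*C+1) ≤ (⌈Real.exp (2*C+1)⌉₊ : ℝ) := Nat.le_ceil _
          _ ≤ (n:ℝ) := by exact_mod_cast Nat.le_succ _
      calc 2*C+1 = Real.log (Real.exp (2*C+1)) := (Real.log_exp _).symm
        _ ≤ Real.log n := Real.log_le_log (Real.exp_pos _) h1
    by_cases hcase : ∃ k, k < n ∧
        C < |stmt2h v (stmt2P v (stmt2e k)) - gg (stmt2P v (stmt2e k))|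
    · obtain ⟨k, _, hk⟩ := hcase
      exact ⟨stmt2P v (stmt2e k), ⟨stmt2e k, stmt2e_mem k, rfl⟩, hk⟩
    · push_neg at hcase
      have hgC : ∀ k, k < n → gg (stmt2P v (stmt2e k)) ≤ C := by
        intro k hk
        have habs := hcase k hk
        have hhle : stmt2h v (stmt2P v (stmt2e k)) ≤ 0 := by
          have := stmt2h_le v _ (stmt2_trivial_mem v (stmt2e_mem k))
          rwa [stmt2Hent_e k] at this
        have h2 := (abs_le.mp habs).1
        linarith
      have hind : ∀ m, 1 ≤ m → m ≤ n → gg (stmt2P v (stmt2u m)) ≤ C := by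
        intro m
        induction m with
        | zero => intro h; omega
        | succ m ih =>
          intro _ hmn
          rcases Nat.eq_zero_or_pos m with hm0 | hm0
          · subst hm0
            have he : stmt2u 1 = stmt2e 0 := by
              funext k
              unfold stmt2u stmt2e
              rcases Nat.eq_zero_or_pos k with hk | hk
              · subst hk; norm_num
              · rw [if_neg (by omega), if_neg (by omega)]
            rw [he]
            exact hgC 0 (by omega)
          · have hmr : (0:ℝ) < (m:ℝ) := by exact_mod_cast hm0
            have hgum : gg (stmt2P v (stmt2u m)) ≤ C := ih hm0 (by omega)
            have key : stmt2u (m+1) = fun k =>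
                ((m:ℝ)+1)⁻¹ * stmt2e m k + (1-((m:ℝ)+1)⁻¹) * stmt2u m k := by
              funext k
              unfold stmt2u stmt2e
              rcases lt_trichotomy k m with hk | hk | hk
              · rw [if_pos (by omega), if_pos hk, if_neg (by omega)]
                push_cast
                field_simp
                ring
              · subst hk
                rw [if_pos (by omega), if_pos rfl, if_neg (by omega)]
                push_cast
                ring
              · rw [if_neg (by omega), if_neg (by omega), if_neg (by omega)]
                ring
            have hpteq : stmt2P v (stmt2u (m+1))
                = ((m:ℝ)+1)⁻¹ • stmt2P v (stmt2e m)
                  + (1-((m:ℝ)+1)⁻¹) • stmt2P v (stmt2u m) := by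
              rw [key]
              exact stmt2P_comb v _ _ _ _
                (stmt2_summable v hv (stmt2Lam_abs_le_one (stmt2e_mem m)))
                (stmt2_summable v hv (stmt2Lam_abs_le_one (stmt2u_mem m)))
            have ha0 : (0:ℝ) ≤ ((m:ℝ)+1)⁻¹ := by positivity
            have ha1 : ((m:ℝ)+1)⁻¹ ≤ 1 := by
              rw [inv_le_one_iff₀]
              right; linarith
            have hstep := hgconv (stmt2P v (stmt2e m)) ⟨stmt2e m, stmt2e_mem m, rfl⟩
              (stmt2P v (stmt2u m)) ⟨stmt2u m, stmt2u_mem m, rfl⟩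
              (((m:ℝ)+1)⁻¹) ha0 ha1
            rw [← hpteq] at hstep
            have hgem : gg (stmt2P v (stmt2e m)) ≤ C := hgC m (by omega)
            calc gg (stmt2P v (stmt2u (m+1)))
                ≤ ((m:ℝ)+1)⁻¹ * gg (stmt2P v (stmt2e m))
                  + (1-((m:ℝ)+1)⁻¹) * gg (stmt2P v (stmt2u m)) := hstep
              _ ≤ ((m:ℝ)+1)⁻¹ * C + (1-((m:ℝ)+1)⁻¹) * C := by
                  apply add_le_add
                  · exact mul_le_mul_of_nonneg_left hgem ha0
                  · exact mul_le_mul_of_nonneg_left hgum (by linarith)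
              _ = C := by ring
      have hgun : gg (stmt2P v (stmt2u n)) ≤ C := hind n hn1 le_rfl
      refine ⟨stmt2P v (stmt2u n), ⟨stmt2u n, stmt2u_mem n, rfl⟩, ?_⟩
      have hlow := stmt2_lower v gf hv hbio n hn1
      have hd : C + 1 ≤ stmt2h v (stmt2P v (stmt2u n)) - gg (stmt2P v (stmt2u n)) := by
        linarith
      calc C < C + 1 := lt_add_one C
        _ ≤ stmt2h v (stmt2P v (stmt2u n)) - gg (stmt2P v (stmt2u n)) := hd
        _ ≤ |stmt2h v (stmt2P v (stmt2u n)) - gg (stmt2P v (stmt2u n))| := le_abs_self _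
end

section
/- Let X be a real normed space equipped with a partial order whose positive cone X⁺ = {x ∈ X : x ≥ 0} is closed under addition and under multiplication by nonnegative scalars, and suppose that ‖x‖ ≤ ‖x + y‖ whenever x, y ∈ X⁺. Then the function x ↦ −log₂‖x‖ is 1-convex on X⁺ \ {0}: for all x, y ∈ X⁺ \ {0} and t ∈ [0,1], −log₂‖t·x + (1−t)·y‖ ≤ −t·log₂‖x‖ − (1−t)·log₂‖y‖ + 1. -/
/-!
By monotonicity of the norm on the cone, `‖t • x + (1 - t) • y‖` dominates both `t ‖x‖` and
`(1 - t) ‖y‖`. Taking logarithms and averaging with weights `t` and `1 - t` bounds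
`log ‖t • x + (1 - t) • y‖` below by `t log ‖x‖ + (1 - t) log ‖y‖` minus the binary entropy of `t`,
and the binary entropy is at most `log 2`, i.e. one bit.
-/

open Real

/-- At `t = 0` both sides vanish, whatever junk value `log` takes on the left. -/
lemma mul_log_add_log_le_mul_log {t a n : ℝ} (ht : 0 ≤ t) (ha : 0 < a) (h : t * a ≤ n) :
    t * (log t + log a) ≤ t * log n := by
  rcases ht.eq_or_lt with rfl | ht
  · simp
  · rw [← log_mul ht.ne' ha.ne']
    exact mul_le_mul_of_nonneg_left (log_le_log (by positivity) h) ht.le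

lemma weighted_log_sub_log_two_le {t a b n : ℝ} (ht0 : 0 ≤ t) (ht1 : t ≤ 1) (ha : 0 < a)
    (hb : 0 < b) (hna : t * a ≤ n) (hnb : (1 - t) * b ≤ n) :
    t * log a + (1 - t) * log b - log 2 ≤ log n := by
  have hxa := mul_log_add_log_le_mul_log ht0 ha hna
  have hxb := mul_log_add_log_le_mul_log (sub_nonneg.mpr ht1) hb hnb
  have hentropy := binEntropy_le_log_two (p := t)
  rw [binEntropy_eq_negMulLog_add_negMulLog_one_sub, negMulLog, negMulLog] at hentropy
  linarith

lemma weighted_logb_two_sub_one_le {t a b n : ℝ} (ht0 : 0 ≤ t) (ht1 : t ≤ 1) (ha : 0 < a)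
    (hb : 0 < b) (hna : t * a ≤ n) (hnb : (1 - t) * b ≤ n) :
    t * logb 2 a + (1 - t) * logb 2 b - 1 ≤ logb 2 n := by
  have hlog2 : 0 < log 2 := log_pos one_lt_two
  calc t * logb 2 a + (1 - t) * logb 2 b - 1
      = (t * log a + (1 - t) * log b - log 2) / log 2 := by
        simp only [logb]; field_simp
    _ ≤ log n / log 2 := by gcongr; exact weighted_log_sub_log_two_le ht0 ht1 ha hb hna hnb

theorem stmt_3_general {X : Type*} [NormedAddCommGroup X] [NormedSpace ℝ X] [PartialOrder X]
    (hsmul : ∀ (t : ℝ) (x : X), 0 ≤ t → 0 ≤ x → 0 ≤ t • x)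
    (hnorm : ∀ x y : X, 0 ≤ x → 0 ≤ y → ‖x‖ ≤ ‖x + y‖) :
    ∀ x y : X, 0 ≤ x → x ≠ 0 → 0 ≤ y → y ≠ 0 → ∀ t : ℝ, 0 ≤ t → t ≤ 1 →
      -Real.logb 2 ‖t • x + (1 - t) • y‖ ≤
        -(t * Real.logb 2 ‖x‖) - (1 - t) * Real.logb 2 ‖y‖ + 1 := by
  intro x y hx hx0 hy hy0 t ht0 ht1
  have hs0 : 0 ≤ 1 - t := sub_nonneg.mpr ht1
  have htx := hsmul t x ht0 hx
  have hsy := hsmul (1 - t) y hs0 hy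
  have hnx : t * ‖x‖ ≤ ‖t • x + (1 - t) • y‖ := by
    simpa [norm_smul, abs_of_nonneg ht0] using hnorm _ _ htx hsy
  have hny : (1 - t) * ‖y‖ ≤ ‖t • x + (1 - t) • y‖ := by
    simpa [norm_smul, abs_of_nonneg hs0, add_comm] using hnorm _ _ hsy htx
  linarith [weighted_logb_two_sub_one_le ht0 ht1 (norm_pos_iff.mpr hx0) (norm_pos_iff.mpr hy0)
    hnx hny]

/-- On an ordered real normed space whose positive cone is closed under addition and
nonnegative scalar multiplication, and on which the norm is monotone on the cone,
the function `x ↦ -log₂ ‖x‖` is `1`-convex on `X⁺ \ {0}`. -/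
theorem stmt_3 {X : Type*} [NormedAddCommGroup X] [NormedSpace ℝ X] [PartialOrder X]
    (hadd : ∀ x y : X, 0 ≤ x → 0 ≤ y → 0 ≤ x + y)
    (hsmul : ∀ (t : ℝ) (x : X), 0 ≤ t → 0 ≤ x → 0 ≤ t • x)
    (hnorm : ∀ x y : X, 0 ≤ x → 0 ≤ y → ‖x‖ ≤ ‖x + y‖) :
    ∀ x y : X, 0 ≤ x → x ≠ 0 → 0 ≤ y → y ≠ 0 → ∀ t : ℝ, 0 ≤ t → t ≤ 1 →
      -Real.logb 2 ‖t • x + (1 - t) • y‖ ≤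
        -(t * Real.logb 2 ‖x‖) - (1 - t) * Real.logb 2 ‖y‖ + 1 :=
  stmt_3_general hsmul hnorm
end

section
/- Let X be a real normed space equipped with a partial order whose positive cone X⁺ = {x ∈ X : x ≥ 0} is closed under addition and under multiplication by nonnegative scalars, and suppose that ‖x‖ ≤ ‖x + y‖ whenever x, y ∈ X⁺. If X⁺ contains a sequence (u_n) with ‖u_n‖ = 1 for all n and u_n → 0 weakly, then for every convex function g defined on B_X⁺ \ {0} = {x ∈ X⁺ : 0 < ‖x‖ ≤ 1} one has sup_{x ∈ B_X⁺ \ {0}} | −log₂‖x‖ − g(x) | = ∞. -/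
/-!
If `|-log₂ ‖x‖ - g x| ≤ C` on the punctured positive unit ball, then `g ≤ C` on the unit
vectors `u n`, hence, by the maximum principle for convex functions, on their convex hull.
There `-log₂ ‖v‖ ≤ g v + C ≤ 2C`, i.e. `‖v‖ ≥ 2 ^ (-2C)`. But a weakly null sequence has `0`
in the norm closure of its convex hull (Mazur), a contradiction.
-/

open Set Filter Topology

theorem mem_closure_convexHull_range_of_weakly_tendsto {ι E : Type*} [TopologicalSpace E]
    [AddCommGroup E] [IsTopologicalAddGroup E] [Module ℝ E] [ContinuousSMul ℝ E]
    [LocallyConvexSpace ℝ E] {l : Filter ι} [l.NeBot] {u : ι → E} {x : E}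
    (hu : ∀ φ : E →L[ℝ] ℝ, Tendsto (fun n => φ (u n)) l (𝓝 (φ x))) :
    x ∈ closure (convexHull ℝ (range u)) := by
  by_contra hx
  obtain ⟨φ, s, hφs, hsx⟩ :=
    geometric_hahn_banach_closed_point (convex_convexHull ℝ _).closure isClosed_closure hx
  obtain ⟨n, hn⟩ := ((hu φ).eventually (eventually_gt_nhds hsx)).exists
  exact (hφs _ (subset_closure (subset_convexHull ℝ _ ⟨n, rfl⟩))).not_gt hn

theorem convexOn_of_le_smul_add_one_sub_smul {E : Type*} [AddCommGroup E] [Module ℝ E]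
    {s : Set E} {g : E → ℝ} (hs : Convex ℝ s)
    (hg : ∀ x ∈ s, ∀ y ∈ s, ∀ t : ℝ, 0 ≤ t → t ≤ 1 →
      g (t • x + (1 - t) • y) ≤ t * g x + (1 - t) * g y) :
    ConvexOn ℝ s g := by
  refine ⟨hs, fun x hx y hy a b ha hb hab => ?_⟩
  obtain rfl : b = 1 - a := by linarith
  exact hg x hx y hy a ha (by linarith)

section OrderedCone

variable {X : Type*} [NormedAddCommGroup X] [NormedSpace ℝ X] [PartialOrder X]

theorem convex_setOf_nonneg_ne_zero
    (hadd : ∀ x y : X, 0 ≤ x → 0 ≤ y → 0 ≤ x + y)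
    (hsmul : ∀ (t : ℝ) (x : X), 0 ≤ t → 0 ≤ x → 0 ≤ t • x)
    (hnorm : ∀ x y : X, 0 ≤ x → 0 ≤ y → ‖x‖ ≤ ‖x + y‖) :
    Convex ℝ {x : X | 0 ≤ x ∧ x ≠ 0} := by
  rintro x ⟨hx₀, hx⟩ y ⟨hy₀, hy⟩ a b ha hb hab
  have hax := hsmul a x ha hx₀
  have hby := hsmul b y hb hy₀
  refine ⟨hadd _ _ hax hby, ?_⟩
  rcases ha.eq_or_lt with rfl | ha
  · simpa [show b = 1 by linarith] using hy
  · rw [← norm_pos_iff]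
    exact (norm_pos_iff.2 (smul_ne_zero ha.ne' hx)).trans_le (hnorm _ _ hax hby)

theorem convex_setOf_nonneg_ne_zero_norm_le_one
    (hadd : ∀ x y : X, 0 ≤ x → 0 ≤ y → 0 ≤ x + y)
    (hsmul : ∀ (t : ℝ) (x : X), 0 ≤ t → 0 ≤ x → 0 ≤ t • x)
    (hnorm : ∀ x y : X, 0 ≤ x → 0 ≤ y → ‖x‖ ≤ ‖x + y‖) :
    Convex ℝ {x : X | 0 ≤ x ∧ x ≠ 0 ∧ ‖x‖ ≤ 1} := by
  convert (convex_setOf_nonneg_ne_zero hadd hsmul hnorm).inter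
    (convex_closedBall (0 : X) 1) using 1
  ext x
  simp [and_assoc]

end OrderedCone

/-- On an ordered real normed space whose positive cone is closed under addition and
nonnegative scalar multiplication, with monotone norm on the cone: if the cone contains
a weakly null normalized sequence, then `x ↦ -log₂ ‖x‖` is at infinite uniform distance
from every convex function on the punctured positive part of the unit ball. -/
theorem stmt_4 {X : Type*} [NormedAddCommGroup X] [NormedSpace ℝ X] [PartialOrder X]
    (hadd : ∀ x y : X, 0 ≤ x → 0 ≤ y → 0 ≤ x + y)
    (hsmul : ∀ (t : ℝ) (x : X), 0 ≤ t → 0 ≤ x → 0 ≤ t • x)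
    (hnorm : ∀ x y : X, 0 ≤ x → 0 ≤ y → ‖x‖ ≤ ‖x + y‖)
    (u : ℕ → X) (hu_pos : ∀ n, 0 ≤ u n) (hu_norm : ∀ n, ‖u n‖ = 1)
    (hu_weak : ∀ φ : X →L[ℝ] ℝ,
      Filter.Tendsto (fun n => φ (u n)) Filter.atTop (nhds 0)) :
    ∀ g : X → ℝ,
      (∀ x, (0 ≤ x ∧ x ≠ 0 ∧ ‖x‖ ≤ 1) → ∀ y, (0 ≤ y ∧ y ≠ 0 ∧ ‖y‖ ≤ 1) →
        ∀ t : ℝ, 0 ≤ t → t ≤ 1 →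
          g (t • x + (1 - t) • y) ≤ t * g x + (1 - t) * g y) →
      ∀ C : ℝ, ∃ x : X, (0 ≤ x ∧ x ≠ 0 ∧ ‖x‖ ≤ 1) ∧
        C < |(-Real.logb 2 ‖x‖) - g x| := by
  intro g hg C
  by_contra! hC
  set S : Set X := {x | 0 ≤ x ∧ x ≠ 0 ∧ ‖x‖ ≤ 1}
  have hS : Convex ℝ S := convex_setOf_nonneg_ne_zero_norm_le_one hadd hsmul hnorm
  have hgS : ConvexOn ℝ S g := convexOn_of_le_smul_add_one_sub_smul hS hg
  have hu_S : range u ⊆ S := by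
    rintro _ ⟨n, rfl⟩
    exact ⟨hu_pos n, norm_ne_zero_iff.1 (by simp [hu_norm]), (hu_norm n).le⟩
  have hg_u (n : ℕ) : g (u n) ≤ C := by
    have h := hC (u n) (hu_S ⟨n, rfl⟩)
    rw [hu_norm, Real.logb_one] at h
    linarith [(abs_le.1 h).1]
  have h_far : convexHull ℝ (range u) ⊆ {v | (2 : ℝ) ^ (-(2 * C)) ≤ ‖v‖} := by
    intro v hv
    obtain ⟨_, ⟨n, rfl⟩, hvn⟩ := hgS.exists_ge_of_mem_convexHull hu_S hv
    have hvS : v ∈ S := hS.convexHull_subset_iff.2 hu_S hv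
    have h := (abs_le.1 (hC v hvS)).2
    exact (Real.le_logb_iff_rpow_le one_lt_two (norm_pos_iff.2 hvS.2.1)).1
      (by linarith [hg_u n])
  have h_zero : (0 : X) ∈ closure (convexHull ℝ (range u)) :=
    mem_closure_convexHull_range_of_weakly_tendsto (by simpa using hu_weak)
  have h_norm : (2 : ℝ) ^ (-(2 * C)) ≤ ‖(0 : X)‖ :=
    closure_minimal h_far (isClosed_le continuous_const continuous_norm) h_zero
  rw [norm_zero] at h_norm
  linarith [Real.rpow_pos_of_pos two_pos (-(2 * C))]
end

section
/- Let Δ∞ be the infinite-dimensional simplex in real ℓ¹ and define h : Δ∞ → ℝ by h(x) = −log₂(max_n x_n) (the maximum is attained since x_n → 0 and some x_n > 0). Then h is 1-convex on Δ∞, and for every convex function g : Δ∞ → ℝ one has sup_{x ∈ Δ∞} |h(x) − g(x)| = ∞. -/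
open scoped BigOperators
open scoped ENNReal

noncomputable section AuxStmt5

namespace AuxStmt5

abbrev E1 := lp (fun _ : ℕ => ℝ) 1

lemma mem_unif (s : Finset ℕ) :
    Memℓp (fun i : ℕ => if i ∈ s then ((s.card : ℝ))⁻¹ else 0) (1 : ℝ≥0∞) := by
  apply Memℓp.of_exponent_ge (q := 0)
  · apply memℓp_zero
    apply Set.Finite.subset s.finite_toSet
    intro i hi
    simp only [Set.mem_setOf_eq] at hi
    by_contra hx
    exact hi (if_neg (by simpa using hx))
  · exact zero_le_one

def unif (s : Finset ℕ) : E1 :=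
  ⟨fun i => if i ∈ s then ((s.card : ℝ))⁻¹ else 0, mem_unif s⟩

lemma unif_apply (s : Finset ℕ) (i : ℕ) :
    unif s i = if i ∈ s then ((s.card : ℝ))⁻¹ else 0 := rfl

lemma unif_tsum (s : Finset ℕ) (hs : s.Nonempty) : ∑' i, unif s i = 1 := by
  rw [tsum_eq_sum (s := s) (by intro i hi; simp [unif_apply, hi])]
  have hc : (s.card : ℝ) ≠ 0 := Nat.cast_ne_zero.mpr hs.card_pos.ne'
  simp only [unif_apply]
  rw [Finset.sum_congr rfl (fun i hi => if_pos hi), Finset.sum_const, nsmul_eq_mul,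
    mul_inv_cancel₀ hc]

lemma simplex_summable {x : E1} (hx : ∀ i, 0 ≤ x i) : Summable fun i => x i := by
  have := (Memℓp.summable (by norm_num) (lp.memℓp x))
  refine this.congr fun i => ?_
  rw [ENNReal.toReal_one, Real.rpow_one, Real.norm_eq_abs, abs_of_nonneg (hx i)]

lemma simplex_le_one {x : E1} (hx : x ∈ simplexL1) (i : ℕ) : x i ≤ 1 := by
  rw [← hx.2]
  exact Summable.le_tsum (simplex_summable hx.1) i (fun j _ => hx.1 j)

lemma simplex_bdd {x : E1} (hx : x ∈ simplexL1) :
    BddAbove (Set.range fun i => x i) := by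
  refine ⟨1, ?_⟩
  rintro r ⟨i, rfl⟩
  exact simplex_le_one hx i

lemma simplex_sup_pos {x : E1} (hx : x ∈ simplexL1) : 0 < ⨆ i, x i := by
  obtain ⟨j, hj⟩ : ∃ j, 0 < x j := by
    by_contra hc
    push_neg at hc
    have hz : ∀ i, x i = 0 := fun i => le_antisymm (hc i) (hx.1 i)
    have h2 := hx.2
    rw [tsum_congr hz, tsum_zero] at h2
    norm_num at h2
  exact lt_of_lt_of_le hj (le_ciSup (simplex_bdd hx) j)

lemma simplex_sup_le_one {x : E1} (hx : x ∈ simplexL1) : ⨆ i, x i ≤ 1 :=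
  ciSup_le fun i => simplex_le_one hx i

lemma unif_mem (s : Finset ℕ) (hs : s.Nonempty) : unif s ∈ simplexL1 := by
  constructor
  · intro i
    rw [unif_apply]
    split <;> positivity
  · exact unif_tsum s hs

lemma unif_sup (s : Finset ℕ) (hs : s.Nonempty) : (⨆ i, unif s i) = ((s.card : ℝ))⁻¹ := by
  obtain ⟨j, hj⟩ := hs
  refine le_antisymm (ciSup_le fun i => ?_) ?_
  · rw [unif_apply]
    split
    · exact le_rfl
    · positivity
  · have := le_ciSup (simplex_bdd (unif_mem s ⟨j, hj⟩)) j
    rwa [unif_apply, if_pos hj] at this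

lemma unif_combine {s t : Finset ℕ} (hd : Disjoint s t) (hcard : s.card = t.card)
    (hs : s.Nonempty) :
    (2⁻¹ : ℝ) • unif s + (2⁻¹ : ℝ) • unif t = unif (s ∪ t) := by
  apply Subtype.ext
  have h1 : (⇑((2⁻¹ : ℝ) • unif s + (2⁻¹ : ℝ) • unif t) : ℕ → ℝ)
      = (2⁻¹ : ℝ) • ⇑(unif s) + (2⁻¹ : ℝ) • ⇑(unif t) := by
    rw [lp.coeFn_add, lp.coeFn_smul, lp.coeFn_smul]
  funext i
  have h2 : ((2⁻¹ : ℝ) • unif s + (2⁻¹ : ℝ) • unif t) i = 2⁻¹ * unif s i + 2⁻¹ * unif t i := by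
    rw [show ((2⁻¹ : ℝ) • unif s + (2⁻¹ : ℝ) • unif t : E1) i
        = (⇑((2⁻¹ : ℝ) • unif s + (2⁻¹ : ℝ) • unif t) : ℕ → ℝ) i from rfl, h1]
    simp
  show ((2⁻¹ : ℝ) • unif s + (2⁻¹ : ℝ) • unif t) i = unif (s ∪ t) i
  rw [h2, unif_apply, unif_apply, unif_apply,
    Finset.card_union_of_disjoint hd, ← hcard]
  have hc : (s.card : ℝ) ≠ 0 := Nat.cast_ne_zero.mpr hs.card_pos.ne'
  by_cases his : i ∈ s
  · rw [if_pos his, if_neg (Finset.disjoint_left.mp hd his), if_pos (Finset.mem_union_left _ his)]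
    push_cast
    field_simp
    ring
  · by_cases hit : i ∈ t
    · rw [if_neg his, if_pos hit, if_pos (Finset.mem_union_right _ hit)]
      push_cast
      field_simp
      ring
    · rw [if_neg his, if_neg hit, if_neg (by simp [his, hit])]
      ring

lemma comb_apply (a b : ℝ) (x y : E1) (i : ℕ) :
    (a • x + b • y) i = a * x i + b * y i := by
  have h1 : (⇑(a • x + b • y) : ℕ → ℝ) = a • ⇑x + b • ⇑y := by
    rw [lp.coeFn_add, lp.coeFn_smul, lp.coeFn_smul]
  rw [show ((a • x + b • y : E1) i) = (⇑(a • x + b • y) : ℕ → ℝ) i from rfl, h1]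
  simp

lemma comb_mem {x y : E1} (hx : x ∈ simplexL1) (hy : y ∈ simplexL1) {t : ℝ}
    (ht0 : 0 ≤ t) (ht1 : t ≤ 1) : t • x + (1 - t) • y ∈ simplexL1 := by
  constructor
  · intro i
    rw [comb_apply]
    have := hx.1 i; have := hy.1 i
    nlinarith
  · have hsx := simplex_summable hx.1
    have hsy := simplex_summable hy.1
    have : ∑' i, (t • x + (1 - t) • y) i = ∑' i, (t * x i + (1 - t) * y i) :=
      tsum_congr fun i => comb_apply _ _ _ _ i
    rw [this, Summable.tsum_add (hsx.mul_left t) (hsy.mul_left (1 - t)), tsum_mul_left, tsum_mul_left,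
      hx.2, hy.2]
    ring

lemma mul_ciSup_le {f : ℕ → ℝ} {t M : ℝ} (ht : 0 ≤ t) (hM : 0 ≤ M)
    (hf : ∀ i, t * f i ≤ M) : t * ⨆ i, f i ≤ M := by
  rcases eq_or_lt_of_le ht with rfl | ht
  · simpa using hM
  · have h1 : (⨆ i, f i) ≤ M / t := ciSup_le fun i => (le_div_iff₀' ht).mpr (hf i)
    calc t * ⨆ i, f i ≤ t * (M / t) := by
          exact mul_le_mul_of_nonneg_left h1 ht.le
      _ = M := by field_simp

def blk (k j : ℕ) : Finset ℕ := Finset.Ico (j * 2 ^ k) ((j + 1) * 2 ^ k)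

lemma blk_card (k j : ℕ) : (blk k j).card = 2 ^ k := by
  simp [blk, Nat.card_Ico, add_mul]

lemma blk_nonempty (k j : ℕ) : (blk k j).Nonempty := by
  rw [blk, Finset.nonempty_Ico]
  have h2 : 0 < 2 ^ k := Nat.pow_pos (by norm_num)
  exact (Nat.mul_lt_mul_right h2).mpr (Nat.lt_succ_self j)

lemma blk_split (k j : ℕ) : blk k (2 * j) ∪ blk k (2 * j + 1) = blk (k + 1) j := by
  have e1 : 2 * j * 2 ^ k = j * 2 ^ (k + 1) := by ring
  have e2 : (2 * j + 1 + 1) * 2 ^ k = (j + 1) * 2 ^ (k + 1) := by ring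
  rw [blk, blk, blk, Finset.Ico_union_Ico_eq_Ico
    (Nat.mul_le_mul_right _ (by omega)) (Nat.mul_le_mul_right _ (by omega)), e1, e2]

lemma blk_disj (k j : ℕ) : Disjoint (blk k (2 * j)) (blk k (2 * j + 1)) := by
  rw [blk, blk, show (2 * j + 1) * 2 ^ k = (2 * j + 1) * 2 ^ k from rfl]
  exact Finset.Ico_disjoint_Ico_consecutive _ _ _

end AuxStmt5

end AuxStmt5

/-- The function `x ↦ -log₂ (max_n x_n)` is `1`-convex on the infinite-dimensional
simplex of `ℓ¹`, but at infinite uniform distance from every convex function there. -/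
theorem stmt_5 (h : lp (fun _ : ℕ => ℝ) 1 → ℝ)
    (hdef : ∀ x : lp (fun _ : ℕ => ℝ) 1, h x = -Real.logb 2 (⨆ i, x i)) :
    (∀ x ∈ simplexL1, ∀ y ∈ simplexL1, ∀ t : ℝ, 0 ≤ t → t ≤ 1 →
      h (t • x + (1 - t) • y) ≤ t * h x + (1 - t) * h y + 1) ∧
    (∀ g : lp (fun _ : ℕ => ℝ) 1 → ℝ,
      (∀ x ∈ simplexL1, ∀ y ∈ simplexL1, ∀ t : ℝ, 0 ≤ t → t ≤ 1 →
        g (t • x + (1 - t) • y) ≤ t * g x + (1 - t) * g y) →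
      ∀ C : ℝ, ∃ x ∈ simplexL1, C < |h x - g x|) := by
  open AuxStmt5 in
  constructor
  · -- 1-convexity
    intro x hx y hy t ht0 ht1
    rcases eq_or_lt_of_le ht0 with rfl | ht0'
    · rw [zero_smul, zero_add, sub_zero, one_smul]
      linarith
    rcases eq_or_lt_of_le ht1 with rfl | ht1'
    · rw [one_smul, sub_self, zero_smul, add_zero]
      linarith
    have hz := comb_mem hx hy ht0 ht1
    have ha := simplex_sup_pos hx
    have hb := simplex_sup_pos hy
    have hM := simplex_sup_pos hz
    set a := ⨆ i, x i with ha_def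
    set b := ⨆ i, y i with hb_def
    set M := ⨆ i, (t • x + (1 - t) • y) i with hM_def
    have hta : t * a ≤ M := by
      refine mul_ciSup_le ht0 hM.le fun i => ?_
      refine le_trans ?_ (le_ciSup (simplex_bdd hz) i)
      rw [comb_apply]
      have := mul_nonneg (by linarith : (0:ℝ) ≤ 1 - t) (hy.1 i)
      linarith
    have htb : (1 - t) * b ≤ M := by
      refine mul_ciSup_le (by linarith) hM.le fun i => ?_
      refine le_trans ?_ (le_ciSup (simplex_bdd hz) i)
      rw [comb_apply]
      have := mul_nonneg ht0 (hx.1 i)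
      linarith
    have hA : t * Real.logb 2 a ≤ t * (Real.logb 2 M - Real.logb 2 t) := by
      refine mul_le_mul_of_nonneg_left ?_ ht0
      have h1 : a ≤ M / t := (le_div_iff₀' ht0').mpr hta
      calc Real.logb 2 a ≤ Real.logb 2 (M / t) :=
            Real.logb_le_logb_of_le one_lt_two ha h1
        _ = Real.logb 2 M - Real.logb 2 t := Real.logb_div hM.ne' ht0'.ne'
    have hB : (1 - t) * Real.logb 2 b ≤ (1 - t) * (Real.logb 2 M - Real.logb 2 (1 - t)) := by
      refine mul_le_mul_of_nonneg_left ?_ (by linarith)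
      have h1 : b ≤ M / (1 - t) := (le_div_iff₀' (by linarith)).mpr htb
      calc Real.logb 2 b ≤ Real.logb 2 (M / (1 - t)) :=
            Real.logb_le_logb_of_le one_lt_two hb h1
        _ = Real.logb 2 M - Real.logb 2 (1 - t) :=
            Real.logb_div hM.ne' (by linarith)
    have hlog2 : (0:ℝ) < Real.log 2 := Real.log_pos one_lt_two
    have hent : -(t * Real.log t + (1 - t) * Real.log (1 - t)) ≤ Real.log 2 := by
      have hbe := Real.binEntropy_le_log_two (p := t)
      rw [Real.binEntropy, Real.log_inv, Real.log_inv] at hbe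
      linarith
    have hentb : -(t * Real.logb 2 t + (1 - t) * Real.logb 2 (1 - t)) ≤ 1 := by
      have heq : t * Real.logb 2 t + (1 - t) * Real.logb 2 (1 - t)
          = (t * Real.log t + (1 - t) * Real.log (1 - t)) / Real.log 2 := by
        rw [Real.logb, Real.logb]
        field_simp
      rw [heq, ← neg_div, div_le_one hlog2]
      exact hent
    rw [hdef, hdef, hdef, ← ha_def, ← hb_def, ← hM_def]
    nlinarith [hA, hB, hentb]
  · -- infinite distance from convex functions
    intro g hg C
    by_contra hcon
    push_neg at hcon
    have key : ∀ k j, g (unif (blk k j)) ≤ C := by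
      intro k
      induction k with
      | zero =>
        intro j
        have hmem := unif_mem (blk 0 j) (blk_nonempty 0 j)
        have hh : h (unif (blk 0 j)) = 0 := by
          rw [hdef, unif_sup _ (blk_nonempty 0 j), blk_card]
          norm_num
        have habs := hcon _ hmem
        rw [abs_sub_le_iff] at habs
        linarith [habs.2]
      | succ k ih =>
        intro j
        have hu := unif_combine (blk_disj k j) (by rw [blk_card, blk_card]) (blk_nonempty _ _)
        rw [blk_split] at hu
        rw [← hu]
        have hcvx := hg _ (unif_mem _ (blk_nonempty k (2 * j)))
          _ (unif_mem _ (blk_nonempty k (2 * j + 1))) (2⁻¹ : ℝ) (by norm_num) (by norm_num)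
        rw [show (1 - 2⁻¹ : ℝ) = 2⁻¹ by norm_num] at hcvx
        have h1 := ih (2 * j)
        have h2 := ih (2 * j + 1)
        calc g ((2⁻¹ : ℝ) • unif (blk k (2 * j)) + (2⁻¹ : ℝ) • unif (blk k (2 * j + 1)))
            ≤ 2⁻¹ * g (unif (blk k (2 * j))) + 2⁻¹ * g (unif (blk k (2 * j + 1))) := hcvx
          _ ≤ C := by linarith
    obtain ⟨K, hK⟩ := exists_nat_gt (C + C)
    have hmem := unif_mem (blk K 0) (blk_nonempty K 0)
    have hh : h (unif (blk K 0)) = K := by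
      rw [hdef, unif_sup _ (blk_nonempty K 0), blk_card, Real.logb_inv]
      push_cast
      rw [Real.logb_pow, Real.logb_self_eq_one one_lt_two]
      ring
    have habs := hcon _ hmem
    rw [abs_sub_le_iff] at habs
    have := key K 0
    rw [hh] at habs
    linarith [habs.1]
end

section
/- There exists a function F : B → ℝ on the closed unit ball B of the real Banach space ℓ∞ of bounded sequences (with the supremum norm) such that F is 1-convex on B and sup_{x ∈ B} |F(x) − g(x)| = ∞ for every convex function g : B → ℝ. -/
noncomputable section

namespace S6

abbrev X : Type := lp (fun _ : ℕ => ℝ) ⊤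

def P (n : ℕ) (x : X) : ℝ := ∑ j ∈ Finset.range (2^n), x (2*j)

def f (n : ℕ) (x : X) : ℝ := (2 * P n x - P (n+1) x) / 2^(n+1)

def cell (n i : ℕ) : ℕ := 2*(2^n + i) + 1

def Q (n : ℕ) (x : X) : ℝ := ∑ i ∈ Finset.range (2^n), ((1 + x (cell n i))/2)^2

def a (n : ℕ) : ℝ := Real.log (1 + 2^n)

def β (n : ℕ) : ℝ := a n * 2^(n+2)

def G (n : ℕ) (x : X) : ℝ :=
  max 0 (a n - Real.log (1 + 2^n * Q n x) - β n * (1 - f n x))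

def F (x : X) : ℝ := (∑' n, G n x) / 2

lemma a_pos (n : ℕ) : 0 < a n := by
  have h : (0:ℝ) < 2^n := by positivity
  exact Real.log_pos (by linarith)

lemma β_nonneg (n : ℕ) : 0 ≤ β n :=
  mul_nonneg (a_pos n).le (by positivity)

lemma coord_abs_le {x : X} (h : ‖x‖ ≤ 1) (i : ℕ) : |x i| ≤ 1 := by
  have := lp.norm_apply_le_norm (E := fun _ : ℕ => ℝ) ENNReal.top_ne_zero x i
  simpa [Real.norm_eq_abs] using this.trans h

lemma Q_nonneg (n : ℕ) (x : X) : 0 ≤ Q n x :=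
  Finset.sum_nonneg fun _ _ => sq_nonneg _

lemma psi_nonneg (n : ℕ) (x : X) : 0 ≤ Real.log (1 + 2^n * Q n x) := by
  have h1 := Q_nonneg n x
  have h2 : (0:ℝ) < 2^n := by positivity
  exact Real.log_nonneg (by nlinarith)

lemma G_nonneg (n : ℕ) (x : X) : 0 ≤ G n x := le_max_left _ _

lemma sum_tag_abs_le {x : X} (h : ‖x‖ ≤ 1) (s : Finset ℕ) :
    |∑ j ∈ s, x (2*j)| ≤ s.card := by
  calc |∑ j ∈ s, x (2*j)| ≤ ∑ j ∈ s, |x (2*j)| := Finset.abs_sum_le_sum_abs _ _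
    _ ≤ ∑ _j ∈ s, (1:ℝ) := Finset.sum_le_sum fun j _ => coord_abs_le h _
    _ = s.card := by simp

lemma P_abs_le {x : X} (h : ‖x‖ ≤ 1) (n : ℕ) : |P n x| ≤ 2^n := by
  simpa [P] using sum_tag_abs_le h (Finset.range (2^n))

lemma P_sub {x : X} {m m' : ℕ} (h : m ≤ m') :
    P m' x - P m x = ∑ j ∈ Finset.Ico (2^m) (2^m'), x (2*j) := by
  have h2 : 2^m ≤ 2^m' := Nat.pow_le_pow_right (by norm_num) h
  rw [P, P, ← Finset.sum_range_add_sum_Ico _ h2]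
  ring

lemma P_sub_abs_le {x : X} (hx : ‖x‖ ≤ 1) {m m' : ℕ} (h : m ≤ m') :
    |P m' x - P m x| ≤ 2^m' - 2^m := by
  rw [P_sub h]
  have h2 : 2^m ≤ 2^m' := Nat.pow_le_pow_right (by norm_num) h
  have := sum_tag_abs_le hx (Finset.Ico (2^m) (2^m'))
  rw [Nat.card_Ico] at this
  calc |∑ j ∈ Finset.Ico (2^m) (2^m'), x (2*j)| ≤ ((2^m' - 2^m : ℕ) : ℝ) := this
    _ = 2^m' - 2^m := by push_cast [h2]; ring

lemma f_le_one {x : X} (h : ‖x‖ ≤ 1) (n : ℕ) : f n x ≤ 1 := by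
  have h1 := abs_le.1 (P_abs_le h n)
  have h2 := abs_le.1 (P_sub_abs_le h (show n ≤ n+1 by omega))
  have hp : (2:ℝ)^(n+1) = 2 * 2^n := by ring
  rw [f, div_le_one (by positivity)]
  nlinarith [h1.1, h1.2, h2.1, h2.2]

lemma alive (n : ℕ) {x : X} (hx : 0 < G n x) : 1 - f n x < ((2:ℝ)^(n+2))⁻¹ := by
  by_contra h
  push_neg at h
  have hψ := psi_nonneg n x
  have harg : 0 < a n - Real.log (1 + 2^n * Q n x) - β n * (1 - f n x) := by
    by_contra hc
    push_neg at hc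
    rw [G, max_eq_left hc] at hx; exact lt_irrefl _ hx
  have hb : β n * ((2:ℝ)^(n+2))⁻¹ ≤ β n * (1 - f n x) :=
    mul_le_mul_of_nonneg_left h (β_nonneg n)
  have e : β n * ((2:ℝ)^(n+2))⁻¹ = a n := by
    rw [β, mul_assoc, mul_inv_cancel₀ (by positivity), mul_one]
  linarith

/-- the antichain lemma: at most one gadget can be alive -/
lemma antichain {x : X} (hx : ‖x‖ ≤ 1) {n m : ℕ} (hnm : n < m)
    (hn : 1 - f n x < ((2:ℝ)^(n+2))⁻¹) (hm : 1 - f m x < ((2:ℝ)^(m+2))⁻¹) : False := by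
  have hnm1 : n + 1 ≤ m := hnm
  have hPn := (abs_le.1 (P_abs_le hx n)).2
  have hPm1 := (abs_le.1 (P_sub_abs_le hx (show m ≤ m+1 by omega))).1
  have hPnm := (abs_le.1 (P_sub_abs_le hx hnm1)).2
  have hfn : (1 - ((2:ℝ)^(n+2))⁻¹) * 2^(n+1) < 2 * P n x - P (n+1) x := by
    have h' : 1 - ((2:ℝ)^(n+2))⁻¹ < f n x := by linarith
    rw [f] at h'
    calc (1 - ((2:ℝ)^(n+2))⁻¹) * 2^(n+1)
        < (2 * P n x - P (n+1) x) / 2^(n+1) * 2^(n+1) := by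
          apply mul_lt_mul_of_pos_right h' (by positivity)
      _ = 2 * P n x - P (n+1) x := by field_simp
  have hfm : (1 - ((2:ℝ)^(m+2))⁻¹) * 2^(m+1) < 2 * P m x - P (m+1) x := by
    have h' : 1 - ((2:ℝ)^(m+2))⁻¹ < f m x := by linarith
    rw [f] at h'
    calc (1 - ((2:ℝ)^(m+2))⁻¹) * 2^(m+1)
        < (2 * P m x - P (m+1) x) / 2^(m+1) * 2^(m+1) := by
          apply mul_lt_mul_of_pos_right h' (by positivity)
      _ = 2 * P m x - P (m+1) x := by field_simp
  have en : (1 - ((2:ℝ)^(n+2))⁻¹) * 2^(n+1) = 2 * 2^n - 1/2 := by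
    have : ((2:ℝ)^(n+2)) = 2^(n+1) * 2 := by ring
    rw [this]
    have h0 : ((2:ℝ)^(n+1)) ≠ 0 := by positivity
    field_simp
    ring
  have em : (1 - ((2:ℝ)^(m+2))⁻¹) * 2^(m+1) = 2 * 2^m - 1/2 := by
    have : ((2:ℝ)^(m+2)) = 2^(m+1) * 2 := by ring
    rw [this]
    have h0 : ((2:ℝ)^(m+1)) ≠ 0 := by positivity
    field_simp
    ring
  have hn1 : (2:ℝ)^(n+1) = 2 * 2^n := by ring
  have hm1 : (2:ℝ)^(m+1) = 2 * 2^m := by ring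
  have h2n : (1:ℝ) ≤ 2^n := one_le_pow₀ (by norm_num)
  -- P (n+1) x < 1/2
  have step1 : P (n+1) x < 1/2 := by rw [en] at hfn; linarith
  -- P m x bound from below via hfm and hPm1
  have step2 : P m x > 2^m - 1/2 := by rw [em] at hfm; linarith
  -- P m x bound from above
  have step3 : P m x ≤ P (n+1) x + (2^m - 2^(n+1)) := by linarith
  linarith



/-- at most one gadget is alive on the ball -/
lemma alive_unique {x : X} (hx : ‖x‖ ≤ 1) {n m : ℕ} (hn : 0 < G n x) (hm : 0 < G m x) :
    n = m := by
  rcases lt_trichotomy n m with h | h | h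
  · exact absurd (antichain hx h (alive n hn) (alive m hm)) (by simp)
  · exact h
  · exact absurd (antichain hx h (alive m hm) (alive n hn)) (by simp)

lemma summable_G {x : X} (hx : ‖x‖ ≤ 1) : Summable (fun n => G n x) := by
  by_cases h : ∃ n, 0 < G n x
  · obtain ⟨n, hn⟩ := h
    apply summable_of_ne_finset_zero (s := {n})
    intro m hm
    simp only [Finset.mem_singleton] at hm
    rcases lt_or_eq_of_le (G_nonneg m x) with h' | h'
    · exact absurd (alive_unique hx h' hn) hm
    · exact h'.symm
  · push_neg at h
    have : (fun n => G n x) = fun _ => 0 := by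
      funext n
      exact le_antisymm (h n) (G_nonneg n x)
    rw [this]; exact summable_zero

lemma F_nonneg (x : X) : 0 ≤ F x := by
  have : 0 ≤ ∑' n, G n x := tsum_nonneg fun n => G_nonneg n x
  rw [F]; linarith

lemma G_le_two_F {x : X} (hx : ‖x‖ ≤ 1) (n : ℕ) : G n x ≤ 2 * F x := by
  have h := Summable.le_tsum (summable_G hx) n (fun m _ => G_nonneg m x)
  rw [F]; linarith

/-- entropy bound : -t log t - u log u ≤ log 2 -/
lemma ent_le (t : ℝ) (ht : 0 < t) (ht1 : t < 1) :
    -(t * Real.log t) - (1-t) * Real.log (1-t) ≤ Real.log 2 := by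
  have hu : 0 < 1 - t := by linarith
  have k1 : Real.log (1/(2*t)) ≤ 1/(2*t) - 1 := Real.log_le_sub_one_of_pos (by positivity)
  have k2 : Real.log (1/(2*(1-t))) ≤ 1/(2*(1-t)) - 1 := Real.log_le_sub_one_of_pos (by positivity)
  have e1 : Real.log (1/(2*t)) = -(Real.log 2) - Real.log t := by
    rw [one_div, Real.log_inv, Real.log_mul (by norm_num) (ne_of_gt ht)]
    ring
  have e2 : Real.log (1/(2*(1-t))) = -(Real.log 2) - Real.log (1-t) := by
    rw [one_div, Real.log_inv, Real.log_mul (by norm_num) (ne_of_gt hu)]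
    ring
  rw [e1] at k1
  rw [e2] at k2
  have k1' : t * (-(Real.log 2) - Real.log t) ≤ t * (1/(2*t) - 1) :=
    mul_le_mul_of_nonneg_left k1 ht.le
  have k2' : (1-t) * (-(Real.log 2) - Real.log (1-t)) ≤ (1-t) * (1/(2*(1-t)) - 1) :=
    mul_le_mul_of_nonneg_left k2 hu.le
  have e3 : t * (1/(2*t) - 1) = 1/2 - t := by field_simp
  have e4 : (1-t) * (1/(2*(1-t)) - 1) = 1/2 - (1-t) := by field_simp
  nlinarith [k1', k2']

/-- key scalar log inequality -/
lemma key_log (t A B : ℝ) (ht : 0 < t) (ht1 : t < 1) (hA : 0 ≤ A) (hB : 0 ≤ B) :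
    t * Real.log (1+A) + (1-t) * Real.log (1+B) ≤
      Real.log (1 + (t^2*A + (1-t)^2*B)) + 2 * Real.log 2 := by
  have hu : 0 < 1 - t := by linarith
  have s1 : Real.log (1+A) ≤ Real.log (1+t^2*A) - 2 * Real.log t := by
    have h1 : (1+A) * t^2 ≤ 1 + t^2*A := by nlinarith
    have h2 : Real.log ((1+A) * t^2) ≤ Real.log (1+t^2*A) :=
      Real.log_le_log (by positivity) h1
    rw [Real.log_mul (by positivity) (by positivity), Real.log_pow] at h2
    push_cast at h2
    linarith
  have s2 : Real.log (1+B) ≤ Real.log (1+(1-t)^2*B) - 2 * Real.log (1-t) := by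
    have h1 : (1+B) * (1-t)^2 ≤ 1 + (1-t)^2*B := by nlinarith
    have h2 : Real.log ((1+B) * (1-t)^2) ≤ Real.log (1+(1-t)^2*B) :=
      Real.log_le_log (by positivity) h1
    rw [Real.log_mul (by positivity) (by positivity), Real.log_pow] at h2
    push_cast at h2
    linarith
  have m1 : Real.log (1+t^2*A) ≤ Real.log (1 + (t^2*A + (1-t)^2*B)) :=
    Real.log_le_log (by positivity) (by nlinarith)
  have m2 : Real.log (1+(1-t)^2*B) ≤ Real.log (1 + (t^2*A + (1-t)^2*B)) :=
    Real.log_le_log (by positivity) (by nlinarith)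
  have ent := ent_le t ht ht1
  have c1 : t * Real.log (1+A) ≤ t * (Real.log (1+t^2*A) - 2*Real.log t) :=
    mul_le_mul_of_nonneg_left s1 ht.le
  have c2 : (1-t) * Real.log (1+B) ≤ (1-t) * (Real.log (1+(1-t)^2*B) - 2*Real.log (1-t)) :=
    mul_le_mul_of_nonneg_left s2 hu.le
  have c3 : t * Real.log (1+t^2*A) ≤ t * Real.log (1 + (t^2*A + (1-t)^2*B)) :=
    mul_le_mul_of_nonneg_left m1 ht.le
  have c4 : (1-t) * Real.log (1+(1-t)^2*B) ≤ (1-t) * Real.log (1 + (t^2*A + (1-t)^2*B)) :=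
    mul_le_mul_of_nonneg_left m2 hu.le
  nlinarith [c1, c2, c3, c4, ent]


lemma mix_coord (t : ℝ) (x y : X) (i : ℕ) :
    (t • x + (1-t) • y) i = t * x i + (1-t) * y i := by
  simp [lp.coeFn_add, lp.coeFn_smul]
  rfl

lemma mix_norm_le {x y : X} (hx : ‖x‖ ≤ 1) (hy : ‖y‖ ≤ 1) {t : ℝ} (ht : 0 ≤ t) (ht1 : t ≤ 1) :
    ‖t • x + (1-t) • y‖ ≤ 1 := by
  have h1 : ‖t • x‖ ≤ t := by
    calc ‖t • x‖ ≤ ‖t‖ * ‖x‖ := norm_smul_le _ _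
      _ ≤ |t| * 1 := by rw [Real.norm_eq_abs]; exact mul_le_mul_of_nonneg_left hx (abs_nonneg t)
      _ = t := by rw [abs_of_nonneg ht]; ring
  have h2 : ‖(1-t) • y‖ ≤ 1 - t := by
    calc ‖(1-t) • y‖ ≤ ‖(1-t)‖ * ‖y‖ := norm_smul_le _ _
      _ ≤ |1-t| * 1 := by rw [Real.norm_eq_abs]; exact mul_le_mul_of_nonneg_left hy (abs_nonneg _)
      _ = 1 - t := by rw [abs_of_nonneg (by linarith : (0:ℝ) ≤ 1 - t)]; ring
  calc ‖t • x + (1-t) • y‖ ≤ ‖t • x‖ + ‖(1-t) • y‖ := norm_add_le _ _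
    _ ≤ 1 := by linarith

lemma P_mix (n : ℕ) (t : ℝ) (x y : X) :
    P n (t • x + (1-t) • y) = t * P n x + (1-t) * P n y := by
  unfold P
  rw [Finset.mul_sum, Finset.mul_sum, ← Finset.sum_add_distrib]
  exact Finset.sum_congr rfl fun j _ => mix_coord t x y (2*j)

lemma f_mix (n : ℕ) (t : ℝ) (x y : X) :
    f n (t • x + (1-t) • y) = t * f n x + (1-t) * f n y := by
  unfold f
  rw [P_mix, P_mix]
  ring

lemma Q_mix_ge (n : ℕ) {t : ℝ} (ht : 0 ≤ t) (ht1 : t ≤ 1) {x y : X}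
    (hx : ‖x‖ ≤ 1) (hy : ‖y‖ ≤ 1) :
    t^2 * Q n x + (1-t)^2 * Q n y ≤ Q n (t • x + (1-t) • y) := by
  unfold Q
  rw [Finset.mul_sum, Finset.mul_sum, ← Finset.sum_add_distrib]
  apply Finset.sum_le_sum
  intro i _
  have hxc := (abs_le.1 (coord_abs_le hx (cell n i))).1
  have hyc := (abs_le.1 (coord_abs_le hy (cell n i))).1
  rw [mix_coord]
  have ha : 0 ≤ (1 + x (cell n i))/2 := by linarith
  have hb : 0 ≤ (1 + y (cell n i))/2 := by linarith
  have e : (1 + (t * x (cell n i) + (1-t) * y (cell n i)))/2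
      = t * ((1 + x (cell n i))/2) + (1-t) * ((1 + y (cell n i))/2) := by ring
  rw [e]
  nlinarith [mul_nonneg (mul_nonneg ht (by linarith : (0:ℝ) ≤ 1 - t)) (mul_nonneg ha hb)]

lemma psi_mix (n : ℕ) {t : ℝ} (ht : 0 < t) (ht1 : t < 1) {x y : X}
    (hx : ‖x‖ ≤ 1) (hy : ‖y‖ ≤ 1) :
    t * Real.log (1 + 2^n * Q n x) + (1-t) * Real.log (1 + 2^n * Q n y) ≤
      Real.log (1 + 2^n * Q n (t • x + (1-t) • y)) + 2 * Real.log 2 := by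
  have hA : 0 ≤ 2^n * Q n x := mul_nonneg (by positivity) (Q_nonneg n x)
  have hB : 0 ≤ 2^n * Q n y := mul_nonneg (by positivity) (Q_nonneg n y)
  have hkey := key_log t (2^n * Q n x) (2^n * Q n y) ht ht1 hA hB
  have hmono : Real.log (1 + (t^2*(2^n * Q n x) + (1-t)^2*(2^n * Q n y))) ≤
      Real.log (1 + 2^n * Q n (t • x + (1-t) • y)) := by
    apply Real.log_le_log (by positivity)
    have := Q_mix_ge n ht.le ht1.le hx hy
    have h2 : (0:ℝ) < 2^n := by positivity
    nlinarith
  linarith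

lemma G_mix (n : ℕ) {t : ℝ} (ht : 0 < t) (ht1 : t < 1) {x y : X}
    (hx : ‖x‖ ≤ 1) (hy : ‖y‖ ≤ 1) :
    G n (t • x + (1-t) • y) ≤ t * G n x + (1-t) * G n y + 2 * Real.log 2 := by
  have hGx := G_nonneg n x
  have hGy := G_nonneg n y
  have hlog2 : 0 < Real.log 2 := Real.log_pos (by norm_num)
  rcases le_or_gt (G n (t • x + (1-t) • y)) 0 with h | h
  · nlinarith
  · have harg : G n (t • x + (1-t) • y) =
        a n - Real.log (1 + 2^n * Q n (t • x + (1-t) • y)) - β n * (1 - f n (t • x + (1-t) • y)) := by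
      rw [G] at h ⊢
      rcases max_cases (0:ℝ) (a n - Real.log (1 + 2^n * Q n (t • x + (1-t) • y)) - β n * (1 - f n (t • x + (1-t) • y))) with ⟨e, _⟩ | ⟨e, _⟩
      · rw [e] at h; exact absurd h (lt_irrefl 0)
      · exact e
    have hpsi := psi_mix n ht ht1 hx hy
    have hf := f_mix n t x y
    have hGx' : a n - Real.log (1 + 2^n * Q n x) - β n * (1 - f n x) ≤ G n x := le_max_right _ _
    have hGy' : a n - Real.log (1 + 2^n * Q n y) - β n * (1 - f n y) ≤ G n y := le_max_right _ _
    have expand : a n - β n * (1 - (t * f n x + (1-t) * f n y)) =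
        t * (a n - β n * (1 - f n x)) + (1-t) * (a n - β n * (1 - f n y)) := by ring
    rw [harg, hf]
    nlinarith [mul_le_mul_of_nonneg_left hGx' ht.le,
      mul_le_mul_of_nonneg_left hGy' (by linarith : (0:ℝ) ≤ 1 - t)]

lemma F_one_convex {x y : X} (hx : ‖x‖ ≤ 1) (hy : ‖y‖ ≤ 1) {t : ℝ} (ht : 0 ≤ t) (ht1 : t ≤ 1) :
    F (t • x + (1-t) • y) ≤ t * F x + (1-t) * F y + 1 := by
  rcases eq_or_lt_of_le ht with h0 | h0
  · have : t • x + (1-t) • y = y := by rw [← h0]; simp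
    rw [this, ← h0]
    have := F_nonneg y
    linarith
  rcases eq_or_lt_of_le ht1 with h1 | h1
  · have : t • x + (1-t) • y = x := by rw [h1]; simp
    rw [this, h1]
    have := F_nonneg x
    linarith
  have hmix : ‖t • x + (1-t) • y‖ ≤ 1 := mix_norm_le hx hy ht ht1
  have hlog2 : Real.log 2 ≤ 1 := by
    have := Real.log_le_sub_one_of_pos (by norm_num : (0:ℝ) < 2)
    linarith
  have hFx := F_nonneg x
  have hFy := F_nonneg y
  by_cases hex : ∃ n, 0 < G n (t • x + (1-t) • y)
  · obtain ⟨n, hn⟩ := hex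
    have htsum : ∑' m, G m (t • x + (1-t) • y) = G n (t • x + (1-t) • y) := by
      apply tsum_eq_single
      intro m hm
      rcases lt_or_eq_of_le (G_nonneg m (t • x + (1-t) • y)) with h' | h'
      · exact absurd (alive_unique hmix h' hn) hm
      · exact h'.symm
    have hGm := G_mix n h0 h1 hx hy
    have h2Fx := G_le_two_F hx n
    have h2Fy := G_le_two_F hy n
    rw [F, htsum]
    nlinarith [mul_le_mul_of_nonneg_left h2Fx h0.le,
      mul_le_mul_of_nonneg_left h2Fy (by linarith : (0:ℝ) ≤ 1 - t)]
  · push_neg at hex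
    have : ∑' m, G m (t • x + (1-t) • y) = 0 := by
      have : (fun m => G m (t • x + (1-t) • y)) = fun _ => 0 := by
        funext m
        exact le_antisymm (hex m) (G_nonneg m _)
      rw [this]; exact tsum_zero
    rw [F, this]
    norm_num
    nlinarith


/-! ### The special points -/

def zf (n : ℕ) : ℕ → ℝ := fun c =>
  if c % 2 = 0 then (if c / 2 < 2^n then 1 else -1)
  else (if 2^n ≤ c / 2 ∧ c / 2 < 2^(n+1) then 2/2^n - 1 else -1)

def vf (n k : ℕ) : ℕ → ℝ := fun c =>
  if c % 2 = 0 then (if c / 2 < 2^n then 1 else -1)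
  else (if c / 2 = 2^n + k then 1 else -1)

lemma zf_abs_le (n : ℕ) (c : ℕ) : |zf n c| ≤ 1 := by
  have h1 : (1:ℝ) ≤ 2^n := one_le_pow₀ (by norm_num)
  have h2 : (0:ℝ) < 2^n := by positivity
  have h3 : (2:ℝ)/2^n ≤ 2 := by
    rw [div_le_iff₀ h2]; nlinarith
  have h4 : (0:ℝ) < 2/2^n := by positivity
  unfold zf
  split_ifs <;> rw [abs_le] <;> constructor <;> linarith

lemma vf_abs_le (n k : ℕ) (c : ℕ) : |vf n k c| ≤ 1 := by
  unfold vf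
  split_ifs <;> rw [abs_le] <;> norm_num

def mk (u : ℕ → ℝ) (hu : ∀ c, |u c| ≤ 1) : X :=
  ⟨u, memℓp_infty ⟨1, by rintro r ⟨i, rfl⟩; simpa [Real.norm_eq_abs] using hu i⟩⟩

lemma mk_coord (u : ℕ → ℝ) (hu : ∀ c, |u c| ≤ 1) (c : ℕ) : (mk u hu) c = u c := rfl

lemma mk_norm_le (u : ℕ → ℝ) (hu : ∀ c, |u c| ≤ 1) : ‖mk u hu‖ ≤ 1 := by
  rw [lp.norm_eq_ciSup]
  exact ciSup_le fun i => by simpa [Real.norm_eq_abs, mk] using hu i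

def z (n : ℕ) : X := mk (zf n) (zf_abs_le n)

def v (n k : ℕ) : X := mk (vf n k) (vf_abs_le n k)

lemma z_norm_le (n : ℕ) : ‖z n‖ ≤ 1 := mk_norm_le _ _
lemma v_norm_le (n k : ℕ) : ‖v n k‖ ≤ 1 := mk_norm_le _ _

lemma z_tag (n j : ℕ) : z n (2*j) = if j < 2^n then 1 else -1 := by
  have h0 : (2*j) % 2 = 0 := by omega
  have h1 : (2*j) / 2 = j := by omega
  show zf n (2*j) = _
  rw [zf, if_pos h0, h1]

lemma v_tag (n k j : ℕ) : v n k (2*j) = if j < 2^n then 1 else -1 := by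
  have h0 : (2*j) % 2 = 0 := by omega
  have h1 : (2*j) / 2 = j := by omega
  show vf n k (2*j) = _
  rw [vf, if_pos h0, h1]

lemma z_cell (n i : ℕ) (hi : i < 2^n) : z n (cell n i) = 2/2^n - 1 := by
  have h0 : (cell n i) % 2 = 1 := by unfold cell; omega
  have h1 : (cell n i) / 2 = 2^n + i := by unfold cell; omega
  have h2 : 2^n + i < 2^(n+1) := by
    have : 2^(n+1) = 2^n + 2^n := by ring
    omega
  show zf n (cell n i) = _
  rw [zf, if_neg (by omega), h1, if_pos ⟨Nat.le_add_right _ _, h2⟩]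

lemma v_cell (n k i : ℕ) : v n k (cell n i) = if i = k then 1 else -1 := by
  have h0 : (cell n i) % 2 = 1 := by unfold cell; omega
  have h1 : (cell n i) / 2 = 2^n + i := by unfold cell; omega
  show vf n k (cell n i) = _
  rw [vf, if_neg (by omega), h1]
  congr 1
  simp only [eq_iff_iff]
  omega

/-! ### tag computations -/

lemma P_of_tag {w : X} {n : ℕ} (htag : ∀ j, w (2*j) = if j < 2^n then (1:ℝ) else -1)
    (m : ℕ) : P m w = if m ≤ n then (2^m : ℝ) else 2^(n+1) - 2^m := by
  rcases le_or_gt m n with h | h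
  · rw [if_pos h, P]
    have hle : (2:ℕ)^m ≤ 2^n := Nat.pow_le_pow_right (by norm_num) h
    rw [Finset.sum_congr rfl (fun j hj => by
      rw [htag j, if_pos]
      exact lt_of_lt_of_le (Finset.mem_range.1 hj) hle)]
    simp
  · rw [if_neg (by omega), P]
    have hle : (2:ℕ)^n ≤ 2^m := Nat.pow_le_pow_right (by norm_num) h.le
    rw [← Finset.sum_range_add_sum_Ico _ hle]
    have e1 : ∑ j ∈ Finset.range (2^n), w (2*j) = (2^n : ℝ) := by
      rw [Finset.sum_congr rfl (fun j hj => by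
        rw [htag j, if_pos (Finset.mem_range.1 hj)])]
      simp
    have e2 : ∑ j ∈ Finset.Ico (2^n) (2^m), w (2*j) = -((2^m : ℝ) - 2^n) := by
      rw [Finset.sum_congr rfl (fun j hj => by
        rw [htag j, if_neg (by have := (Finset.mem_Ico.1 hj).1; omega)])]
      rw [Finset.sum_const, Nat.card_Ico]
      have : ((2^m - 2^n : ℕ) : ℝ) = (2^m : ℝ) - 2^n := by push_cast [hle]; ring
      simp [this]
    rw [e1, e2]
    have : ((2:ℝ))^(n+1) = 2^n + 2^n := by ring
    push_cast
    linarith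

lemma f_of_tag {w : X} {n : ℕ} (htag : ∀ j, w (2*j) = if j < 2^n then (1:ℝ) else -1) :
    f n w = 1 := by
  rw [f, P_of_tag htag, P_of_tag htag, if_pos (le_refl n), if_neg (by omega)]
  have h0 : ((2:ℝ))^(n+1) ≠ 0 := by positivity
  field_simp
  ring

lemma f_of_tag_other {w : X} {n : ℕ} (htag : ∀ j, w (2*j) = if j < 2^n then (1:ℝ) else -1)
    {m : ℕ} (hm : m ≠ n) : β m * (1 - f m w) ≥ 2 * a m := by
  have ham := a_pos m
  rcases lt_or_gt_of_ne hm with h | h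
  · -- m < n : f = 0
    have : f m w = 0 := by
      rw [f, P_of_tag htag, P_of_tag htag, if_pos h.le, if_pos (by omega)]
      have : ((2:ℝ))^(m+1) = 2 * 2^m := by ring
      rw [this]
      field_simp
      norm_num
    rw [this, β]
    have : (4:ℝ) ≤ 2^(m+2) := by
      calc (4:ℝ) = 2^2 := by norm_num
      _ ≤ 2^(m+2) := by
        apply pow_le_pow_right₀ (by norm_num)
        omega
    nlinarith
  · -- m > n : f = 2^(n+1)/2^(m+1) ≤ 1/2
    have hf : f m w = 2^(n+1)/2^(m+1) := by
      rw [f, P_of_tag htag, P_of_tag htag, if_neg (by omega), if_neg (by omega)]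
      have h0 : ((2:ℝ))^(m+1) ≠ 0 := by positivity
      have e : 2 * ((2:ℝ)^(n+1) - 2^m) - (2^(n+1) - 2^(m+1)) = 2^(n+1) := by ring
      rw [e]
    have hle : ((2:ℝ))^(n+1) ≤ 2^m := by
      apply pow_le_pow_right₀ (by norm_num)
      omega
    have hm1 : ((2:ℝ))^(m+1) = 2 * 2^m := by ring
    have hmpos : (0:ℝ) < 2^m := by positivity
    have hfhalf : f m w ≤ 1/2 := by
      rw [hf, hm1, div_le_iff₀ (by positivity)]
      nlinarith
    have hβ : β m = a m * 2^(m+2) := rfl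
    have h4 : (4:ℝ) ≤ 2^(m+2) := by
      calc (4:ℝ) = 2^2 := by norm_num
      _ ≤ 2^(m+2) := by
        apply pow_le_pow_right₀ (by norm_num)
        omega
    have hb1 : β m * (1/2) ≤ β m * (1 - f m w) :=
      mul_le_mul_of_nonneg_left (by linarith) (β_nonneg m)
    have hb2 : 2 * a m ≤ β m * (1/2) := by
      rw [hβ]
      nlinarith [mul_nonneg ham.le (by linarith : (0:ℝ) ≤ 2^(m+2) - 4)]
    linarith

lemma G_of_tag_other {w : X} {n : ℕ} (htag : ∀ j, w (2*j) = if j < 2^n then (1:ℝ) else -1)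
    {m : ℕ} (hm : m ≠ n) : G m w = 0 := by
  have h1 := f_of_tag_other htag hm
  have h2 := psi_nonneg m w
  have h3 := a_pos m
  rw [G, max_eq_left]
  nlinarith

lemma z_htag (n : ℕ) : ∀ j, z n (2*j) = if j < 2^n then (1:ℝ) else -1 := z_tag n
lemma v_htag (n k : ℕ) : ∀ j, v n k (2*j) = if j < 2^n then (1:ℝ) else -1 := v_tag n k

/-! ### values of F at the special points -/

lemma Q_z (n : ℕ) : Q n (z n) = ((2:ℝ)^n)⁻¹ := by
  rw [Q]
  rw [Finset.sum_congr rfl (fun i hi => by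
    rw [z_cell n i (Finset.mem_range.1 hi)])]
  rw [Finset.sum_const, Finset.card_range]
  have h0 : ((2:ℝ))^n ≠ 0 := by positivity
  have e : ((1 + (2/(2:ℝ)^n - 1))/2)^2 = (((2:ℝ)^n)⁻¹)^2 := by
    congr 1
    field_simp
    ring
  rw [e]
  field_simp
  ring
  rw [← mul_pow, inv_mul_cancel₀ (by norm_num), one_pow]

lemma Q_v (n k : ℕ) (hk : k < 2^n) : Q n (v n k) = 1 := by
  rw [Q]
  have e : ∀ i, ((1 + (v n k) (cell n i))/2)^2 = if i = k then (1:ℝ) else 0 := by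
    intro i
    rw [v_cell n k i]
    split_ifs <;> norm_num
  rw [Finset.sum_congr rfl (fun i _ => e i)]
  rw [Finset.sum_ite_eq' (Finset.range (2^n)) k (fun _ => (1:ℝ))]
  rw [if_pos (Finset.mem_range.2 hk)]

lemma F_z (n : ℕ) : F (z n) = max 0 (a n - Real.log 2) / 2 := by
  have htsum : ∑' m, G m (z n) = G n (z n) :=
    tsum_eq_single n (fun m hm => G_of_tag_other (z_htag n) hm)
  rw [F, htsum, G, f_of_tag (z_htag n), Q_z]
  have h0 : ((2:ℝ))^n ≠ 0 := by positivity
  have e : (1 + (2:ℝ)^n * ((2:ℝ)^n)⁻¹) = 2 := by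
    rw [mul_inv_cancel₀ h0]
    norm_num
  rw [e]
  norm_num

lemma F_v (n k : ℕ) (hk : k < 2^n) : F (v n k) = 0 := by
  have htsum : ∑' m, G m (v n k) = G n (v n k) :=
    tsum_eq_single n (fun m hm => G_of_tag_other (v_htag n k) hm)
  rw [F, htsum, G, f_of_tag (v_htag n k), Q_v n k hk]
  have e : (1 + (2:ℝ)^n * 1) = 1 + 2^n := by ring
  rw [e]
  simp [a]


/-! ### the averaging identity -/

lemma z_eq_avg (n : ℕ) : z n = ((2:ℝ)^n)⁻¹ • ∑ k ∈ Finset.range (2^n), v n k := by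
  apply lp.ext
  funext c
  have hsum : (((∑ k ∈ Finset.range (2^n), v n k : X)) : ℕ → ℝ) c
      = ∑ k ∈ Finset.range (2^n), (v n k) c := by
    rw [lp.coeFn_sum]
    simp
  have hsm : ((((2:ℝ)^n)⁻¹ • ∑ k ∈ Finset.range (2^n), v n k : X) : ℕ → ℝ) c
      = ((2:ℝ)^n)⁻¹ * ((∑ k ∈ Finset.range (2^n), v n k : X) : ℕ → ℝ) c := by
    rw [lp.coeFn_smul]
    simp
    rfl
  have h2n : ((2:ℝ))^n ≠ 0 := by positivity
  rw [hsm, hsum]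
  show zf n c = _
  rcases Nat.even_or_odd c with he | ho
  · -- tag coordinate
    have h0 : c % 2 = 0 := Nat.even_iff.1 he
    have e : ∀ k ∈ Finset.range (2^n), (v n k) c = zf n c := by
      intro k _
      show vf n k c = zf n c
      rw [vf, zf, if_pos h0, if_pos h0]
    rw [Finset.sum_congr rfl e, Finset.sum_const, Finset.card_range, nsmul_eq_mul]
    push_cast
    rw [← mul_assoc, inv_mul_cancel₀ h2n, one_mul]
  · -- cell coordinate
    have h0 : c % 2 = 1 := Nat.odd_iff.1 ho
    set j := c / 2 with hj
    by_cases hr : 2^n ≤ j ∧ j < 2^(n+1)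
    · -- in block n
      obtain ⟨hr1, hr2⟩ := hr
      set k0 := j - 2^n with hk0
      have hk0lt : k0 < 2^n := by
        have : (2:ℕ)^(n+1) = 2^n + 2^n := by ring
        omega
      have e : ∀ k ∈ Finset.range (2^n), (v n k) c = if k = k0 then (1:ℝ) else -1 := by
        intro k _
        show vf n k c = _
        rw [vf, if_neg (by omega)]
        congr 1
        simp only [eq_iff_iff]
        omega
      rw [Finset.sum_congr rfl e]
      have e2 : ∀ k, (if k = k0 then (1:ℝ) else -1) = (if k = k0 then (2:ℝ) else 0) - 1 := by
        intro k; split_ifs <;> norm_num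
      rw [Finset.sum_congr rfl (fun k _ => e2 k), Finset.sum_sub_distrib]
      rw [Finset.sum_ite_eq' (Finset.range (2^n)) k0 (fun _ => (2:ℝ))]
      rw [if_pos (Finset.mem_range.2 hk0lt)]
      rw [Finset.sum_const, Finset.card_range, nsmul_eq_mul, mul_one]
      have hz : zf n c = 2/2^n - 1 := by
        rw [zf, if_neg (by omega), if_pos ⟨hr1, hr2⟩]
      rw [hz]
      push_cast
      field_simp
    · -- outside block n
      have e : ∀ k ∈ Finset.range (2^n), (v n k) c = (-1:ℝ) := by
        intro k hk
        show vf n k c = _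
        rw [vf, if_neg (by omega), if_neg ?_]
        have hk' := Finset.mem_range.1 hk
        have : (2:ℕ)^(n+1) = 2^n + 2^n := by ring
        omega
      rw [Finset.sum_congr rfl e, Finset.sum_const, Finset.card_range, nsmul_eq_mul, mul_neg_one]
      have hz : zf n c = -1 := by
        rw [zf, if_neg (by omega), if_neg hr]
      rw [hz]
      push_cast
      field_simp

/-! ### finite Jensen -/

lemma jensen (g : X → ℝ) (C : ℝ)
    (hg : ∀ x : X, ‖x‖ ≤ 1 → ∀ y : X, ‖y‖ ≤ 1 → ∀ t : ℝ, 0 ≤ t → t ≤ 1 →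
      g (t • x + (1 - t) • y) ≤ t * g x + (1 - t) * g y) :
    ∀ (m : ℕ) (w : ℕ → X), (∀ k, k < 2^m → ‖w k‖ ≤ 1 ∧ g (w k) ≤ C) →
      ‖((2:ℝ)^m)⁻¹ • ∑ k ∈ Finset.range (2^m), w k‖ ≤ 1 ∧
        g (((2:ℝ)^m)⁻¹ • ∑ k ∈ Finset.range (2^m), w k) ≤ C := by
  intro m
  induction m with
  | zero =>
    intro w hw
    have : ((2:ℝ)^0)⁻¹ • ∑ k ∈ Finset.range (2^0), w k = w 0 := by
      norm_num
    rw [this]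
    exact hw 0 (by norm_num)
  | succ m ih =>
    intro w hw
    have hpow : (2:ℕ)^(m+1) = 2^m + 2^m := by ring
    have hIH₁ := ih w (fun k hk => hw k (by omega))
    have hIH₂ := ih (fun k => w (2^m + k)) (fun k hk => hw (2^m + k) (by omega))
    have hsplit : ∑ k ∈ Finset.range (2^(m+1)), w k
        = (∑ k ∈ Finset.range (2^m), w k) + ∑ k ∈ Finset.range (2^m), w (2^m + k) := by
      have hle : (2:ℕ)^m ≤ 2^(m+1) := Nat.pow_le_pow_right (by norm_num) (by omega)
      rw [← Finset.sum_range_add_sum_Ico _ hle]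
      congr 1
      rw [Finset.sum_Ico_eq_sum_range]
      have h2 : (2:ℕ)^(m+1) - 2^m = 2^m := by omega
      rw [h2]
    have hc : ((2:ℝ)^(m+1))⁻¹ = (1/2 : ℝ) * ((2:ℝ)^m)⁻¹ := by
      rw [show ((2:ℝ))^(m+1) = 2 * 2^m by ring, mul_inv]
      ring
    have hcomb : ((2:ℝ)^(m+1))⁻¹ • ∑ k ∈ Finset.range (2^(m+1)), w k
        = (1/2 : ℝ) • (((2:ℝ)^m)⁻¹ • ∑ k ∈ Finset.range (2^m), w k)
          + (1 - (1/2 : ℝ)) • (((2:ℝ)^m)⁻¹ • ∑ k ∈ Finset.range (2^m), w (2^m + k)) := by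
      rw [hsplit, smul_add, hc, smul_smul, smul_smul]
      norm_num
    rw [hcomb]
    constructor
    · exact mix_norm_le hIH₁.1 hIH₂.1 (by norm_num) (by norm_num)
    · calc g ((1/2 : ℝ) • (((2:ℝ)^m)⁻¹ • ∑ k ∈ Finset.range (2^m), w k)
            + (1 - (1/2 : ℝ)) • (((2:ℝ)^m)⁻¹ • ∑ k ∈ Finset.range (2^m), w (2^m + k)))
          ≤ (1/2 : ℝ) * g (((2:ℝ)^m)⁻¹ • ∑ k ∈ Finset.range (2^m), w k)
            + (1 - (1/2 : ℝ)) * g (((2:ℝ)^m)⁻¹ • ∑ k ∈ Finset.range (2^m), w (2^m + k)) :=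
            hg _ hIH₁.1 _ hIH₂.1 (1/2) (by norm_num) (by norm_num)
        _ ≤ C := by nlinarith [hIH₁.2, hIH₂.2]


lemma main2 (g : X → ℝ)
    (hg : ∀ x : X, ‖x‖ ≤ 1 → ∀ y : X, ‖y‖ ≤ 1 → ∀ t : ℝ, 0 ≤ t → t ≤ 1 →
      g (t • x + (1 - t) • y) ≤ t * g x + (1 - t) * g y)
    (C : ℝ) : ∃ x : X, ‖x‖ ≤ 1 ∧ C < |F x - g x| := by
  set C' := max C 0 with hC'
  have hC'0 : 0 ≤ C' := le_max_right _ _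
  have hCC' : C ≤ C' := le_max_left _ _
  have hlog2 : 0 < Real.log 2 := Real.log_pos (by norm_num)
  obtain ⟨n, hn⟩ := exists_nat_gt ((4*C' + 2 + Real.log 2)/Real.log 2)
  have han : 4*C' + 2 + Real.log 2 < a n := by
    have h1 : ((4*C' + 2 + Real.log 2)/Real.log 2) * Real.log 2 < (n:ℝ) * Real.log 2 :=
      mul_lt_mul_of_pos_right hn hlog2
    rw [div_mul_cancel₀ _ (ne_of_gt hlog2)] at h1
    have h2 : (n:ℝ) * Real.log 2 = Real.log (2^n) := by
      rw [Real.log_pow]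
    have h3 : Real.log ((2:ℝ)^n) ≤ Real.log (1 + 2^n) := by
      apply Real.log_le_log (by positivity)
      linarith
    rw [a]
    rw [h2] at h1
    linarith
  by_cases hall : ∀ k, k < 2^n → g (v n k) ≤ C'
  · -- use the deep point z n
    have hgz : g (z n) ≤ C' := by
      have hj := (jensen g C' hg n (v n) (fun k hk => ⟨v_norm_le n k, hall k hk⟩)).2
      rw [z_eq_avg n]
      exact hj
    have hFz : (a n - Real.log 2)/2 ≤ F (z n) := by
      rw [F_z n]
      have : a n - Real.log 2 ≤ max 0 (a n - Real.log 2) := le_max_right _ _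
      linarith
    refine ⟨z n, z_norm_le n, ?_⟩
    have h5 : C < F (z n) - g (z n) := by
      have : 2*C' + 1 ≤ (a n - Real.log 2)/2 := by linarith
      nlinarith
    calc C < F (z n) - g (z n) := h5
      _ ≤ |F (z n) - g (z n)| := le_abs_self _
  · push_neg at hall
    obtain ⟨k, hk, hgk⟩ := hall
    refine ⟨v n k, v_norm_le n k, ?_⟩
    rw [F_v n k hk]
    calc C ≤ C' := hCC'
      _ < g (v n k) := hgk
      _ ≤ |g (v n k)| := le_abs_self _
      _ = |0 - g (v n k)| := by rw [abs_sub_comm]; norm_num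

end S6

/-- There is a `1`-convex function on the closed unit ball of `ℓ∞` that is at infinite
uniform distance from every convex function on the ball. -/
theorem stmt_6 :
    ∃ F : lp (fun _ : ℕ => ℝ) ⊤ → ℝ,
      (∀ x : lp (fun _ : ℕ => ℝ) ⊤, ‖x‖ ≤ 1 → ∀ y : lp (fun _ : ℕ => ℝ) ⊤, ‖y‖ ≤ 1 →
        ∀ t : ℝ, 0 ≤ t → t ≤ 1 →
          F (t • x + (1 - t) • y) ≤ t * F x + (1 - t) * F y + 1) ∧
      (∀ g : lp (fun _ : ℕ => ℝ) ⊤ → ℝ,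
        (∀ x : lp (fun _ : ℕ => ℝ) ⊤, ‖x‖ ≤ 1 → ∀ y : lp (fun _ : ℕ => ℝ) ⊤, ‖y‖ ≤ 1 →
          ∀ t : ℝ, 0 ≤ t → t ≤ 1 →
            g (t • x + (1 - t) • y) ≤ t * g x + (1 - t) * g y) →
        ∀ C : ℝ, ∃ x : lp (fun _ : ℕ => ℝ) ⊤, ‖x‖ ≤ 1 ∧ C < |F x - g x|) := by
  refine ⟨S6.F, ?_, ?_⟩
  · intro x hx y hy t ht ht1
    exact S6.F_one_convex hx hy ht ht1
  · intro g hg C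
    exact S6.main2 g hg C
end
end

section
/- Let D be a convex subset of a real vector space X and let f : D → ℝ. Suppose there exist a convex function g : D → ℝ and a concave function h : D → ℝ with α = sup_{x ∈ D} |f(x) − g(x)| < ∞ and β = sup_{x ∈ D} |f(x) − h(x)| < ∞. Then there exists an affine function a : D → ℝ with sup_{x ∈ D} |f(x) − a(x)| ≤ 2·max{α, β}. -/
/-- A function on a convex set that is uniformly close to a convex function and to a
concave function is uniformly close to an affine function, with distance at most twice
the maximum of the two given distances. -/
theorem stmt_7 {X : Type*} [AddCommGroup X] [Module ℝ X] (D : Set X) (hD : Convex ℝ D)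
    (f g h : X → ℝ)
    (hg : ∀ x ∈ D, ∀ y ∈ D, ∀ t : ℝ, 0 ≤ t → t ≤ 1 →
      g (t • x + (1 - t) • y) ≤ t * g x + (1 - t) * g y)
    (hh : ∀ x ∈ D, ∀ y ∈ D, ∀ t : ℝ, 0 ≤ t → t ≤ 1 →
      t * h x + (1 - t) * h y ≤ h (t • x + (1 - t) • y))
    (α β : ℝ) (hα : ∀ x ∈ D, |f x - g x| ≤ α) (hβ : ∀ x ∈ D, |f x - h x| ≤ β) :
    ∃ a : X → ℝ,
      (∀ x ∈ D, ∀ y ∈ D, ∀ t : ℝ, 0 ≤ t → t ≤ 1 →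
        a (t • x + (1 - t) • y) = t * a x + (1 - t) * a y) ∧
      ∀ x ∈ D, |f x - a x| ≤ 2 * max α β := by
  classical
  rcases D.eq_empty_or_nonempty with rfl | ⟨x₀, hx₀⟩
  · exact ⟨0, fun x hx => absurd hx (Set.notMem_empty x), fun x hx => absurd hx (Set.notMem_empty x)⟩
  set γ : ℝ := α + β with hγ
  set H : X → ℝ := fun x => h x - γ with hH
  -- key pointwise fact: H ≤ g on D
  have hHg : ∀ x ∈ D, H x ≤ g x := by
    intro x hx
    have h1 := abs_le.mp (hα x hx)
    have h2 := abs_le.mp (hβ x hx)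
    simp only [hH, hγ]
    linarith [h1.2, h2.1]
  -- combination lemma from convexity/concavity
  have hcomb : ∀ t₁ t₂ : ℝ, ∀ x₁ x₂ : X, 0 ≤ t₁ → 0 ≤ t₂ → x₁ ∈ D → x₂ ∈ D →
      ∃ x ∈ D, (t₁ + t₂) • x = t₁ • x₁ + t₂ • x₂ ∧
        (t₁ + t₂) * g x ≤ t₁ * g x₁ + t₂ * g x₂ ∧
        t₁ * h x₁ + t₂ * h x₂ ≤ (t₁ + t₂) * h x := by
    intro t₁ t₂ x₁ x₂ ht₁ ht₂ hx₁ hx₂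
    rcases eq_or_lt_of_le (add_nonneg ht₁ ht₂) with hT | hT
    · have e₁ : t₁ = 0 := by linarith
      have e₂ : t₂ = 0 := by linarith
      refine ⟨x₁, hx₁, ?_, ?_, ?_⟩ <;> simp [e₁, e₂]
    · set T := t₁ + t₂ with hTdef
      set s := t₁ / T with hs
      have hs0 : 0 ≤ s := div_nonneg ht₁ hT.le
      have hs1 : s ≤ 1 := by
        rw [hs, div_le_one hT]; simp [hTdef]; linarith
      have hTs : T * s = t₁ := by rw [hs]; exact mul_div_cancel₀ t₁ hT.ne'
      have hTs' : T * (1 - s) = t₂ := by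
        have : T * (1 - s) = T - T * s := by ring
        rw [this, hTs, hTdef]; ring
      refine ⟨s • x₁ + (1 - s) • x₂, hD hx₁ hx₂ hs0 (by linarith) (by ring), ?_, ?_, ?_⟩
      · rw [smul_add, smul_smul, smul_smul, hTs, hTs']
      · have := hg x₁ hx₁ x₂ hx₂ s hs0 hs1
        calc T * g (s • x₁ + (1 - s) • x₂) ≤ T * (s * g x₁ + (1 - s) * g x₂) := by
              exact mul_le_mul_of_nonneg_left this hT.le
          _ = (T * s) * g x₁ + (T * (1 - s)) * g x₂ := by ring
          _ = t₁ * g x₁ + t₂ * g x₂ := by rw [hTs, hTs']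
      · have := hh x₁ hx₁ x₂ hx₂ s hs0 hs1
        calc t₁ * h x₁ + t₂ * h x₂ = (T * s) * h x₁ + (T * (1 - s)) * h x₂ := by rw [hTs, hTs']
          _ = T * (s * h x₁ + (1 - s) * h x₂) := by ring
          _ ≤ T * h (s • x₁ + (1 - s) • x₂) := mul_le_mul_of_nonneg_left this hT.le
  -- the cone
  set S : Set (X × ℝ × ℝ) := {z | ∃ t u : ℝ, ∃ x y : X, 0 ≤ t ∧ 0 ≤ u ∧ x ∈ D ∧ y ∈ D ∧
    z.1 = t • x - u • y ∧ z.2.1 = t - u ∧ t * g x - u * H y ≤ z.2.2} with hS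
  have Ssmul : ∀ c : ℝ, 0 < c → ∀ z ∈ S, c • z ∈ S := by
    rintro c hc z ⟨t, u, x, y, ht, hu, hx, hy, h1, h2, h3⟩
    refine ⟨c * t, c * u, x, y, mul_nonneg hc.le ht, mul_nonneg hc.le hu, hx, hy, ?_, ?_, ?_⟩
    · show c • z.1 = _
      rw [h1, smul_sub, smul_smul, smul_smul]
    · show c * z.2.1 = _
      rw [h2]; ring
    · show c * t * g x - c * u * H y ≤ c * z.2.2
      have : c * t * g x - c * u * H y = c * (t * g x - u * H y) := by ring
      rw [this]
      exact mul_le_mul_of_nonneg_left h3 hc.le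
  have Sadd : ∀ z₁ ∈ S, ∀ z₂ ∈ S, z₁ + z₂ ∈ S := by
    rintro z₁ ⟨t₁, u₁, x₁, y₁, ht₁, hu₁, hx₁, hy₁, e₁, e₂, e₃⟩
      z₂ ⟨t₂, u₂, x₂, y₂, ht₂, hu₂, hx₂, hy₂, f₁, f₂, f₃⟩
    obtain ⟨x, hx, hxe, hxg, -⟩ := hcomb t₁ t₂ x₁ x₂ ht₁ ht₂ hx₁ hx₂
    obtain ⟨y, hy, hye, -, hyh⟩ := hcomb u₁ u₂ y₁ y₂ hu₁ hu₂ hy₁ hy₂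
    refine ⟨t₁ + t₂, u₁ + u₂, x, y, add_nonneg ht₁ ht₂, add_nonneg hu₁ hu₂, hx, hy, ?_, ?_, ?_⟩
    · show z₁.1 + z₂.1 = _
      rw [e₁, f₁, hxe, hye]; abel
    · show z₁.2.1 + z₂.2.1 = _
      rw [e₂, f₂]; ring
    · show (t₁ + t₂) * g x - (u₁ + u₂) * H y ≤ z₁.2.2 + z₂.2.2
      have hexp : (u₁ + u₂) * H y = (u₁ + u₂) * h y - (u₁ + u₂) * γ := by
        simp only [hH]; ring
      have h1 : u₁ * H y₁ = u₁ * h y₁ - u₁ * γ := by simp only [hH]; ring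
      have h2 : u₂ * H y₂ = u₂ * h y₂ - u₂ * γ := by simp only [hH]; ring
      have hd : (u₁ + u₂) * γ = u₁ * γ + u₂ * γ := by ring
      linarith [hxg, hyh]
  have S0 : (0 : X × ℝ × ℝ) ∈ S :=
    ⟨0, 0, x₀, x₀, le_refl 0, le_refl 0, hx₀, hx₀, by simp, by simp, by norm_num⟩
  set e : X × ℝ × ℝ := (0, 0, 1) with he
  have heS : e ∈ S :=
    ⟨0, 0, x₀, x₀, le_refl 0, le_refl 0, hx₀, hx₀, by simp [he], by simp [he], by norm_num [he]⟩
  have hene : e ≠ 0 := by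
    simp [he, Prod.ext_iff]
  -- negation absorption
  have Sneg : ∀ z ∈ S, ∃ c : ℝ, c • e + (-z) ∈ S := by
    rintro z ⟨t, u, x, y, ht, hu, hx, hy, h1, h2, h3⟩
    refine ⟨z.2.2 + (u * g y - t * H x), u, t, y, x, hu, ht, hy, hx, ?_, ?_, ?_⟩
    · show (z.2.2 + (u * g y - t * H x)) • (0:X) + -z.1 = u • y - t • x
      rw [h1]; simp only [smul_zero, zero_add]; abel
    · show (z.2.2 + (u * g y - t * H x)) * 0 + -z.2.1 = u - t
      rw [h2]; ring
    · show u * g y - t * H x ≤ (z.2.2 + (u * g y - t * H x)) * 1 + -z.2.2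
      ring_nf
      simp
  set M : Submodule ℝ (X × ℝ × ℝ) := Submodule.span ℝ S with hM
  obtain ⟨W, hW⟩ := M.exists_isCompl
  -- every element of M can be pushed into S by adding a multiple of e
  have hMS : ∀ m ∈ M, ∃ c : ℝ, c • e + m ∈ S := by
    intro m hm
    induction hm using Submodule.span_induction with
    | mem z hz => exact ⟨0, by simpa using hz⟩
    | zero => exact ⟨0, by simpa using S0⟩
    | add m₁ m₂ hm₁ hm₂ ih₁ ih₂ =>
        obtain ⟨c₁, hc₁⟩ := ih₁
        obtain ⟨c₂, hc₂⟩ := ih₂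
        refine ⟨c₁ + c₂, ?_⟩
        have := Sadd _ hc₁ _ hc₂
        have heq : c₁ • e + m₁ + (c₂ • e + m₂) = (c₁ + c₂) • e + (m₁ + m₂) := by
          rw [add_smul]; abel
        rwa [heq] at this
    | smul a m hm ih =>
        obtain ⟨c, hc⟩ := ih
        rcases lt_trichotomy a 0 with ha | ha | ha
        · -- first get a constant for -m
          obtain ⟨d, hd⟩ := Sneg _ hc
          have hdm : (d - c) • e + (-m) ∈ S := by
            have : d • e + -(c • e + m) = (d - c) • e + (-m) := by
              rw [sub_smul]; abel
            rwa [this] at hd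
          refine ⟨(-a) * (d - c), ?_⟩
          have := Ssmul (-a) (by linarith) _ hdm
          have heq : (-a) • ((d - c) • e + (-m)) = ((-a) * (d - c)) • e + a • m := by
            rw [smul_add, smul_smul, smul_neg, neg_smul, neg_neg]
          rwa [heq] at this
        · exact ⟨0, by simpa [ha] using S0⟩
        · refine ⟨a * c, ?_⟩
          have := Ssmul a ha _ hc
          have heq : a • (c • e + m) = (a * c) • e + a • m := by
            rw [smul_add, smul_smul]
          rwa [heq] at this
  -- the enlarged cone
  set s' : ConvexCone ℝ (X × ℝ × ℝ) :=
    { carrier := {z | ∃ m ∈ S, ∃ w ∈ W, z = m + w}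
      smul_mem' := by
        rintro c hc z ⟨m, hm, w, hw, rfl⟩
        exact ⟨c • m, Ssmul c hc m hm, c • w, W.smul_mem c hw, by rw [smul_add]⟩
      add_mem' := by
        rintro z₁ ⟨m₁, hm₁, w₁, hw₁, rfl⟩ z₂ ⟨m₂, hm₂, w₂, hw₂, rfl⟩
        exact ⟨m₁ + m₂, Sadd _ hm₁ _ hm₂, w₁ + w₂, W.add_mem hw₁ hw₂, by abel⟩ } with hs'
  set F : (X × ℝ × ℝ) →ₗ.[ℝ] ℝ := LinearPMap.mkSpanSingleton e 1 hene with hF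
  have hSs' : ∀ z ∈ S, z ∈ s' := fun z hz => ⟨z, hz, 0, W.zero_mem, by simp⟩
  have nonneg : ∀ z : F.domain, (z : X × ℝ × ℝ) ∈ s' → 0 ≤ F z := by
    rintro ⟨z, hz⟩ hzs
    have hz' : z ∈ Submodule.span ℝ {e} := hz
    obtain ⟨c, rfl⟩ := Submodule.mem_span_singleton.mp hz'
    have hFval : F ⟨c • e, hz⟩ = c := by
      have h1 : F ⟨c • e, hz⟩ = c • (1:ℝ) := LinearPMap.mkSpanSingleton'_apply e 1 _ c hz
      simpa using h1
    rw [hFval]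
    -- show c ≥ 0
    obtain ⟨m, hm, w, hw, hmw0⟩ := hzs
    have hmw : c • e = m + w := hmw0
    have hmM : m ∈ M := Submodule.subset_span hm
    have heM : e ∈ M := Submodule.subset_span heS
    have hwM : w ∈ M := by
      have : w = c • e - m := by rw [hmw]; abel
      rw [this]
      exact M.sub_mem (M.smul_mem c heM) hmM
    have hw0 : w = 0 := by
      have : w ∈ M ⊓ W := ⟨hwM, hw⟩
      rwa [hW.inf_eq_bot, Submodule.mem_bot] at this
    have hceS : c • e ∈ S := by rw [hmw, hw0, add_zero]; exact hm
    obtain ⟨t, u, x, y, ht, hu, hx, hy, e1, e2, e3⟩ := hceS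
    have e1' : (0 : X) = t • x - u • y := by simpa [he] using e1
    have e2' : (0 : ℝ) = t - u := by simpa [he] using e2
    have e3' : t * g x - u * H y ≤ c := by simpa [he] using e3
    have htu : t = u := by linarith
    rcases eq_or_lt_of_le ht with ht0 | ht0
    · rw [← ht0] at e3'
      rw [← htu, ← ht0] at e3'
      simpa using e3'
    · have hxy : x = y := by
        have hts : t • x = u • y := by
          have h0 := e1'.symm
          rwa [sub_eq_zero] at h0
        rw [← htu] at hts
        calc x = t⁻¹ • (t • x) := (inv_smul_smul₀ ht0.ne' x).symm
          _ = t⁻¹ • (t • y) := by rw [hts]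
          _ = y := inv_smul_smul₀ ht0.ne' y
      subst hxy
      have hb := hHg x hx
      have : t * g x - u * H x = t * (g x - H x) := by rw [htu]; ring
      rw [this] at e3'
      have : 0 ≤ t * (g x - H x) := mul_nonneg ht0.le (by linarith)
      linarith
  have dense : ∀ z : X × ℝ × ℝ, ∃ x : F.domain, (x : X × ℝ × ℝ) + z ∈ s' := by
    intro z
    have hzT : z ∈ M ⊔ W := by rw [hW.sup_eq_top]; trivial
    obtain ⟨m, hm, w, hw, hmw⟩ := Submodule.mem_sup.mp hzT
    obtain ⟨c, hc⟩ := hMS m hm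
    refine ⟨⟨c • e, Submodule.smul_mem _ c (Submodule.mem_span_singleton_self e)⟩, ?_⟩
    refine ⟨c • e + m, hc, w, hw, ?_⟩
    rw [← hmw]; abel
  obtain ⟨Φ, hΦF, hΦs⟩ := riesz_extension (s'.toPointedCone ⟨0, S0, 0, W.zero_mem, by simp⟩) F nonneg dense
  have hΦe : Φ e = 1 := by
    have h1 := hΦF ⟨e, Submodule.mem_span_singleton_self e⟩
    rw [h1]
    exact LinearPMap.mkSpanSingleton'_apply_self e 1 _ _
  -- the affine function
  refine ⟨fun x => -(Φ (x, 0, 0) + Φ ((0:X), 1, 0)) + γ/2, ?_, ?_⟩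
  · intro x _ y _ t _ _
    show -(Φ (t • x + (1 - t) • y, 0, 0) + Φ ((0:X), 1, 0)) + γ/2
      = t * (-(Φ (x, 0, 0) + Φ ((0:X), 1, 0)) + γ/2)
        + (1 - t) * (-(Φ (y, 0, 0) + Φ ((0:X), 1, 0)) + γ/2)
    have hdec : ((t • x + (1 - t) • y, (0:ℝ), (0:ℝ)) : X × ℝ × ℝ)
        = t • ((x, 0, 0) : X × ℝ × ℝ) + (1 - t) • ((y, 0, 0) : X × ℝ × ℝ) := by
      simp [Prod.ext_iff]
    rw [hdec, map_add, map_smul, map_smul, smul_eq_mul, smul_eq_mul]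
    ring
  · intro x hx
    show |f x - (-(Φ (x, 0, 0) + Φ ((0:X), 1, 0)) + γ/2)| ≤ 2 * max α β
    -- upper support point
    have hz1 : ((x, 1, g x) : X × ℝ × ℝ) ∈ S := by
      refine ⟨1, 0, x, x, zero_le_one, le_refl 0, hx, hx, by simp, by norm_num, by norm_num⟩
    have hz2 : ((-x, -1, -(H x)) : X × ℝ × ℝ) ∈ S := by
      refine ⟨0, 1, x, x, le_refl 0, zero_le_one, hx, hx, by simp, by norm_num, by norm_num⟩
    have key1 : 0 ≤ Φ (x, 1, g x) := hΦs _ (hSs' _ hz1)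
    have key2 : 0 ≤ Φ (-x, -1, -(H x)) := hΦs _ (hSs' _ hz2)
    have dec1 : ((x, 1, g x) : X × ℝ × ℝ)
        = (x, 0, 0) + ((0:X), 1, 0) + (g x) • e := by
      simp [he, Prod.ext_iff]
    have dec2 : ((-x, -1, -(H x)) : X × ℝ × ℝ)
        = -((x, 0, 0) + ((0:X), 1, 0) + (H x) • e) := by
      simp [he, Prod.ext_iff]
    rw [dec1, map_add, map_add, map_smul, smul_eq_mul, hΦe, mul_one] at key1
    rw [dec2, map_neg, map_add, map_add, map_smul, smul_eq_mul, hΦe, mul_one] at key2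
    have h1 := abs_le.mp (hα x hx)
    have h2 := abs_le.mp (hβ x hx)
    have hm1 : α ≤ max α β := le_max_left α β
    have hm2 : β ≤ max α β := le_max_right α β
    rw [abs_le]
    have hHx : H x = h x - γ := rfl
    constructor
    · -- f x - a x ≥ -(2 * max α β)
      -- a x ≤ g x + γ/2 from key1
      simp only [hγ] at *
      linarith [key1, h1.1, h1.2, h2.1, h2.2, hm1, hm2]
    · simp only [hγ, hHx] at *
      linarith [key2, h1.1, h1.2, h2.1, h2.2, hm1, hm2]
end

section
/- A real Banach space X is a K-space if and only if for every ε ≥ 0 and every ε-affine function f : B_X → ℝ on the closed unit ball B_X there exists an affine function a : B_X → ℝ with sup_{x ∈ B_X} |f(x) − a(x)| < ∞. -/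
noncomputable def extHom {X : Type*} [NormedAddCommGroup X] [NormedSpace ℝ X]
    (φ : X → ℝ) (x : X) : ℝ := 2 * ‖x‖ * φ ((2 * ‖x‖)⁻¹ • x)
lemma extHom_zero {X : Type*} [NormedAddCommGroup X] [NormedSpace ℝ X] (φ : X → ℝ) :
    extHom φ 0 = 0 := by simp [extHom]

lemma norm_half_aux {X : Type*} [NormedAddCommGroup X] [NormedSpace ℝ X]
    {x : X} (hx : x ≠ 0) : ‖(2 * ‖x‖)⁻¹ • x‖ = 1 / 2 := by
  have h : (0:ℝ) < ‖x‖ := norm_pos_iff.mpr hx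
  rw [norm_smul, Real.norm_eq_abs, abs_of_pos (by positivity)]
  field_simp

lemma smul_half_aux {X : Type*} [NormedAddCommGroup X] [NormedSpace ℝ X]
    {x : X} (hx : x ≠ 0) : (2 * ‖x‖) • ((2 * ‖x‖)⁻¹ • x) = x := by
  have h : (0:ℝ) < ‖x‖ := norm_pos_iff.mpr hx
  exact smul_inv_smul₀ (by positivity) x

lemma extHom_neg {X : Type*} [NormedAddCommGroup X] [NormedSpace ℝ X]
    (φ : X → ℝ) (hodd : ∀ x : X, ‖x‖ = 1 / 2 → φ (-x) = -φ x) (x : X) :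
    extHom φ (-x) = -extHom φ x := by
  rcases eq_or_ne x 0 with rfl | hx
  · simp [extHom]
  have e : (2 * ‖(-x : X)‖)⁻¹ • (-x : X) = -((2 * ‖x‖)⁻¹ • x) := by
    rw [norm_neg, smul_neg]
  rw [extHom, extHom, e, norm_neg, hodd _ (norm_half_aux hx)]
  ring

lemma extHom_smul {X : Type*} [NormedAddCommGroup X] [NormedSpace ℝ X]
    (φ : X → ℝ) (hodd : ∀ x : X, ‖x‖ = 1 / 2 → φ (-x) = -φ x) (t : ℝ) (x : X) :
    extHom φ (t • x) = t * extHom φ x := by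
  rcases eq_or_ne x 0 with rfl | hx
  · simp [extHom]
  have hxn : (0:ℝ) < ‖x‖ := norm_pos_iff.mpr hx
  have hpos : ∀ s : ℝ, 0 < s → extHom φ (s • x) = s * extHom φ x := by
    intro s hs
    have e : (2 * ‖s • x‖)⁻¹ • (s • x) = (2 * ‖x‖)⁻¹ • x := by
      rw [norm_smul, Real.norm_eq_abs, abs_of_pos hs, smul_smul]
      congr 1
      field_simp
    rw [extHom, e, norm_smul, Real.norm_eq_abs, abs_of_pos hs, extHom]
    ring
  rcases lt_trichotomy t 0 with ht | rfl | ht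
  · have e : t • x = (-t) • (-x) := by rw [smul_neg, neg_smul, neg_neg]
    rcases eq_or_ne (-x) 0 with h0 | h0
    · exact absurd (neg_eq_zero.mp h0) hx
    have hpos' : extHom φ ((-t) • (-x)) = (-t) * extHom φ (-x) := by
      have hxn' : (0:ℝ) < ‖(-x : X)‖ := norm_pos_iff.mpr h0
      have e2 : (2 * ‖(-t) • (-x)‖)⁻¹ • ((-t) • (-x)) = (2 * ‖(-x : X)‖)⁻¹ • (-x) := by
        rw [norm_smul, Real.norm_eq_abs, abs_of_pos (by linarith), smul_smul]
        congr 1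
        have h1 : t ≠ 0 := ne_of_lt ht
        have h2 : ‖x‖ ≠ 0 := ne_of_gt hxn
        rw [norm_neg]
        field_simp
      rw [extHom, e2, norm_smul, Real.norm_eq_abs, abs_of_pos (by linarith : (0:ℝ) < -t), extHom]
      ring
    rw [e, hpos', extHom_neg φ hodd]
    ring
  · simp [extHom]
  · exact hpos t ht

/-- A real Banach space `X` is a `K`-space if and only if every `ε`-affine function on
its closed unit ball is at finite uniform distance from a true affine function. -/
theorem stmt_8 {X : Type*} [NormedAddCommGroup X] [NormedSpace ℝ X] [CompleteSpace X] :
    (∀ f : X → ℝ,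
        (∀ (t : ℝ) (x : X), f (t • x) = t * f x) →
        (∃ Q : ℝ, 0 ≤ Q ∧ ∀ x y : X, |f (x + y) - f x - f y| ≤ Q * (‖x‖ + ‖y‖)) →
        ∃ (ℓ : X →ₗ[ℝ] ℝ) (M : ℝ), 0 ≤ M ∧ ∀ x : X, |f x - ℓ x| ≤ M * ‖x‖) ↔
    (∀ ε : ℝ, 0 ≤ ε → ∀ f : X → ℝ,
        (∀ x : X, ‖x‖ ≤ 1 → ∀ y : X, ‖y‖ ≤ 1 → ∀ t : ℝ, 0 ≤ t → t ≤ 1 →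
          |f (t • x + (1 - t) • y) - t * f x - (1 - t) * f y| ≤ ε) →
        ∃ a : X → ℝ,
          (∀ x : X, ‖x‖ ≤ 1 → ∀ y : X, ‖y‖ ≤ 1 → ∀ t : ℝ, 0 ≤ t → t ≤ 1 →
            a (t • x + (1 - t) • y) = t * a x + (1 - t) * a y) ∧
          ∃ C : ℝ, ∀ x : X, ‖x‖ ≤ 1 → |f x - a x| ≤ C) := by
  constructor
  · -- K-space ⇒ approximation property
    intro hK ε hε f hf
    set h : X → ℝ := fun x => (f x - f (-x)) / 2 with hdef
    -- A1 : approximate homogeneity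
    have hA1 : ∀ x : X, ‖x‖ ≤ 1 → ∀ t : ℝ, 0 ≤ t → t ≤ 1 →
        |f (t • x) - t * f x - (1 - t) * f 0| ≤ ε := by
      intro x hx t ht0 ht1
      have := hf x hx 0 (by simp) t ht0 ht1
      simpa using this
    -- A3 : approximate midpoint property
    have hA3 : ∀ x : X, ‖x‖ ≤ 1 → ∀ y : X, ‖y‖ ≤ 1 →
        |f ((1/2 : ℝ) • (x + y)) - (1/2) * f x - (1/2) * f y| ≤ ε := by
      intro x hx y hy
      have h0 := hf x hx y hy (1/2) (by norm_num) (by norm_num)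
      have e : (1/2 : ℝ) • x + (1 - 1/2 : ℝ) • y = (1/2 : ℝ) • (x + y) := by
        rw [smul_add]; norm_num
      rw [e] at h0
      have : (1 - 1/2 : ℝ) = 1/2 := by norm_num
      rw [this] at h0
      exact h0
    -- A2
    have hA2 : ∀ x : X, ‖x‖ ≤ 1 → |f 0 - (1/2) * f x - (1/2) * f (-x)| ≤ ε := by
      intro x hx
      have h0 := hf x hx (-x) (by simpa using hx) (1/2) (by norm_num) (by norm_num)
      have e : (1/2 : ℝ) • x + (1 - 1/2 : ℝ) • (-x) = 0 := by
        rw [smul_neg]; norm_num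
      rw [e] at h0
      have : (1 - 1/2 : ℝ) = 1/2 := by norm_num
      rw [this] at h0
      exact h0
    have hodd : ∀ x : X, h (-x) = -h x := by
      intro x; simp only [hdef, neg_neg]; ring
    have hzero : h 0 = 0 := by simp [hdef]
    -- approximate homogeneity of h
    have hh1 : ∀ x : X, ‖x‖ ≤ 1 → ∀ t : ℝ, 0 ≤ t → t ≤ 1 →
        |h (t • x) - t * h x| ≤ ε := by
      intro x hx t ht0 ht1
      have e1 := abs_le.mp (hA1 x hx t ht0 ht1)
      have h2 := hA1 (-x) (by simpa using hx) t ht0 ht1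
      rw [smul_neg] at h2
      have e2 := abs_le.mp h2
      simp only [hdef]
      rw [abs_le]
      constructor <;> [linarith; linarith]
    -- approximate additivity of h on the small ball
    have hh4 : ∀ x y : X, ‖x‖ ≤ 1/2 → ‖y‖ ≤ 1/2 →
        |h (x + y) - h x - h y| ≤ 4 * ε := by
      intro x y hx hy
      have hxy : ‖x + y‖ ≤ 1 := by
        have := norm_add_le x y; linarith
      have hxy' : ‖-(x + y)‖ ≤ 1 := by rw [norm_neg]; exact hxy
      have e1 := abs_le.mp (hA1 (x + y) hxy (1/2) (by norm_num) (by norm_num))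
      have e2 := abs_le.mp (hA3 x (by linarith) y (by linarith))
      have h3 := hA1 (-(x + y)) hxy' (1/2) (by norm_num) (by norm_num)
      have h4 := hA3 (-x) (by rw [norm_neg]; linarith) (-y) (by rw [norm_neg]; linarith)
      rw [show (-x : X) + -y = -(x + y) by abel] at h4
      have e3 := abs_le.mp h3
      have e4 := abs_le.mp h4
      simp only [hdef, neg_neg]
      rw [abs_le]
      constructor <;> [linarith; linarith]
    have hodd' : ∀ x : X, ‖x‖ = 1/2 → h (-x) = -h x := fun x _ => hodd x
    -- F = homogeneous extension of h
    set F : X → ℝ := extHom h with hF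
    have Fsmul : ∀ (t : ℝ) (x : X), F (t • x) = t * F x := fun t x => extHom_smul h hodd' t x
    -- F is close to h on the small ball
    have F2 : ∀ x : X, ‖x‖ ≤ 1/2 → |F x - h x| ≤ ε := by
      intro x hx
      rcases eq_or_ne x 0 with rfl | hx0
      · simp only [hF, extHom_zero, hzero]; simpa using hε
      have hxn : (0:ℝ) < ‖x‖ := norm_pos_iff.mpr hx0
      have hw : ‖(2 * ‖x‖)⁻¹ • x‖ = 1/2 := norm_half_aux hx0
      have h1 := hh1 ((2 * ‖x‖)⁻¹ • x) (by rw [hw]; norm_num) (2 * ‖x‖)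
        (by positivity) (by linarith)
      rw [smul_half_aux hx0] at h1
      have : F x = 2 * ‖x‖ * h ((2 * ‖x‖)⁻¹ • x) := rfl
      rw [this, abs_sub_comm]
      exact h1
    -- quasi-additivity of F
    have F3 : ∀ u v : X, ‖u‖ ≤ 1/4 → ‖v‖ ≤ 1/4 → |F (u + v) - F u - F v| ≤ 7 * ε := by
      intro u v hu hv
      have e1 := abs_le.mp (F2 u (by linarith))
      have e2 := abs_le.mp (F2 v (by linarith))
      have huv : ‖u + v‖ ≤ 1/2 := by have := norm_add_le u v; linarith
      have e3 := abs_le.mp (F2 (u + v) huv)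
      have e4 := abs_le.mp (hh4 u v (by linarith) (by linarith))
      rw [abs_le]
      constructor <;> [linarith; linarith]
    have F4 : ∀ x y : X, |F (x + y) - F x - F y| ≤ (28 * ε) * (‖x‖ + ‖y‖) := by
      intro x y
      rcases eq_or_ne (‖x‖ + ‖y‖) 0 with h0 | h0
      · have hx0 : x = 0 := by
          have := norm_nonneg x; have := norm_nonneg y
          have : ‖x‖ = 0 := by linarith
          exact norm_eq_zero.mp this
        have hy0 : y = 0 := by
          have := norm_nonneg x; have := norm_nonneg y
          have : ‖y‖ = 0 := by linarith
          exact norm_eq_zero.mp this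
        subst hx0; subst hy0
        simp only [add_zero, hF, extHom_zero]
        simp
      have hrpos : (0:ℝ) < 4 * (‖x‖ + ‖y‖) := by
        have h1 : (0:ℝ) ≤ ‖x‖ + ‖y‖ := by positivity
        have h2 : (0:ℝ) < ‖x‖ + ‖y‖ := lt_of_le_of_ne h1 (Ne.symm h0)
        linarith
      set r : ℝ := 4 * (‖x‖ + ‖y‖) with hr
      have hnorm : ∀ z : X, ‖z‖ ≤ r / 4 → ‖r⁻¹ • z‖ ≤ 1/4 := by
        intro z hz
        rw [norm_smul, Real.norm_eq_abs, abs_of_pos (inv_pos.mpr hrpos)]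
        calc r⁻¹ * ‖z‖ ≤ r⁻¹ * (r / 4) := by
              apply mul_le_mul_of_nonneg_left hz (le_of_lt (inv_pos.mpr hrpos))
          _ = 1/4 := by field_simp
      have hu : ‖r⁻¹ • x‖ ≤ 1/4 := hnorm x (by rw [hr]; nlinarith [norm_nonneg y])
      have hv : ‖r⁻¹ • y‖ ≤ 1/4 := hnorm y (by rw [hr]; nlinarith [norm_nonneg x])
      have key := F3 (r⁻¹ • x) (r⁻¹ • y) hu hv
      have ex : F x = r * F (r⁻¹ • x) := by rw [← Fsmul, smul_inv_smul₀ (ne_of_gt hrpos)]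
      have ey : F y = r * F (r⁻¹ • y) := by rw [← Fsmul, smul_inv_smul₀ (ne_of_gt hrpos)]
      have exy : F (x + y) = r * F (r⁻¹ • x + r⁻¹ • y) := by
        rw [← Fsmul, smul_add, smul_inv_smul₀ (ne_of_gt hrpos), smul_inv_smul₀ (ne_of_gt hrpos)]
      rw [ex, ey, exy,
        show r * F (r⁻¹ • x + r⁻¹ • y) - r * F (r⁻¹ • x) - r * F (r⁻¹ • y)
          = r * (F (r⁻¹ • x + r⁻¹ • y) - F (r⁻¹ • x) - F (r⁻¹ • y)) by ring,
        abs_mul, abs_of_pos hrpos]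
      calc r * |F (r⁻¹ • x + r⁻¹ • y) - F (r⁻¹ • x) - F (r⁻¹ • y)| ≤ r * (7 * ε) :=
             mul_le_mul_of_nonneg_left key (le_of_lt hrpos)
        _ = (28 * ε) * (‖x‖ + ‖y‖) := by rw [hr]; ring
    obtain ⟨ℓ, M, hM0, hMb⟩ := hK F Fsmul ⟨28 * ε, by positivity, F4⟩
    refine ⟨fun x => ℓ x + f 0, ?_, M + 5 * ε, ?_⟩
    · intro x _ y _ t _ _
      simp only [map_add, map_smul, smul_eq_mul]
      ring
    · intro x hx
      have e1 := abs_le.mp (hA2 x hx)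
      have e2 := abs_le.mp (hh1 x hx (1/2) (by norm_num) (by norm_num))
      have hhalf : ‖(1/2 : ℝ) • x‖ ≤ 1/2 := by
        rw [norm_smul, Real.norm_eq_abs, abs_of_pos (by norm_num : (0:ℝ) < 1/2)]
        linarith
      have e3 := abs_le.mp (F2 ((1/2 : ℝ) • x) hhalf)
      have e4 : F ((1/2 : ℝ) • x) = (1/2) * F x := Fsmul (1/2) x
      have e5 := abs_le.mp (hMb x)
      have e6 : M * ‖x‖ ≤ M := by nlinarith [norm_nonneg x]
      have e7 : (0:ℝ) ≤ M * ‖x‖ := by positivity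
      have hxeq : h x = (f x - f (-x)) / 2 := rfl
      show |f x - (ℓ x + f 0)| ≤ M + 5 * ε
      rw [abs_le]
      constructor <;> [linarith; linarith]
  · -- approximation property ⇒ K-space
    intro hA f hhom hQex
    obtain ⟨Q, hQ0, hQ⟩ := hQex
    have hf0 : f 0 = 0 := by
      have := hhom 0 0
      simpa using this
    have haff : ∀ x : X, ‖x‖ ≤ 1 → ∀ y : X, ‖y‖ ≤ 1 → ∀ t : ℝ, 0 ≤ t → t ≤ 1 →
        |f (t • x + (1 - t) • y) - t * f x - (1 - t) * f y| ≤ Q := by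
      intro x hx y hy t ht0 ht1
      have h1 := hQ (t • x) ((1 - t) • y)
      rw [hhom t x, hhom (1 - t) y] at h1
      have hn : ‖t • x‖ + ‖(1 - t) • y‖ ≤ 1 := by
        rw [norm_smul, norm_smul, Real.norm_eq_abs, Real.norm_eq_abs,
          abs_of_nonneg ht0, abs_of_nonneg (by linarith : (0:ℝ) ≤ 1 - t)]
        nlinarith [norm_nonneg x, norm_nonneg y]
      calc |f (t • x + (1 - t) • y) - t * f x - (1 - t) * f y|
          ≤ Q * (‖t • x‖ + ‖(1 - t) • y‖) := h1
        _ ≤ Q * 1 := mul_le_mul_of_nonneg_left hn hQ0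
        _ = Q := mul_one Q
    obtain ⟨a, ha, C, hC⟩ := hA Q hQ0 f haff
    have hC0 : (0:ℝ) ≤ C := le_trans (abs_nonneg _) (hC 0 (by simp))
    set b : X → ℝ := fun x => a x - a 0 with hb
    have bhom : ∀ x : X, ‖x‖ ≤ 1 → ∀ t : ℝ, 0 ≤ t → t ≤ 1 → b (t • x) = t * b x := by
      intro x hx t ht0 ht1
      have h1 := ha x hx 0 (by simp) t ht0 ht1
      rw [show t • x + (1 - t) • (0:X) = t • x by simp] at h1
      simp only [hb]
      rw [h1]; ring
    have bodd : ∀ x : X, ‖x‖ ≤ 1 → b (-x) = -b x := by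
      intro x hx
      have h1 := ha x hx (-x) (by rw [norm_neg]; exact hx) (1/2) (by norm_num) (by norm_num)
      rw [show (1/2 : ℝ) • x + (1 - 1/2 : ℝ) • (-x) = 0 by rw [smul_neg]; norm_num] at h1
      rw [show (1 - 1/2 : ℝ) = 1/2 by norm_num] at h1
      simp only [hb]
      linarith
    have b0 : b 0 = 0 := by simp [hb]
    have badd : ∀ x y : X, ‖x‖ ≤ 1/2 → ‖y‖ ≤ 1/2 → b (x + y) = b x + b y := by
      intro x y hx hy
      have h1 := ha x (by linarith) y (by linarith) (1/2) (by norm_num) (by norm_num)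
      rw [show (1/2 : ℝ) • x + (1 - 1/2 : ℝ) • y = (1/2 : ℝ) • (x + y) by
        rw [smul_add]; norm_num] at h1
      rw [show (1 - 1/2 : ℝ) = 1/2 by norm_num] at h1
      have hxy : ‖x + y‖ ≤ 1 := by have := norm_add_le x y; linarith
      have h2 := bhom (x + y) hxy (1/2) (by norm_num) (by norm_num)
      simp only [hb] at h2 ⊢
      rw [h1] at h2
      linarith
    have boddhalf : ∀ x : X, ‖x‖ = 1/2 → b (-x) = -b x := by
      intro x hx; exact bodd x (by rw [hx]; norm_num)
    set L : X → ℝ := extHom b with hL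
    have Lsmul : ∀ (t : ℝ) (x : X), L (t • x) = t * L x := fun t x => extHom_smul b boddhalf t x
    have Leq : ∀ x : X, ‖x‖ ≤ 1/2 → L x = b x := by
      intro x hx
      rcases eq_or_ne x 0 with rfl | hx0
      · rw [hL, extHom_zero, b0]
      have hxn : (0:ℝ) < ‖x‖ := norm_pos_iff.mpr hx0
      have hw : ‖(2 * ‖x‖)⁻¹ • x‖ = 1/2 := norm_half_aux hx0
      have h1 := bhom ((2 * ‖x‖)⁻¹ • x) (by rw [hw]; norm_num) (2 * ‖x‖)
        (by positivity) (by linarith)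
      rw [smul_half_aux hx0] at h1
      have e : L x = 2 * ‖x‖ * b ((2 * ‖x‖)⁻¹ • x) := rfl
      rw [e, ← h1]
    have Ladd : ∀ x y : X, L (x + y) = L x + L y := by
      intro x y
      rcases eq_or_ne (‖x‖ + ‖y‖) 0 with h0 | h0
      · have hx0 : x = 0 := by
          have := norm_nonneg x; have := norm_nonneg y
          have : ‖x‖ = 0 := by linarith
          exact norm_eq_zero.mp this
        have hy0 : y = 0 := by
          have := norm_nonneg x; have := norm_nonneg y
          have : ‖y‖ = 0 := by linarith
          exact norm_eq_zero.mp this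
        subst hx0; subst hy0
        simp [hL, extHom_zero]
      have hrpos : (0:ℝ) < 4 * (‖x‖ + ‖y‖) := by
        have h1 : (0:ℝ) ≤ ‖x‖ + ‖y‖ := by positivity
        have h2 : (0:ℝ) < ‖x‖ + ‖y‖ := lt_of_le_of_ne h1 (Ne.symm h0)
        linarith
      set r : ℝ := 4 * (‖x‖ + ‖y‖) with hr
      have hnorm : ∀ z : X, ‖z‖ ≤ r / 4 → ‖r⁻¹ • z‖ ≤ 1/4 := by
        intro z hz
        rw [norm_smul, Real.norm_eq_abs, abs_of_pos (inv_pos.mpr hrpos)]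
        calc r⁻¹ * ‖z‖ ≤ r⁻¹ * (r / 4) := by
              apply mul_le_mul_of_nonneg_left hz (le_of_lt (inv_pos.mpr hrpos))
          _ = 1/4 := by field_simp
      have hu : ‖r⁻¹ • x‖ ≤ 1/4 := hnorm x (by rw [hr]; nlinarith [norm_nonneg y])
      have hv : ‖r⁻¹ • y‖ ≤ 1/4 := hnorm y (by rw [hr]; nlinarith [norm_nonneg x])
      have huv : ‖r⁻¹ • x + r⁻¹ • y‖ ≤ 1/2 := by
        have := norm_add_le (r⁻¹ • x) (r⁻¹ • y); linarith
      have ex : L x = r * L (r⁻¹ • x) := by rw [← Lsmul, smul_inv_smul₀ (ne_of_gt hrpos)]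
      have ey : L y = r * L (r⁻¹ • y) := by rw [← Lsmul, smul_inv_smul₀ (ne_of_gt hrpos)]
      have exy : L (x + y) = r * L (r⁻¹ • x + r⁻¹ • y) := by
        rw [← Lsmul, smul_add, smul_inv_smul₀ (ne_of_gt hrpos), smul_inv_smul₀ (ne_of_gt hrpos)]
      rw [ex, ey, exy, Leq (r⁻¹ • x + r⁻¹ • y) huv, Leq (r⁻¹ • x) (le_trans hu (by norm_num)),
        Leq (r⁻¹ • y) (le_trans hv (by norm_num)),
        badd _ _ (le_trans hu (by norm_num)) (le_trans hv (by norm_num))]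
      ring
    refine ⟨{ toFun := L, map_add' := Ladd, map_smul' := fun t x => Lsmul t x }, 4 * C,
      by linarith, ?_⟩
    intro x
    rcases eq_or_ne x 0 with rfl | hx0
    · simp only [hf0, LinearMap.coe_mk, AddHom.coe_mk]
      rw [hL, extHom_zero]
      simp
    have hxn : (0:ℝ) < ‖x‖ := norm_pos_iff.mpr hx0
    have hw : ‖(2 * ‖x‖)⁻¹ • x‖ = 1/2 := norm_half_aux hx0
    have ef : f x = 2 * ‖x‖ * f ((2 * ‖x‖)⁻¹ • x) := by
      conv_lhs => rw [← smul_half_aux hx0]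
      rw [hhom]
    have el : L x = 2 * ‖x‖ * b ((2 * ‖x‖)⁻¹ • x) := rfl
    have hfw := abs_le.mp (hC ((2 * ‖x‖)⁻¹ • x) (by rw [hw]; norm_num))
    have hf0' := abs_le.mp (hC 0 (by simp))
    have hkey : |f ((2 * ‖x‖)⁻¹ • x) - b ((2 * ‖x‖)⁻¹ • x)| ≤ 2 * C := by
      simp only [hb]
      rw [abs_le]
      constructor <;> [linarith; linarith]
    show |f x - L x| ≤ 4 * C * ‖x‖
    rw [ef, el,
      show 2 * ‖x‖ * f ((2 * ‖x‖)⁻¹ • x) - 2 * ‖x‖ * b ((2 * ‖x‖)⁻¹ • x)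
        = (2 * ‖x‖) * (f ((2 * ‖x‖)⁻¹ • x) - b ((2 * ‖x‖)⁻¹ • x)) by ring,
      abs_mul, abs_of_pos (by positivity)]
    calc 2 * ‖x‖ * |f ((2 * ‖x‖)⁻¹ • x) - b ((2 * ‖x‖)⁻¹ • x)| ≤ 2 * ‖x‖ * (2 * C) :=
           mul_le_mul_of_nonneg_left hkey (by positivity)
      _ = 4 * C * ‖x‖ := by ring
end
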